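/- arXiv:1604.02696 — 11 statements merged into one kernel-verified Lean document; each statement's English description precedes it below -/
import Mathlib

section
/- At least one of the following two alternatives holds: (1) for every R > 0, −R^{−2}·(m−2)·∫₀^{c₀} s·A(s) ds ≤ H(R) ≤ 0; or (2) there exists R₀ ≥ c₀ with H(R₀) > 0 such that for every R > R₀, H(R) ≥ R^{2−2m}·e^{R²/2}·R₀^{2m−2}·e^{−R₀²/2}·H(R₀) > 0. -/
open MeasureTheory Filter Set intervalIntegral Topology

lemma my_intble {A : ℝ → ℝ} (hA : ContinuousOn A (Set.Ici 0)) {a b : ℝ}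
    (ha : 0 ≤ a) (hb : 0 ≤ b) : IntervalIntegrable A volume a b := by
  apply (hA.mono ?_).intervalIntegrable
  intro x hx
  rw [Set.mem_uIcc] at hx
  rcases hx with h | h
  · exact le_trans ha h.1
  · exact le_trans hb h.1

lemma my_ident (m : ℕ) (A B : ℝ → ℝ)
    (hA : ContinuousOn A (Set.Ici 0)) (hB : ContinuousOn B (Set.Ici 0))
    (hH : ∀ r > (0:ℝ), HasDerivAt (fun s => A s - B s)
      (2 / r * B r + (r / 2 - (m : ℝ) / r) * A r) r)
    (R : ℝ) (hR : 0 ≤ R) :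
    R^2 * (A R - B R) = ∫ s in (0:ℝ)..R, s * (s^2/2 - ((m:ℝ)-2)) * A s := by
  set g : ℝ → ℝ := fun s => s * (s^2/2 - ((m:ℝ)-2)) * A s with hg
  have hgc : ContinuousOn g (Set.Ici 0) := by
    apply ContinuousOn.mul _ hA
    exact (by fun_prop : Continuous fun s : ℝ => s * (s^2/2 - ((m:ℝ)-2))).continuousOn
  set ψ : ℝ → ℝ := fun r => r^2 * (A r - B r) - ∫ s in (0:ℝ)..r, g s with hψ
  rcases eq_or_lt_of_le hR with h|hRpos
  · simp [← h]
  have hderiv : ∀ r > (0:ℝ), HasDerivAt ψ 0 r := by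
    intro r hr
    have h1 : HasDerivAt (fun s => s^2 * (A s - B s))
        (2 * r ^ 1 * (A r - B r) + r^2 * (2 / r * B r + (r / 2 - (m : ℝ) / r) * A r)) r := by
      simpa using (hasDerivAt_pow 2 r).fun_mul (hH r hr)
    have h2 : HasDerivAt (fun u => ∫ s in (0:ℝ)..u, g s) (g r) r := by
      apply intervalIntegral.integral_hasDerivAt_right (my_intble hgc le_rfl hr.le)
      · exact (ContinuousOn.stronglyMeasurableAtFilter isOpen_Ioi
          (hgc.mono Set.Ioi_subset_Ici_self) r hr)
      · exact (hgc.continuousAt (Ici_mem_nhds hr))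
    have : HasDerivAt ψ (2 * r ^ 1 * (A r - B r) + r ^ 2 * (2 / r * B r + (r / 2 - (m : ℝ) / r) * A r) - g r) r := h1.sub h2
    convert this using 1
    simp only [hg]
    field_simp
    ring
  have hconst : ∀ ε ∈ Set.Ioc (0:ℝ) R, ψ R = ψ ε := by
    intro ε hε
    have := constant_of_has_deriv_right_zero (f := ψ) (a := ε) (b := R)
      (fun x hx => ((hderiv x (lt_of_lt_of_le hε.1 hx.1)).continuousAt).continuousWithinAt)
      (fun x hx => ((hderiv x (lt_of_lt_of_le hε.1 hx.1)).hasDerivWithinAt))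
    exact this R ⟨hε.2, le_rfl⟩
  have hψc : ContinuousWithinAt ψ (Set.Icc 0 R) 0 := by
    apply ContinuousWithinAt.sub
    · exact (((continuous_pow 2).continuousOn.mul (hA.sub hB)).mono
        (Set.Icc_subset_Ici_self)) 0 ⟨le_rfl, hR⟩
    · have hcp := intervalIntegral.continuousOn_primitive_interval'
        (f := g) (μ := volume) (b₁ := (0:ℝ)) (b₂ := R) (a := 0)
        (my_intble hgc le_rfl hR) Set.left_mem_uIcc
      have huIcc : Set.uIcc (0:ℝ) R = Set.Icc 0 R := Set.uIcc_of_le hR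
      rw [huIcc] at hcp
      exact hcp 0 ⟨le_rfl, hR⟩
  have hne : (𝓝[Set.Ioc (0:ℝ) R] (0:ℝ)).NeBot := by
    rw [← mem_closure_iff_nhdsWithin_neBot, closure_Ioc (ne_of_lt hRpos)]
    exact ⟨le_rfl, hR⟩
  have h1 : Tendsto ψ (𝓝[Set.Ioc (0:ℝ) R] 0) (𝓝 (ψ 0)) :=
    hψc.tendsto.mono_left (nhdsWithin_mono _ Set.Ioc_subset_Icc_self)
  have h2 : Tendsto ψ (𝓝[Set.Ioc (0:ℝ) R] 0) (𝓝 (ψ R)) := by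
    apply Tendsto.congr' _ tendsto_const_nhds
    filter_upwards [self_mem_nhdsWithin] with x hx
    exact hconst x hx
  have h0 : ψ 0 = 0 := by simp [hψ]
  have : ψ R = 0 := by rw [← tendsto_nhds_unique h1 h2, h0]
  have := sub_eq_zero.mp this
  linarith [this]

theorem stmt_2 (m : ℕ) (hm : 3 ≤ m) (A B : ℝ → ℝ)
    (hA : ContinuousOn A (Set.Ici 0)) (hB : ContinuousOn B (Set.Ici 0))
    (hA0 : ∀ r ≥ (0:ℝ), 0 ≤ A r) (hAB : ∀ r ≥ (0:ℝ), A r ≤ 2 * B r)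
    (hH : ∀ r > (0:ℝ), HasDerivAt (fun s => A s - B s)
      (2 / r * B r + (r / 2 - (m : ℝ) / r) * A r) r) :
    (∀ R > (0:ℝ),
      (-(R^(-2:ℤ)) * ((m:ℝ) - 2) * ∫ s in (0:ℝ)..(Real.sqrt (2 * ((m:ℝ) - 2))), s * A s) ≤ A R - B R ∧
        A R - B R ≤ 0) ∨
    (∃ R₀ : ℝ, Real.sqrt (2 * ((m:ℝ) - 2)) ≤ R₀ ∧ 0 < A R₀ - B R₀ ∧
      ∀ R > R₀,
        R ^ ((2:ℤ) - 2 * m) * Real.exp (R^2 / 2) * R₀ ^ (2 * m - 2) *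
          Real.exp (-R₀^2 / 2) * (A R₀ - B R₀) ≤ A R - B R) := by
  have hm3 : (3:ℝ) ≤ (m:ℝ) := by exact_mod_cast hm
  set c : ℝ := Real.sqrt (2 * ((m:ℝ) - 2)) with hc
  have hc2 : c^2 = 2 * ((m:ℝ) - 2) := Real.sq_sqrt (by linarith)
  have hcpos : 0 < c := Real.sqrt_pos.mpr (by linarith)
  set g : ℝ → ℝ := fun s => s * (s^2/2 - ((m:ℝ)-2)) * A s with hg
  have hgc : ContinuousOn g (Set.Ici 0) := by
    apply ContinuousOn.mul _ hA
    exact (by fun_prop : Continuous fun s : ℝ => s * (s^2/2 - ((m:ℝ)-2))).continuousOn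
  have hsAc : ContinuousOn (fun s : ℝ => s * A s) (Set.Ici 0) :=
    continuous_id.continuousOn.mul hA
  by_cases hcase : ∀ r ≥ c, A r - B r ≤ 0
  · left
    intro R hR
    have hid := my_ident m A B hA hB hH R hR.le
    have hupper : A R - B R ≤ 0 := by
      rcases le_or_gt c R with h | h
      · exact hcase R h
      · have hint : (0:ℝ) ≤ ∫ s in (0:ℝ)..R, -(g s) := by
          apply intervalIntegral.integral_nonneg hR.le
          intro u hu
          have hu2 : u^2 ≤ c^2 := pow_le_pow_left₀ hu.1 (le_of_lt (lt_of_le_of_lt hu.2 h)) 2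
          have h1 : u^2/2 - ((m:ℝ)-2) ≤ 0 := by rw [hc2] at hu2; linarith
          have h2 : u * (u^2/2 - ((m:ℝ)-2)) ≤ 0 := mul_nonpos_of_nonneg_of_nonpos hu.1 h1
          have h3 : g u ≤ 0 := mul_nonpos_of_nonpos_of_nonneg h2 (hA0 u hu.1)
          linarith
        rw [intervalIntegral.integral_neg] at hint
        by_contra hh
        push_neg at hh
        have := mul_pos (pow_pos hR 2) hh
        linarith
    refine ⟨?_, hupper⟩
    have hpt : ∀ u ∈ Set.Icc (0:ℝ) c, -((m:ℝ)-2) * (u * A u) ≤ g u := by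
      intro u hu
      have h0 : 0 ≤ u * (u^2/2) * A u :=
        mul_nonneg (mul_nonneg hu.1 (by positivity)) (hA0 u hu.1)
      have heq : g u = u*(u^2/2)*A u + (-((m:ℝ)-2)) * (u * A u) := by simp only [hg]; ring
      rw [heq]; linarith
    have key : -((m:ℝ)-2) * (∫ s in (0:ℝ)..c, s * A s) ≤ R^2 * (A R - B R) := by
      rw [hid]
      rcases le_total R c with hRc | hcR
      · -- R ≤ c
        have hpt' : ∀ u ∈ Set.Icc (0:ℝ) R, -((m:ℝ)-2) * (u * A u) ≤ g u := fun u hu =>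
          hpt u ⟨hu.1, le_trans hu.2 hRc⟩
        have hmono := intervalIntegral.integral_mono_on (μ := volume) (a := (0:ℝ)) (b := R)
          (f := fun u => -((m:ℝ)-2) * (u * A u)) (g := g) hR.le
          ((my_intble hsAc le_rfl hR.le).const_mul _) (my_intble hgc le_rfl hR.le) hpt'
        have hsplit : (∫ s in (0:ℝ)..R, s * A s) + (∫ s in R..c, s * A s)
            = ∫ s in (0:ℝ)..c, s * A s :=
          intervalIntegral.integral_add_adjacent_intervals
            (my_intble hsAc le_rfl hR.le) (my_intble hsAc hR.le hcpos.le)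
        have htail : (0:ℝ) ≤ ∫ s in R..c, s * A s := by
          apply intervalIntegral.integral_nonneg hRc
          intro u hu
          exact mul_nonneg (le_trans hR.le hu.1) (hA0 u (le_trans hR.le hu.1))
        have h1 : (∫ s in (0:ℝ)..R, s * A s) ≤ ∫ s in (0:ℝ)..c, s * A s := by linarith
        have h2 : -((m:ℝ)-2) * (∫ s in (0:ℝ)..c, s * A s)
            ≤ -((m:ℝ)-2) * (∫ s in (0:ℝ)..R, s * A s) :=
          mul_le_mul_of_nonpos_left h1 (by linarith)
        have h3 : -((m:ℝ)-2) * (∫ s in (0:ℝ)..R, s * A s)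
            = ∫ s in (0:ℝ)..R, -((m:ℝ)-2) * (s * A s) :=
          (intervalIntegral.integral_const_mul _ _).symm
        linarith [h2, h3 ▸ hmono, hmono, h3.symm ▸ hmono]
      · -- c ≤ R
        have hsplit : (∫ s in (0:ℝ)..c, g s) + (∫ s in c..R, g s) = ∫ s in (0:ℝ)..R, g s :=
          intervalIntegral.integral_add_adjacent_intervals
            (my_intble hgc le_rfl hcpos.le) (my_intble hgc hcpos.le hR.le)
        have htail : (0:ℝ) ≤ ∫ s in c..R, g s := by
          apply intervalIntegral.integral_nonneg hcR
          intro u hu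
          have hu0 : 0 ≤ u := le_trans hcpos.le hu.1
          have hu2 : c^2 ≤ u^2 := pow_le_pow_left₀ hcpos.le hu.1 2
          have h1 : 0 ≤ u^2/2 - ((m:ℝ)-2) := by rw [hc2] at hu2; linarith
          exact mul_nonneg (mul_nonneg hu0 h1) (hA0 u hu0)
        have hmono := intervalIntegral.integral_mono_on (μ := volume) (a := (0:ℝ)) (b := c)
          (f := fun u => -((m:ℝ)-2) * (u * A u)) (g := g) hcpos.le
          ((my_intble hsAc le_rfl hcpos.le).const_mul _) (my_intble hgc le_rfl hcpos.le) hpt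
        have h3 : -((m:ℝ)-2) * (∫ s in (0:ℝ)..c, s * A s)
            = ∫ s in (0:ℝ)..c, -((m:ℝ)-2) * (s * A s) :=
          (intervalIntegral.integral_const_mul _ _).symm
        linarith [h3 ▸ hmono]
    -- conclude
    have hR2 : (0:ℝ) < R^2 := pow_pos hR 2
    have hz : R^(-2:ℤ) = (R^2)⁻¹ := by
      rw [show (-2:ℤ) = -((2:ℕ):ℤ) by norm_num, zpow_neg, zpow_natCast]
    rw [hz]
    have h2 := mul_le_mul_of_nonneg_left key (inv_nonneg.mpr hR2.le)
    rw [inv_mul_cancel_left₀ (ne_of_gt hR2)] at h2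
    calc -(R^2)⁻¹ * ((m:ℝ) - 2) * ∫ s in (0:ℝ)..c, s * A s
        = (R^2)⁻¹ * (-((m:ℝ)-2) * ∫ s in (0:ℝ)..c, s * A s) := by ring
      _ ≤ A R - B R := h2
  · right
    push_neg at hcase
    obtain ⟨R₀, hR₀c, hR₀⟩ := hcase
    refine ⟨R₀, hR₀c, hR₀, ?_⟩
    intro R hRR
    set k : ℕ := 2*m - 3 with hkdef
    have hk1 : 2*m - 2 = k + 1 := by omega
    have hkc : ((k:ℕ):ℝ) = 2*(m:ℝ) - 3 := by
      have h3 : (3:ℕ) ≤ 2*m := by omega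
      rw [hkdef]
      push_cast [Nat.cast_sub h3]
      ring
    set F : ℝ → ℝ := fun r => r ^ (2*m-2) * Real.exp (-r^2/2) * (A r - B r) with hF
    have key : ∀ x ∈ interior (Set.Ici c), ∃ d, HasDerivAt F d x ∧ 0 ≤ d := by
      rw [interior_Ici]
      intro x hx
      have hxc : c < x := hx
      have hx0 : 0 < x := lt_trans hcpos hxc
      have p1 : HasDerivAt (fun s : ℝ => s^(2*m-2)) (((2*m-2:ℕ):ℝ) * x^(2*m-3)) x := by
        simpa [show 2*m-2-1 = 2*m-3 by omega] using hasDerivAt_pow (2*m-2) x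
      have p2 : HasDerivAt (fun s : ℝ => Real.exp (-s^2/2)) (Real.exp (-x^2/2) * (-x)) x := by
        have h : HasDerivAt (fun s : ℝ => -s^2/2) (-x) x := by
          have : HasDerivAt (fun s : ℝ => -s^2/2) (-(((2:ℕ):ℝ) * x ^ (2 - 1)) / 2) x := (hasDerivAt_pow 2 x).fun_neg.div_const 2
          convert this using 1
          push_cast
          ring
        exact h.exp
      have p3 := hH x hx0
      refine ⟨_, (p1.fun_mul p2).fun_mul p3, ?_⟩
      have heq : (((2*m-2:ℕ):ℝ) * x^(2*m-3) * Real.exp (-x^2/2)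
            + x^(2*m-2) * (Real.exp (-x^2/2) * (-x))) * (A x - B x)
          + x^(2*m-2) * Real.exp (-x^2/2)
            * (2 / x * B x + (x / 2 - (m : ℝ) / x) * A x)
          = x^k * Real.exp (-x^2/2) * ((((m:ℝ)-2) - x^2/2) * (A x - 2*B x)) := by
        rw [hk1, show 2*m-3 = k from rfl]
        push_cast
        rw [hkc]
        field_simp
        ring
      rw [heq]
      have f1 : (0:ℝ) ≤ x^k * Real.exp (-x^2/2) := by positivity
      have hx2 : c^2 < x^2 := by
        apply pow_lt_pow_left₀ hxc hcpos.le
        norm_num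
      have f2 : (((m:ℝ)-2) - x^2/2) ≤ 0 := by rw [hc2] at hx2; linarith
      have f3 : A x - 2*B x ≤ 0 := by linarith [hAB x hx0.le]
      have f4 : 0 ≤ (((m:ℝ)-2) - x^2/2) * (A x - 2*B x) := by
        have := mul_nonneg (neg_nonneg.2 f2) (neg_nonneg.2 f3)
        rw [neg_mul_neg] at this
        exact this
      exact mul_nonneg f1 f4
    have hFcont : ContinuousOn F (Set.Ici c) := by
      apply ContinuousOn.mul
      · exact ((continuous_pow (2*m-2)).mul (by fun_prop)).continuousOn
      · exact (hA.sub hB).mono (Set.Ici_subset_Ici.mpr hcpos.le)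
    have hmono : MonotoneOn F (Set.Ici c) := by
      apply monotoneOn_of_deriv_nonneg (convex_Ici c) hFcont
      · intro x hx
        obtain ⟨d, hd, _⟩ := key x hx
        exact hd.differentiableAt.differentiableWithinAt
      · intro x hx
        obtain ⟨d, hd, hd0⟩ := key x hx
        rw [hd.deriv]
        exact hd0
    have hFF : F R₀ ≤ F R := hmono hR₀c (le_trans hR₀c hRR.le) hRR.le
    have hRpos : 0 < R := lt_of_le_of_lt (le_trans hcpos.le hR₀c) hRR
    have hRn : (0:ℝ) < R^(2*m-2) := pow_pos hRpos _
    have hz : R ^ ((2:ℤ) - 2 * (m:ℤ)) = (R^(2*m-2:ℕ))⁻¹ := by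
      rw [show ((2:ℤ) - 2*(m:ℤ)) = -(((2*m-2:ℕ)):ℤ) by omega, zpow_neg, zpow_natCast]
    rw [hz]
    have ht : (0:ℝ) < (R^(2*m-2))⁻¹ * Real.exp (R^2/2) := by positivity
    have h2 := mul_le_mul_of_nonneg_left hFF ht.le
    simp only [hF] at h2
    have e1 : ((R^(2*m-2))⁻¹ * Real.exp (R^2/2))
        * (R^(2*m-2) * Real.exp (-R^2/2) * (A R - B R)) = A R - B R := by
      rw [show (-R^2/2) = -(R^2/2) by ring, Real.exp_neg]
      field_simp
    have e2 : ((R^(2*m-2))⁻¹ * Real.exp (R^2/2))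
        * (R₀^(2*m-2) * Real.exp (-R₀^2/2) * (A R₀ - B R₀))
        = (R^(2*m-2))⁻¹ * Real.exp (R^2/2) * R₀^(2*m-2) * Real.exp (-R₀^2/2) * (A R₀ - B R₀) := by
      ring
    rw [e1, e2] at h2
    exact h2
end

section
/- For every R > 0 one has −R²·H(R) ≤ (m−2)·∫₀^{c₀} s·A(s) ds. -/
open MeasureTheory Filter Set intervalIntegral

theorem stmt_3 (m : ℕ) (hm : 3 ≤ m) (A B : ℝ → ℝ)
    (hA : ContinuousOn A (Set.Ici 0)) (hB : ContinuousOn B (Set.Ici 0))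
    (hA0 : ∀ r ≥ (0:ℝ), 0 ≤ A r) (hAB : ∀ r ≥ (0:ℝ), A r ≤ 2 * B r)
    (hH : ∀ r > (0:ℝ), HasDerivAt (fun s => A s - B s)
      (2 / r * B r + (r / 2 - (m : ℝ) / r) * A r) r) :
    ∀ R > (0:ℝ),
      -(R^2 * (A R - B R)) ≤ ((m:ℝ) - 2) * ∫ s in (0:ℝ)..(Real.sqrt (2 * ((m:ℝ) - 2))), s * A s := by
  intro R hR
  have hm3 : (3:ℝ) ≤ (m:ℝ) := by exact_mod_cast hm
  set c : ℝ := Real.sqrt (2 * ((m:ℝ) - 2)) with hc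
  have hc2pos : (0:ℝ) < 2 * ((m:ℝ) - 2) := by linarith
  have hcsq : c ^ 2 = 2 * ((m:ℝ) - 2) := Real.sq_sqrt hc2pos.le
  have hcpos : 0 < c := Real.sqrt_pos.mpr hc2pos
  set f : ℝ → ℝ := fun s => (s^3/2 - ((m:ℝ)-2)*s) * A s with hf
  set g : ℝ → ℝ := fun s => (((m:ℝ)-2)*s - s^3/2) * A s with hg
  set h : ℝ → ℝ := fun s => ((m:ℝ)-2) * (s * A s) with hh
  have hcontf : ContinuousOn f (Ici 0) :=
    (Continuous.continuousOn (by continuity)).mul hA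
  have hcontg : ContinuousOn g (Ici 0) :=
    (Continuous.continuousOn (by continuity)).mul hA
  have hconth : ContinuousOn h (Ici 0) :=
    continuousOn_const.mul ((continuous_id.continuousOn).mul hA)
  have hsub : ∀ a b : ℝ, 0 ≤ a → 0 ≤ b → uIcc a b ⊆ Ici 0 := by
    intro a b ha hb x hx
    exact le_trans (le_inf ha hb) hx.1
  have hif : ∀ a b : ℝ, 0 ≤ a → 0 ≤ b → IntervalIntegrable f volume a b :=
    fun a b ha hb => (hcontf.mono (hsub a b ha hb)).intervalIntegrable
  have hig : ∀ a b : ℝ, 0 ≤ a → 0 ≤ b → IntervalIntegrable g volume a b :=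
    fun a b ha hb => (hcontg.mono (hsub a b ha hb)).intervalIntegrable
  have hih : ∀ a b : ℝ, 0 ≤ a → 0 ≤ b → IntervalIntegrable h volume a b :=
    fun a b ha hb => (hconth.mono (hsub a b ha hb)).intervalIntegrable
  -- FTC
  have hFcont : ContinuousOn (fun s => s^2 * (A s - B s)) (Icc 0 R) :=
    (Continuous.continuousOn (by continuity)).mul
      ((hA.sub hB).mono Icc_subset_Ici_self)
  have hFderiv : ∀ x ∈ Ioo (0:ℝ) R,
      HasDerivWithinAt (fun s => s^2 * (A s - B s)) (f x) (Ioi x) x := by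
    intro x hx
    have hx0 : (0:ℝ) < x := hx.1
    have h1 : HasDerivAt (fun s : ℝ => s^2) (2*x) x := by
      simpa using hasDerivAt_pow 2 x
    have h2 := hH x hx0
    have h3 := h1.mul h2
    have heq : 2*x*(A x - B x) + x^2*(2/x*B x + (x/2 - (m:ℝ)/x)*A x) = f x := by
      simp only [hf]
      field_simp
      ring
    rw [heq] at h3
    exact h3.hasDerivWithinAt
  have hFTC : ∫ s in (0:ℝ)..R, f s = R^2 * (A R - B R) := by
    have := intervalIntegral.integral_eq_sub_of_hasDeriv_right_of_le hR.le
      hFcont hFderiv (hif 0 R le_rfl hR.le)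
    simpa using this
  have key : -(R^2 * (A R - B R)) = ∫ s in (0:ℝ)..R, g s := by
    have hng : ∫ s in (0:ℝ)..R, g s = - ∫ s in (0:ℝ)..R, f s := by
      rw [← intervalIntegral.integral_neg]
      apply intervalIntegral.integral_congr
      intro x _
      simp only [hg, hf]
      ring
    rw [hng, hFTC]
  have hRHS : ((m:ℝ)-2) * (∫ s in (0:ℝ)..c, s * A s) = ∫ s in (0:ℝ)..c, h s :=
    (intervalIntegral.integral_const_mul _ _).symm
  have hgh : ∀ s, 0 ≤ s → g s ≤ h s := by
    intro s hs
    have hAs : 0 ≤ A s := hA0 s hs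
    simp only [hg, hh]
    nlinarith [mul_nonneg (mul_nonneg (mul_nonneg hs hs) hs) hAs]
  have hhnn : ∀ s, 0 ≤ s → 0 ≤ h s :=
    fun s hs => mul_nonneg (by linarith) (mul_nonneg hs (hA0 s hs))
  have hgle : ∀ s, c ≤ s → g s ≤ 0 := by
    intro s hs
    have hs0 : 0 ≤ s := le_trans hcpos.le hs
    have hAs : 0 ≤ A s := hA0 s hs0
    have hsq : c^2 ≤ s^2 := pow_le_pow_left₀ hcpos.le hs 2
    rw [hcsq] at hsq
    simp only [hg]
    apply mul_nonpos_of_nonpos_of_nonneg _ hAs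
    nlinarith [mul_le_mul_of_nonneg_left hsq hs0]
  rw [key, hRHS]
  rcases le_or_gt R c with hRc | hcR
  · calc ∫ s in (0:ℝ)..R, g s ≤ ∫ s in (0:ℝ)..R, h s := by
          exact intervalIntegral.integral_mono_on hR.le (hig 0 R le_rfl hR.le)
            (hih 0 R le_rfl hR.le) (fun x hx => hgh x hx.1)
      _ ≤ ∫ s in (0:ℝ)..c, h s := by
          have hsplit := intervalIntegral.integral_add_adjacent_intervals
            (hih 0 R le_rfl hR.le) (hih R c hR.le hcpos.le)
          have hnn : 0 ≤ ∫ s in R..c, h s :=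
            intervalIntegral.integral_nonneg hRc
              (fun u hu => hhnn u (le_trans hR.le hu.1))
          linarith
  · have hsplit := intervalIntegral.integral_add_adjacent_intervals
      (hig 0 c le_rfl hcpos.le) (hig c R hcpos.le hR.le)
    have h1 : ∫ s in (0:ℝ)..c, g s ≤ ∫ s in (0:ℝ)..c, h s :=
      intervalIntegral.integral_mono_on hcpos.le (hig 0 c le_rfl hcpos.le)
        (hih 0 c le_rfl hcpos.le) (fun x hx => hgh x hx.1)
    have h2 : ∫ s in c..R, g s ≤ 0 := by
      have hnn : 0 ≤ ∫ s in c..R, (-g s) :=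
        intervalIntegral.integral_nonneg hcR.le
          (fun u hu => neg_nonneg.mpr (hgle u hu.1))
      rw [intervalIntegral.integral_neg] at hnn
      linarith
    linarith
end

section
/- For every R > 0 one has −R^{2m−2}·e^{−R²/2}·H(R) ≤ (m−2)·∫₀^{c₀} s^{2m−3}·e^{−s²/2}·(2·B(s) − A(s)) ds. -/
open MeasureTheory Filter Set intervalIntegral

theorem stmt_4 (m : ℕ) (hm : 3 ≤ m) (A B : ℝ → ℝ)
    (hA : ContinuousOn A (Set.Ici 0)) (hB : ContinuousOn B (Set.Ici 0))
    (hA0 : ∀ r ≥ (0:ℝ), 0 ≤ A r) (hAB : ∀ r ≥ (0:ℝ), A r ≤ 2 * B r)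
    (hH : ∀ r > (0:ℝ), HasDerivAt (fun s => A s - B s)
      (2 / r * B r + (r / 2 - (m : ℝ) / r) * A r) r) :
    ∀ R > (0:ℝ),
      -(R ^ (2 * m - 2) * Real.exp (-R^2 / 2) * (A R - B R)) ≤
        ((m:ℝ) - 2) * ∫ s in (0:ℝ)..(Real.sqrt (2 * ((m:ℝ) - 2))), s ^ (2 * m - 3) * Real.exp (-s^2 / 2) * (2 * B s - A s) := by
  intro R hR
  set n := 2 * m - 3 with hn
  have hn1 : 2 * m - 2 = n + 1 := by omega
  have hmc : (3:ℝ) ≤ (m:ℝ) := by exact_mod_cast hm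
  have hcn : ((n:ℝ)) = 2 * (m:ℝ) - 3 := by
    rw [hn]
    push_cast [Nat.cast_sub (by omega : 3 ≤ 2 * m)]
    ring
  set c := Real.sqrt (2 * ((m:ℝ) - 2)) with hc
  have hcpos : 0 < c := Real.sqrt_pos.mpr (by linarith)
  have hc2 : c ^ 2 = 2 * ((m:ℝ) - 2) := Real.sq_sqrt (by linarith)
  set F : ℝ → ℝ := fun r => r ^ (n + 1) * Real.exp (-r ^ 2 / 2) * (A r - B r) with hF
  set g : ℝ → ℝ := fun r => r ^ n * Real.exp (-r ^ 2 / 2) *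
      (((m:ℝ) - 2 - r ^ 2 / 2) * A r + (r ^ 2 - 2 * ((m:ℝ) - 2)) * B r) with hg
  set h : ℝ → ℝ := fun s => ((m:ℝ) - 2) * (s ^ n * Real.exp (-s ^ 2 / 2) * (2 * B s - A s)) with hhdef
  -- derivative
  have hder : ∀ r > (0:ℝ), HasDerivAt F (g r) r := by
    intro r hr
    have h1 : HasDerivAt (fun s : ℝ => s ^ (n + 1)) (((n:ℝ) + 1) * r ^ n) r := by
      simpa using hasDerivAt_pow (n + 1) r
    have h2 : HasDerivAt (fun s : ℝ => Real.exp (-s ^ 2 / 2)) (Real.exp (-r ^ 2 / 2) * (-r)) r := by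
      have h0 : HasDerivAt (fun s : ℝ => -s ^ 2 / 2) (-r) r := by
        have h0' : HasDerivAt (fun s : ℝ => -s ^ 2 / 2) (-(2 * r) / 2) r := by
          simpa using ((hasDerivAt_pow 2 r).neg).div_const 2
        convert h0' using 1
        ring
      exact h0.exp
    have h3 := (h1.mul h2).mul (hH r hr)
    have heq : g r = (((n:ℝ) + 1) * r ^ n * Real.exp (-r ^ 2 / 2) +
        r ^ (n + 1) * (Real.exp (-r ^ 2 / 2) * (-r))) * (A r - B r) +
        r ^ (n + 1) * Real.exp (-r ^ 2 / 2) * (2 / r * B r + (r / 2 - (m:ℝ) / r) * A r) := by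
      rw [hg, hcn]
      field_simp
      ring
    rw [heq]
    exact h3
  -- continuity facts
  have econt : ContinuousOn (fun s : ℝ => Real.exp (-s ^ 2 / 2)) (Set.Ici 0) :=
    (Real.continuous_exp.comp (by continuity)).continuousOn
  have contF : ContinuousOn F (Set.Ici 0) :=
    ((continuous_pow (n + 1)).continuousOn.mul econt).mul (hA.sub hB)
  have contg : ContinuousOn g (Set.Ici 0) :=
    ((continuous_pow n).continuousOn.mul econt).mul
      (((continuousOn_const.sub ((continuous_pow 2).continuousOn.div_const 2)).mul hA).add
        (((continuous_pow 2).continuousOn.sub continuousOn_const).mul hB))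
  have conth : ContinuousOn h (Set.Ici 0) :=
    continuousOn_const.mul (((continuous_pow n).continuousOn.mul econt).mul
      ((continuousOn_const.mul hB).sub hA))
  have key : ∀ a b : ℝ, 0 ≤ a → 0 ≤ b → Set.uIcc a b ⊆ Set.Ici 0 := by
    intro a b ha hb x hx
    rw [Set.uIcc] at hx
    exact le_trans (le_inf ha hb) hx.1
  have hig : ∀ a b : ℝ, 0 ≤ a → 0 ≤ b → IntervalIntegrable (fun s => -g s) volume a b :=
    fun a b ha hb => ((contg.mono (key a b ha hb)).intervalIntegrable).neg
  have hih : ∀ a b : ℝ, 0 ≤ a → 0 ≤ b → IntervalIntegrable h volume a b :=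
    fun a b ha hb => (conth.mono (key a b ha hb)).intervalIntegrable
  -- FTC
  have hFTC : ∀ b > (0:ℝ), ∫ s in (0:ℝ)..b, g s = F b := by
    intro b hb
    have := intervalIntegral.integral_eq_sub_of_hasDeriv_right_of_le hb.le
      (contF.mono (Set.Icc_subset_Ici_self))
      (fun x hx => (hder x hx.1).hasDerivWithinAt)
      ((contg.mono (key 0 b le_rfl hb.le)).intervalIntegrable)
    have hF0 : F 0 = 0 := by simp [hF]
    rw [this, hF0, sub_zero]
  -- pointwise inequalities
  have hgh : ∀ s ≥ (0:ℝ), -g s ≤ h s := by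
    intro s hs
    have h1 : 0 ≤ 2 * B s - A s := by linarith [hAB s hs]
    have h2 : (0:ℝ) ≤ s ^ n := pow_nonneg hs n
    have h3 : (0:ℝ) < Real.exp (-s ^ 2 / 2) := Real.exp_pos _
    have keyeq : h s - (-g s) = s ^ n * Real.exp (-s ^ 2 / 2) * (2 * B s - A s) * (s ^ 2 / 2) := by
      rw [hhdef, hg]; ring
    nlinarith [mul_nonneg (mul_nonneg (mul_nonneg h2 h3.le) h1) (by positivity : (0:ℝ) ≤ s ^ 2 / 2)]
  have hh0 : ∀ s ≥ (0:ℝ), 0 ≤ h s := by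
    intro s hs
    have h1 : 0 ≤ 2 * B s - A s := by linarith [hAB s hs]
    have h2 : (0:ℝ) ≤ s ^ n := pow_nonneg hs n
    exact mul_nonneg (by linarith) (mul_nonneg (mul_nonneg h2 (Real.exp_pos _).le) h1)
  have hng0 : ∀ s, c ≤ s → -g s ≤ 0 := by
    intro s hs
    have hs0 : (0:ℝ) ≤ s := le_trans hcpos.le hs
    have h1 : 0 ≤ 2 * B s - A s := by linarith [hAB s hs0]
    have h2 : (0:ℝ) ≤ s ^ n := pow_nonneg hs0 n
    have h3 : (0:ℝ) < Real.exp (-s ^ 2 / 2) := Real.exp_pos _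
    have hs2 : c ^ 2 ≤ s ^ 2 := pow_le_pow_left₀ hcpos.le hs 2
    have keyeq : -g s = s ^ n * Real.exp (-s ^ 2 / 2) *
        ((2 * ((m:ℝ) - 2) - s ^ 2) * (2 * B s - A s) / 2) := by
      rw [hg]; ring
    rw [keyeq]
    have h4 : 2 * ((m:ℝ) - 2) - s ^ 2 ≤ 0 := by rw [← hc2]; linarith
    have h5 : (2 * ((m:ℝ) - 2) - s ^ 2) * (2 * B s - A s) / 2 ≤ 0 := by
      have := mul_nonpos_of_nonpos_of_nonneg h4 h1
      linarith
    exact mul_nonpos_of_nonneg_of_nonpos (mul_nonneg h2 h3.le) h5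
  -- rewrite goal
  rw [hn1, ← intervalIntegral.integral_const_mul]
  show -F R ≤ ∫ s in (0:ℝ)..c, ((m:ℝ) - 2) * (s ^ n * Real.exp (-s ^ 2 / 2) * (2 * B s - A s))
  have hFR : -F R = ∫ s in (0:ℝ)..R, -g s := by
    rw [intervalIntegral.integral_neg, hFTC R hR]
  rw [hFR]
  show _ ≤ ∫ s in (0:ℝ)..c, h s
  rcases le_or_gt R c with hcase | hcase
  · -- R ≤ c
    have step1 : ∫ s in (0:ℝ)..R, -g s ≤ ∫ s in (0:ℝ)..R, h s :=
      intervalIntegral.integral_mono_on hR.le (hig 0 R le_rfl hR.le) (hih 0 R le_rfl hR.le)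
        (fun x hx => hgh x hx.1)
    have split : (∫ s in (0:ℝ)..R, h s) + ∫ s in R..c, h s = ∫ s in (0:ℝ)..c, h s :=
      intervalIntegral.integral_add_adjacent_intervals (hih 0 R le_rfl hR.le)
        (hih R c hR.le hcpos.le)
    have tail : 0 ≤ ∫ s in R..c, h s :=
      intervalIntegral.integral_nonneg hcase (fun u hu => hh0 u (le_trans hR.le hu.1))
    linarith
  · -- c < R
    have split : (∫ s in (0:ℝ)..c, -g s) + ∫ s in c..R, -g s = ∫ s in (0:ℝ)..R, -g s :=
      intervalIntegral.integral_add_adjacent_intervals (hig 0 c le_rfl hcpos.le)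
        (hig c R hcpos.le hR.le)
    have step1 : ∫ s in (0:ℝ)..c, -g s ≤ ∫ s in (0:ℝ)..c, h s :=
      intervalIntegral.integral_mono_on hcpos.le (hig 0 c le_rfl hcpos.le)
        (hih 0 c le_rfl hcpos.le) (fun x hx => hgh x hx.1)
    have tail : ∫ s in c..R, -g s ≤ 0 := by
      have h0 : ∫ s in c..R, -g s ≤ ∫ s in c..R, (0:ℝ) :=
        intervalIntegral.integral_mono_on hcase.le (hig c R hcpos.le hR.le)
          intervalIntegrable_const (fun x hx => hng0 x hx.1)
      simpa using h0
    linarith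
end

section
/- For every R > 0 one has −R^{m}·e^{−R²/4}·H(R) ≤ (m−2)·∫₀^{c₀} s^{m−1}·e^{−s²/4}·B(s) ds. (This follows from the identity d/dr (r^m·e^{−r²/4}·H(r)) = (r/2 − (m−2)/r)·r^m·e^{−r²/4}·B(r).) -/
open MeasureTheory Filter Set intervalIntegral

theorem stmt_5 (m : ℕ) (hm : 3 ≤ m) (A B : ℝ → ℝ)
    (hA : ContinuousOn A (Set.Ici 0)) (hB : ContinuousOn B (Set.Ici 0))
    (hA0 : ∀ r ≥ (0:ℝ), 0 ≤ A r) (hAB : ∀ r ≥ (0:ℝ), A r ≤ 2 * B r)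
    (hH : ∀ r > (0:ℝ), HasDerivAt (fun s => A s - B s)
      (2 / r * B r + (r / 2 - (m : ℝ) / r) * A r) r) :
    ∀ R > (0:ℝ),
      -(R ^ m * Real.exp (-R^2 / 4) * (A R - B R)) ≤
        ((m:ℝ) - 2) * ∫ s in (0:ℝ)..(Real.sqrt (2 * ((m:ℝ) - 2))), s ^ (m - 1) * Real.exp (-s^2 / 4) * B s := by
  intro R hR
  set c : ℝ := Real.sqrt (2 * ((m:ℝ) - 2)) with hc
  have hm2 : (0:ℝ) < (m:ℝ) - 2 := by
    have : (3:ℝ) ≤ m := by exact_mod_cast hm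
    linarith
  have hc0 : 0 < c := Real.sqrt_pos.2 (by linarith)
  have hcsq : c ^ 2 = 2 * ((m:ℝ) - 2) := Real.sq_sqrt (by linarith)
  -- B is nonnegative on [0, ∞)
  have hB0 : ∀ r ∈ Ici (0:ℝ), 0 ≤ B r := fun r hr => by
    have h1 := hA0 r hr
    have h2 := hAB r hr
    linarith
  -- the functions
  set F : ℝ → ℝ := fun r => r ^ m * Real.exp (-r^2 / 4) * (A r - B r) with hF
  set h : ℝ → ℝ := fun s => s ^ (m - 1) * Real.exp (-s^2 / 4) * B s with hh
  set g : ℝ → ℝ := fun r => (((m:ℝ) - 2) - r^2 / 2) * h r with hg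
  -- continuity
  have hhc : ContinuousOn h (Ici 0) := by
    apply ContinuousOn.mul
    · exact (Continuous.mul (continuous_pow _) (by continuity)).continuousOn
    · exact hB
  have hgc : ContinuousOn g (Ici 0) := by
    apply ContinuousOn.mul
    · exact (continuous_const.sub ((continuous_pow 2).div_const 2)).continuousOn
    · exact hhc
  have hFc : ContinuousOn F (Ici 0) := by
    apply ContinuousOn.mul
    · exact (Continuous.mul (continuous_pow _) (by continuity)).continuousOn
    · exact hA.sub hB
  have hm1 : m = (m - 1) + 1 := (Nat.succ_pred_eq_of_pos (by omega)).symm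
  -- derivative of F
  have hder : ∀ r ∈ Ioo (0:ℝ) R, HasDerivAt F (-(g r)) r := by
    intro r hr
    have hrpos : (0:ℝ) < r := hr.1
    have hrne : r ≠ 0 := ne_of_gt hrpos
    have d1 : HasDerivAt (fun s : ℝ => s ^ m) ((m:ℝ) * r ^ (m - 1)) r :=
      hasDerivAt_pow m r
    have d2 : HasDerivAt (fun s : ℝ => Real.exp (-s^2 / 4))
        (Real.exp (-r^2 / 4) * (-(2 * r) / 4)) r := by
      have : HasDerivAt (fun s : ℝ => -s^2 / 4) (-(2 * r) / 4) r := by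
        have := ((hasDerivAt_pow 2 r).neg).div_const 4
        simpa using this
      exact this.exp
    have d3 := hH r hrpos
    have := (d1.mul d2).mul d3
    convert this using 1
    · rfl
    case e'_5 => rfl
    case e'_8 => rfl
    have hrm : r ^ m = r ^ (m - 1) * r := by
      conv_lhs => rw [hm1]
      rw [pow_succ]
    simp only [hg, hh, hF, Pi.mul_apply]
    rw [hrm, hm1]
    simp only [Nat.add_sub_cancel]
    generalize m - 1 = k
    push_cast
    field_simp
    ring
  -- integrability helper
  have hint : ∀ a b : ℝ, 0 ≤ a → a ≤ b → IntervalIntegrable g volume a b := by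
    intro a b ha hab
    apply (hgc.mono _).intervalIntegrable
    rw [uIcc_of_le hab]
    exact fun x hx => le_trans ha hx.1
  have hinth : ∀ a b : ℝ, 0 ≤ a → a ≤ b → IntervalIntegrable h volume a b := by
    intro a b ha hab
    apply (hhc.mono _).intervalIntegrable
    rw [uIcc_of_le hab]
    exact fun x hx => le_trans ha hx.1
  have hintmh : ∀ a b : ℝ, 0 ≤ a → a ≤ b →
      IntervalIntegrable (fun s => ((m:ℝ) - 2) * h s) volume a b := by
    intro a b ha hab
    exact (hinth a b ha hab).const_mul _
  -- FTC
  have hftc : F R = ∫ r in (0:ℝ)..R, -(g r) := by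
    have := intervalIntegral.integral_eq_sub_of_hasDerivAt_of_le hR.le
      (hFc.mono (fun x hx => hx.1)) hder
      ((hint 0 R le_rfl hR.le).neg)
    have hF0 : F 0 = 0 := by
      simp [hF, zero_pow (by omega : m ≠ 0)]
    rw [this, hF0, sub_zero]
  have hFRg : -(F R) = ∫ r in (0:ℝ)..R, g r := by
    rw [hftc, intervalIntegral.integral_neg, neg_neg]
  -- pointwise bounds
  have hbnd1 : ∀ r ∈ Icc (0:ℝ) (max R c), g r ≤ ((m:ℝ) - 2) * h r := by
    intro r hr
    have hhr : 0 ≤ h r :=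
      mul_nonneg (mul_nonneg (pow_nonneg hr.1 _) (Real.exp_pos _).le) (hB0 r hr.1)
    have : ((m:ℝ) - 2) - r^2 / 2 ≤ (m:ℝ) - 2 := by nlinarith [sq_nonneg r]
    exact mul_le_mul_of_nonneg_right this hhr |>.trans_eq rfl
  have hbnd2 : ∀ r ∈ Icc c R, g r ≤ 0 := by
    intro r hr
    have hhr : 0 ≤ h r :=
      mul_nonneg (mul_nonneg (pow_nonneg (le_trans hc0.le hr.1) _) (Real.exp_pos _).le)
        (hB0 r (le_trans hc0.le hr.1))
    have hr2 : c ^ 2 ≤ r ^ 2 := by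
      apply sq_le_sq' _ hr.1
      linarith [hc0.le, le_trans hc0.le hr.1]
    have : ((m:ℝ) - 2) - r^2 / 2 ≤ 0 := by
      rw [hcsq] at hr2; linarith
    exact mul_nonpos_of_nonpos_of_nonneg this hhr
  have hhnn : ∀ a b : ℝ, 0 ≤ a → a ≤ b → 0 ≤ ∫ s in a..b, h s := by
    intro a b ha hab
    apply intervalIntegral.integral_nonneg hab
    intro u hu
    exact mul_nonneg (mul_nonneg (pow_nonneg (le_trans ha hu.1) _) (Real.exp_pos _).le)
      (hB0 u (le_trans ha hu.1))
  rw [hFRg]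
  rcases le_total R c with hRc | hcR
  · -- R ≤ c
    calc ∫ r in (0:ℝ)..R, g r ≤ ∫ r in (0:ℝ)..R, ((m:ℝ) - 2) * h r := by
          apply intervalIntegral.integral_mono_on hR.le (hint 0 R le_rfl hR.le)
            (hintmh 0 R le_rfl hR.le)
          intro x hx
          exact hbnd1 x ⟨hx.1, hx.2.trans (le_max_left _ _)⟩
      _ = ((m:ℝ) - 2) * ∫ r in (0:ℝ)..R, h r := integral_const_mul _ _
      _ ≤ ((m:ℝ) - 2) * ∫ s in (0:ℝ)..c, h s := by
          apply mul_le_mul_of_nonneg_left _ hm2.le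
          have hsplit := intervalIntegral.integral_add_adjacent_intervals
            (hinth 0 R le_rfl hR.le) (hinth R c hR.le hRc)
          have := hhnn R c hR.le hRc
          linarith [hsplit]
  · -- c ≤ R
    have hsplit := intervalIntegral.integral_add_adjacent_intervals
      (hint 0 c le_rfl hc0.le) (hint c R hc0.le hcR)
    have h1 : ∫ r in (0:ℝ)..c, g r ≤ ((m:ℝ) - 2) * ∫ s in (0:ℝ)..c, h s := by
      calc ∫ r in (0:ℝ)..c, g r ≤ ∫ r in (0:ℝ)..c, ((m:ℝ) - 2) * h r := by
            apply intervalIntegral.integral_mono_on hc0.le (hint 0 c le_rfl hc0.le)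
              (hintmh 0 c le_rfl hc0.le)
            intro x hx
            exact hbnd1 x ⟨hx.1, hx.2.trans (le_max_right _ _)⟩
        _ = ((m:ℝ) - 2) * ∫ s in (0:ℝ)..c, h s := integral_const_mul _ _
    have h2 : ∫ r in c..R, g r ≤ 0 := by
      have hneg : 0 ≤ ∫ r in c..R, -(g r) :=
        intervalIntegral.integral_nonneg hcR (fun u hu => neg_nonneg.2 (hbnd2 u hu))
      rw [intervalIntegral.integral_neg] at hneg
      linarith
    linarith [hsplit]
end

section
/- If liminf_{R→∞} R^{2m−2}·e^{−R²/2}·H(R) > 0, then liminf_{R→∞} R^{m}·e^{−R²/4}·∫₀^R s^{m−1}·e^{−s²/4}·H(s) ds > 0. -/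
open MeasureTheory Filter Set intervalIntegral

set_option maxHeartbeats 1000000 in
theorem stmt_6 (m : ℕ) (hm : 3 ≤ m) (A B : ℝ → ℝ)
    (hA : ContinuousOn A (Set.Ici 0)) (hB : ContinuousOn B (Set.Ici 0))
    (hA0 : ∀ r ≥ (0:ℝ), 0 ≤ A r) (hAB : ∀ r ≥ (0:ℝ), A r ≤ 2 * B r)
    (hH : ∀ r > (0:ℝ), HasDerivAt (fun s => A s - B s)
      (2 / r * B r + (r / 2 - (m : ℝ) / r) * A r) r) :
    0 < Filter.liminf (fun R => R ^ (2 * m - 2) * Real.exp (-R^2 / 2) * (A R - B R)) Filter.atTop →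
      0 < Filter.liminf
        (fun R => R ^ m * Real.exp (-R^2 / 4) *
          ∫ s in (0:ℝ)..R, s ^ (m - 1) * Real.exp (-s^2 / 4) * (A s - B s)) Filter.atTop := by
  intro hL
  obtain ⟨k, rfl⟩ : ∃ k, m = k + 3 := ⟨m - 3, by omega⟩
  have e1 : 2 * (k + 3) - 2 = 2 * k + 4 := by omega
  have e2 : (k + 3) - 1 = k + 2 := by omega
  rw [e1] at hL
  rw [e2]
  set g : ℝ → ℝ := fun R => R ^ (2 * k + 4) * Real.exp (-R^2 / 2) * (A R - B R) with hgdef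
  set f : ℝ → ℝ := fun s => s ^ (k + 2) * Real.exp (-s^2 / 4) * (A s - B s) with hfdef
  -- Step 1: extract ε > 0 with eventually ε ≤ g, and x with frequently g ≤ x
  rw [Filter.liminf_eq] at hL
  have hSne : ∃ a ∈ {a : ℝ | ∀ᶠ R in atTop, a ≤ g R}, 0 < a := by
    by_contra h
    push_neg at h
    exact absurd hL (not_lt.2 (Real.sSup_le (fun y hy => h y hy) le_rfl))
  obtain ⟨ε, hεS, hε⟩ := hSne
  have hSbdd : BddAbove {a : ℝ | ∀ᶠ R in atTop, a ≤ g R} := by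
    by_contra h
    rw [Real.sSup_of_not_bddAbove h] at hL
    exact lt_irrefl 0 hL
  obtain ⟨x, hx⟩ := hSbdd
  have hfreq : ∃ᶠ R in atTop, g R ≤ x + 1 := by
    by_contra h
    rw [Filter.not_frequently] at h
    have hmem : x + 1 ∈ {a : ℝ | ∀ᶠ R in atTop, a ≤ g R} := by
      filter_upwards [h] with R hR
      push_neg at hR
      linarith
    linarith [hx hmem]
  obtain ⟨R₀, hR₀⟩ := Filter.eventually_atTop.mp hεS
  -- choice of base point
  set R₁ : ℝ := max R₀ ((k:ℝ) + 3) with hR₁def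
  have hR₁3 : (3:ℝ) ≤ R₁ := le_trans (by norm_num [Nat.cast_nonneg] : (3:ℝ) ≤ (k:ℝ)+3) (le_max_right _ _)
  have hR₁pos : (0:ℝ) < R₁ := by linarith
  -- basic continuity of f
  have hABc : ContinuousOn (fun s => A s - B s) (Set.Ici 0) := hA.sub hB
  have hcexp1 : Continuous fun s : ℝ => Real.exp (-s^2/4) :=
    Real.continuous_exp.comp (((continuous_pow 2).neg).div_const 4)
  have hcexp2 : Continuous fun s : ℝ => Real.exp (s^2/4) :=
    Real.continuous_exp.comp ((continuous_pow 2).div_const 4)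
  have hcmul1 : Continuous fun s : ℝ => 2*s/4 :=
    (continuous_const.mul continuous_id).div_const 4
  have hcmul2 : Continuous fun s : ℝ => -(2*s)/4 :=
    ((continuous_const.mul continuous_id).neg).div_const 4
  have hfc : ContinuousOn f (Set.Ici 0) := by
    apply ContinuousOn.mul _ hABc
    exact ((continuous_pow (k+2)).mul hcexp1).continuousOn
  have hfint : ∀ a b : ℝ, 0 ≤ a → a ≤ b → IntervalIntegrable f volume a b := by
    intro a b ha hab
    apply (hfc.mono _).intervalIntegrable
    rw [Set.uIcc_of_le hab]
    exact fun y hy => le_trans ha hy.1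
  -- exponential helpers
  have hexpD : ∀ y : ℝ, HasDerivAt (fun s : ℝ => Real.exp (-s^2 / 4)) (Real.exp (-y^2/4) * (-(2*y)/4)) y := by
    intro y
    have h1 : HasDerivAt (fun s : ℝ => -s^2 / 4) (-(2*y)/4) y := by
      have := ((hasDerivAt_pow 2 y).neg).div_const 4
      simpa using this
    simpa using h1.exp
  have hexpD2 : ∀ y : ℝ, HasDerivAt (fun s : ℝ => Real.exp (s^2 / 4)) (Real.exp (y^2/4) * (2*y/4)) y := by
    intro y
    have h1 : HasDerivAt (fun s : ℝ => s^2 / 4) (2*y/4) y := by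
      have := (hasDerivAt_pow 2 y).div_const 4
      simpa using this
    simpa using h1.exp
  -- lower comparison function φ with derivative D
  set φ : ℝ → ℝ := fun s => 2 * ε * (Real.exp (s^2/4) / s ^ (k+3)) with hφdef
  set D : ℝ → ℝ := fun s => 2 * ε *
      ((Real.exp (s^2/4) * (2*s/4) * s ^ (k+3) - Real.exp (s^2/4) * (↑(k+3) * s ^ (k+3-1))) / (s ^ (k+3)) ^ 2)
      with hDdef
  have hφD : ∀ y : ℝ, 0 < y → HasDerivAt φ (D y) y := by
    intro y hy
    exact HasDerivAt.const_mul (2*ε) ((hexpD2 y).div (hasDerivAt_pow (k+3) y) (pow_ne_zero _ hy.ne'))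
  -- upper comparison function ψ with derivative Dψ
  set ψ : ℝ → ℝ := fun s => 8 * (s ^ (k+1) * Real.exp (-s^2 / 4) * (A s - B s)) with hψdef
  set Dψ : ℝ → ℝ := fun s => 8 *
      ((↑(k+1) * s ^ (k+1-1) * Real.exp (-s^2/4) + s ^ (k+1) * (Real.exp (-s^2/4) * (-(2*s)/4))) * (A s - B s)
        + s ^ (k+1) * Real.exp (-s^2/4) * (2 / s * B s + (s / 2 - (↑(k+3):ℝ) / s) * A s)) with hDψdef
  have hψD : ∀ y : ℝ, 0 < y → HasDerivAt ψ (Dψ y) y := by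
    intro y hy
    exact HasDerivAt.const_mul (8:ℝ)
      (((hasDerivAt_pow (k+1) y).mul (hexpD y)).mul (hH y hy))
  -- pointwise comparisons
  have hDle : ∀ s : ℝ, R₁ ≤ s → D s ≤ f s := by
    intro s hs
    have hs3 : (3:ℝ) ≤ s := le_trans hR₁3 hs
    have hs0 : (0:ℝ) < s := by linarith
    have hsne : s ≠ 0 := hs0.ne'
    have hE : (0:ℝ) < Real.exp (s^2/4) := Real.exp_pos _
    have ht : (0:ℝ) < s ^ (k+2) := pow_pos hs0 _
    have step1 : D s ≤ ε * Real.exp (s^2/4) / s ^ (k+2) := by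
      have heq : D s = (ε * Real.exp (s^2/4) / s ^ (k+2)) * (1 - 2 * (↑(k+3):ℝ) / s^2) := by
        simp only [hDdef]
        rw [show k + 3 - 1 = k + 2 from by omega]
        field_simp
        ring
      rw [heq]
      have h1 : (1 - 2 * (↑(k+3):ℝ) / s^2) ≤ 1 := by
        have : (0:ℝ) ≤ 2 * (↑(k+3):ℝ) / s^2 := by positivity
        linarith
      calc (ε * Real.exp (s^2/4) / s ^ (k+2)) * (1 - 2 * (↑(k+3):ℝ) / s^2)
          ≤ (ε * Real.exp (s^2/4) / s ^ (k+2)) * 1 :=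
            mul_le_mul_of_nonneg_left h1 (by positivity)
        _ = ε * Real.exp (s^2/4) / s ^ (k+2) := mul_one _
    have step2 : ε * Real.exp (s^2/4) / s ^ (k+2) ≤ f s := by
      rw [div_le_iff₀ ht]
      have h1 : ε ≤ g s := hR₀ s (le_trans (le_max_left _ _) hs)
      have h2 : ε * Real.exp (s^2/4) ≤ g s * Real.exp (s^2/4) :=
        mul_le_mul_of_nonneg_right h1 hE.le
      have hexpeq : Real.exp (-s^2/2) * Real.exp (s^2/4) = Real.exp (-s^2/4) := by
        rw [← Real.exp_add]; ring_nf
      calc ε * Real.exp (s^2/4) ≤ g s * Real.exp (s^2/4) := h2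
        _ = s ^ (k+2) * (Real.exp (-s^2/2) * Real.exp (s^2/4)) * (A s - B s) * s ^ (k+2) := by
            rw [hgdef]; ring
        _ = f s * s ^ (k+2) := by rw [hexpeq, hfdef]
    linarith
  have hfleDψ : ∀ s : ℝ, R₁ ≤ s → f s ≤ Dψ s := by
    intro s hs
    have hsk3 : ((k:ℝ) + 3) ≤ s := le_trans (le_max_right _ _) hs
    have hk0 : (0:ℝ) ≤ (k:ℝ) := Nat.cast_nonneg k
    have hs3 : (3:ℝ) ≤ s := by linarith
    have hs0 : (0:ℝ) < s := by linarith
    have hsne : s ≠ 0 := hs0.ne'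
    have hE : (0:ℝ) < Real.exp (-s^2/4) := Real.exp_pos _
    have hAs : 0 ≤ A s := hA0 s hs0.le
    have hABs : A s ≤ 2 * B s := hAB s hs0.le
    have hBs : 0 ≤ B s := by linarith
    have key : s^2 * (A s - B s) ≤
        8 * ((((k:ℝ)+1) - s^2/2) * (A s - B s) + 2 * B s + (s^2/2 - ((k:ℝ)+3)) * A s) := by
      nlinarith [mul_nonneg (mul_nonneg (by norm_num : (0:ℝ) ≤ 1) hBs) hs0.le,
        mul_nonneg (sq_nonneg s) (by linarith : (0:ℝ) ≤ 2 * B s - A s),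
        mul_nonneg (by nlinarith : (0:ℝ) ≤ 3 * s^2 - 8 * ((k:ℝ)+3)) hBs]
    calc f s = (s ^ k * Real.exp (-s^2/4)) * (s^2 * (A s - B s)) := by rw [hfdef]; ring
      _ ≤ (s ^ k * Real.exp (-s^2/4)) *
          (8 * ((((k:ℝ)+1) - s^2/2) * (A s - B s) + 2 * B s + (s^2/2 - ((k:ℝ)+3)) * A s)) :=
            mul_le_mul_of_nonneg_left key (by positivity)
      _ = Dψ s := by
        simp only [hDψdef]
        rw [show k + 1 - 1 = k from by omega]
        push_cast
        field_simp
        ring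
  -- tendsto R^(k+3) * exp(-R²/4) → 0
  have hu0 : Tendsto (fun R : ℝ => R ^ (k+3) * Real.exp (-R^2 / 4)) atTop (nhds 0) := by
    apply squeeze_zero' (g := fun R : ℝ => R ^ (k+3) * Real.exp (-R))
    · filter_upwards [eventually_ge_atTop (0:ℝ)] with R hR
      positivity
    · filter_upwards [eventually_ge_atTop (4:ℝ)] with R hR
      have h1 : R ≤ R^2/4 := by nlinarith
      have h2 : Real.exp (-R^2/4) ≤ Real.exp (-R) := Real.exp_le_exp.2 (by linarith)
      have hRp : (0:ℝ) ≤ R ^ (k+3) := by positivity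
      exact mul_le_mul_of_nonneg_left h2 hRp
    · exact Real.tendsto_pow_mul_exp_neg_atTop_nhds_zero (k+3)
  -- constants
  set C₁ : ℝ := (∫ s in (0:ℝ)..R₁, f s) - φ R₁ with hC₁def
  set C₂ : ℝ := (∫ s in (0:ℝ)..R₁, f s) - ψ R₁ with hC₂def
  have hev1 : ∀ᶠ R in atTop, |C₁| * (R ^ (k+3) * Real.exp (-R^2/4)) < ε := by
    have := (hu0.const_mul |C₁|)
    rw [mul_zero] at this
    exact this.eventually_lt_const hε
  have hev2 : ∀ᶠ R in atTop, |C₂| * (R ^ (k+3) * Real.exp (-R^2/4)) < 1 := by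
    have := (hu0.const_mul |C₂|)
    rw [mul_zero] at this
    exact this.eventually_lt_const one_pos
  -- splitting and FTC facts, for R ≥ R₁
  have hsplit : ∀ R : ℝ, R₁ ≤ R →
      (∫ s in (0:ℝ)..R, f s) = (∫ s in (0:ℝ)..R₁, f s) + ∫ s in R₁..R, f s := by
    intro R hR
    exact (intervalIntegral.integral_add_adjacent_intervals
      (hfint 0 R₁ le_rfl hR₁pos.le) (hfint R₁ R (by linarith) hR)).symm
  have hpos_on : ∀ R : ℝ, R₁ ≤ R → ∀ y ∈ Set.uIcc R₁ R, (0:ℝ) < y := by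
    intro R hR y hy
    rw [Set.uIcc_of_le hR] at hy
    linarith [hy.1]
  have hDcont : ∀ R : ℝ, R₁ ≤ R → IntervalIntegrable D volume R₁ R := by
    intro R hR
    apply ContinuousOn.intervalIntegrable
    rw [hDdef]
    apply ContinuousOn.mul continuousOn_const
    apply ContinuousOn.div
    · exact ((hcexp2.mul hcmul1).mul (continuous_pow _)).continuousOn.sub
        ((hcexp2.mul (continuous_const.mul (continuous_pow _)))).continuousOn
    · exact ((continuous_pow _).pow 2).continuousOn
    · intro y hy
      exact pow_ne_zero _ (pow_ne_zero _ (hpos_on R hR y hy).ne')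
  have hDψcont : ∀ R : ℝ, R₁ ≤ R → IntervalIntegrable Dψ volume R₁ R := by
    intro R hR
    apply ContinuousOn.intervalIntegrable
    rw [hDψdef]
    have hsub : Set.uIcc R₁ R ⊆ Set.Ici 0 := fun y hy => (hpos_on R hR y hy).le
    have hne : ∀ y ∈ Set.uIcc R₁ R, y ≠ 0 := fun y hy => (hpos_on R hR y hy).ne'
    apply ContinuousOn.mul continuousOn_const
    apply ContinuousOn.add
    · exact (((continuous_const.mul (continuous_pow _)).mul hcexp1).add
        ((continuous_pow _).mul (hcexp1.mul hcmul2))).continuousOn.mul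
        ((hA.sub hB).mono hsub)
    · apply ContinuousOn.mul
      · exact ((continuous_pow _).mul hcexp1).continuousOn
      · apply ContinuousOn.add
        · exact (continuousOn_const.div continuousOn_id hne).mul (hB.mono hsub)
        · exact ((continuous_id.div_const 2).continuousOn.sub
            (continuousOn_const.div continuousOn_id hne)).mul (hA.mono hsub)
  have hFTCφ : ∀ R : ℝ, R₁ ≤ R → (∫ s in R₁..R, D s) = φ R - φ R₁ := by
    intro R hR
    exact intervalIntegral.integral_eq_sub_of_hasDerivAt
      (fun y hy => hφD y (hpos_on R hR y hy)) (hDcont R hR)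
  have hFTCψ : ∀ R : ℝ, R₁ ≤ R → (∫ s in R₁..R, Dψ s) = ψ R - ψ R₁ := by
    intro R hR
    exact intervalIntegral.integral_eq_sub_of_hasDerivAt
      (fun y hy => hψD y (hpos_on R hR y hy)) (hDψcont R hR)
  -- lower bound on the full integral
  have hFlow : ∀ R : ℝ, R₁ ≤ R → C₁ + φ R ≤ ∫ s in (0:ℝ)..R, f s := by
    intro R hR
    have h1 : (∫ s in R₁..R, D s) ≤ ∫ s in R₁..R, f s := by
      apply intervalIntegral.integral_mono_on hR (hDcont R hR) (hfint R₁ R hR₁pos.le hR)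
      intro y hy
      exact hDle y hy.1
    rw [hsplit R hR]
    rw [hFTCφ R hR] at h1
    rw [hC₁def]
    linarith
  have hFupp : ∀ R : ℝ, R₁ ≤ R → (∫ s in (0:ℝ)..R, f s) ≤ C₂ + ψ R := by
    intro R hR
    have h1 : (∫ s in R₁..R, f s) ≤ ∫ s in R₁..R, Dψ s := by
      apply intervalIntegral.integral_mono_on hR (hfint R₁ R hR₁pos.le hR) (hDψcont R hR)
      intro y hy
      exact hfleDψ y hy.1
    rw [hsplit R hR]
    rw [hFTCψ R hR] at h1
    rw [hC₂def]
    linarith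
  -- identities for the weighted comparison functions
  have hφid : ∀ R : ℝ, 0 < R → R ^ (k+3) * Real.exp (-R^2/4) * φ R = 2 * ε := by
    intro R hR
    simp only [hφdef]
    rw [show (-R^2/4 : ℝ) = -(R^2/4) from by ring, Real.exp_neg]
    field_simp
  have hψid : ∀ R : ℝ, 0 < R → R ^ (k+3) * Real.exp (-R^2/4) * ψ R = 8 * g R := by
    intro R hR
    simp only [hψdef, hgdef]
    rw [show (-R^2/2 : ℝ) = (-R^2/4) + (-R^2/4) from by ring, Real.exp_add]
    ring
  -- main eventual lower bound
  have hmain : ∀ᶠ R in atTop, ε ≤ R ^ (k+3) * Real.exp (-R^2/4) * ∫ s in (0:ℝ)..R, f s := by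
    filter_upwards [hev1, eventually_ge_atTop R₁] with R hevR hRR₁
    have hRpos : (0:ℝ) < R := lt_of_lt_of_le hR₁pos hRR₁
    have hw : (0:ℝ) < R ^ (k+3) * Real.exp (-R^2/4) := by positivity
    have h1 := mul_le_mul_of_nonneg_left (hFlow R hRR₁) hw.le
    have h2 : R ^ (k+3) * Real.exp (-R^2/4) * (C₁ + φ R)
        = R ^ (k+3) * Real.exp (-R^2/4) * C₁ + 2 * ε := by
      rw [mul_add, hφid R hRpos]
    have h3 : -(|C₁| * (R ^ (k+3) * Real.exp (-R^2/4))) ≤ R ^ (k+3) * Real.exp (-R^2/4) * C₁ := by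
      have h4 := neg_abs_le (R ^ (k+3) * Real.exp (-R^2/4) * C₁)
      rw [abs_mul, abs_of_nonneg (by positivity : (0:ℝ) ≤ R ^ (k+3) * Real.exp (-R^2/4))] at h4
      linarith [h4]
    nlinarith [abs_nonneg C₁]
  -- frequent upper bound, for coboundedness
  have hfreq2 : ∃ᶠ R in atTop,
      R ^ (k+3) * Real.exp (-R^2/4) * (∫ s in (0:ℝ)..R, f s) ≤ 8 * (x+1) + 1 := by
    apply (hfreq.and_eventually (hev2.and (eventually_ge_atTop R₁))).mono
    rintro R ⟨hgR, hevR, hRR₁⟩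
    have hRpos : (0:ℝ) < R := lt_of_lt_of_le hR₁pos hRR₁
    have hw : (0:ℝ) < R ^ (k+3) * Real.exp (-R^2/4) := by positivity
    have h1 := mul_le_mul_of_nonneg_left (hFupp R hRR₁) hw.le
    have h2 : R ^ (k+3) * Real.exp (-R^2/4) * (C₂ + ψ R)
        = R ^ (k+3) * Real.exp (-R^2/4) * C₂ + 8 * g R := by
      rw [mul_add, hψid R hRpos]
    have h3 : R ^ (k+3) * Real.exp (-R^2/4) * C₂ ≤ |C₂| * (R ^ (k+3) * Real.exp (-R^2/4)) := by
      have h4 := le_abs_self (R ^ (k+3) * Real.exp (-R^2/4) * C₂)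
      rw [abs_mul, abs_of_nonneg (by positivity : (0:ℝ) ≤ R ^ (k+3) * Real.exp (-R^2/4))] at h4
      linarith [h4]
    nlinarith [abs_nonneg C₂]
  -- conclude
  have hcob : Filter.IsCoboundedUnder (· ≥ ·) Filter.atTop
      (fun R => R ^ (k+3) * Real.exp (-R^2/4) * ∫ s in (0:ℝ)..R, f s) := by
    refine ⟨8 * (x+1) + 1, fun a ha => ?_⟩
    have ha' : ∀ᶠ R in atTop,
        a ≤ R ^ (k+3) * Real.exp (-R^2/4) * ∫ s in (0:ℝ)..R, f s :=
      Filter.eventually_map.mp ha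
    obtain ⟨R, hR1, hR2⟩ := (ha'.and_frequently hfreq2).exists
    exact le_trans hR1 hR2
  exact lt_of_lt_of_le hε (Filter.le_liminf_of_le hcob hmain)
end

section
/- There exists a constant C₁ > 0 depending only on m such that for every δ with 0 ≤ δ ≤ 2 and every R > 0, ∫₀^R s^{3−δ}·A(s) ds ≤ C₁·∫₀^{2√(m−2)} s·A(s) ds + 4·R²·H(R)⁺. -/
set_option maxHeartbeats 1000000

open MeasureTheory Filter Set intervalIntegral

theorem stmt_7 (m : ℕ) (hm : 3 ≤ m) (A B : ℝ → ℝ)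
    (hA : ContinuousOn A (Set.Ici 0)) (hB : ContinuousOn B (Set.Ici 0))
    (hA0 : ∀ r ≥ (0:ℝ), 0 ≤ A r) (hAB : ∀ r ≥ (0:ℝ), A r ≤ 2 * B r)
    (hH : ∀ r > (0:ℝ), HasDerivAt (fun s => A s - B s)
      (2 / r * B r + (r / 2 - (m : ℝ) / r) * A r) r) :
    ∃ C₁ > (0:ℝ), ∀ δ : ℝ, 0 ≤ δ → δ ≤ 2 → ∀ R > (0:ℝ),
      (∫ s in (0:ℝ)..R, s ^ ((3:ℝ) - δ) * A s) ≤
        C₁ * (∫ s in (0:ℝ)..(2 * Real.sqrt ((m:ℝ) - 2)), s * A s) + 4 * R^2 * max (A R - B R) 0 := by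
  have hm2 : (1:ℝ) ≤ (m:ℝ) - 2 := by
    have : (3:ℝ) ≤ (m:ℝ) := by exact_mod_cast hm
    linarith
  set c : ℝ := (m:ℝ) - 2 with hcdef
  set b : ℝ := 2 * Real.sqrt c with hbdef
  have hsq : Real.sqrt c ^ 2 = c := Real.sq_sqrt (by linarith)
  have hb1 : (2:ℝ) ≤ b := by
    have h1 : (1:ℝ) ≤ Real.sqrt c := by
      rw [show (1:ℝ) = Real.sqrt 1 by simp]
      exact Real.sqrt_le_sqrt (by linarith)
    rw [hbdef]; linarith
  have hb0 : (0:ℝ) ≤ b := by linarith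
  have hbsq : b ^ 2 = 4 * c := by rw [hbdef]; nlinarith [hsq]
  -- integrability of g * A on subintervals of [0, ∞)
  have hint : ∀ (g : ℝ → ℝ), Continuous g → ∀ x y : ℝ, 0 ≤ x → x ≤ y →
      IntervalIntegrable (fun s => g s * A s) volume x y := by
    intro g hg x y hx hxy
    apply ContinuousOn.intervalIntegrable
    rw [uIcc_of_le hxy]
    exact hg.continuousOn.mul (hA.mono (fun t ht => le_trans hx ht.1))
  -- nonnegativity of such integrals
  have hnn : ∀ (g : ℝ → ℝ), (∀ s, 0 ≤ s → 0 ≤ g s) → ∀ x y : ℝ, 0 ≤ x → x ≤ y →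
      0 ≤ ∫ s in x..y, g s * A s := by
    intro g hg x y hx hxy
    apply intervalIntegral.integral_nonneg hxy
    intro u hu
    exact mul_nonneg (hg u (le_trans hx hu.1)) (hA0 u (le_trans hx hu.1))
  -- extension: enlarging the upper limit
  have hext : ∀ (g : ℝ → ℝ), Continuous g → (∀ s, 0 ≤ s → 0 ≤ g s) → ∀ x y : ℝ,
      0 ≤ x → x ≤ y →
      (∫ s in (0:ℝ)..x, g s * A s) ≤ ∫ s in (0:ℝ)..y, g s * A s := by
    intro g hg hgn x y hx hxy
    have := intervalIntegral.integral_add_adjacent_intervals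
      (hint g hg 0 x le_rfl hx) (hint g hg x y hx hxy)
    rw [← this]
    have := hnn g hgn x y hx hxy
    linarith
  -- continuity of auxiliary polynomial weights
  have hc1 : Continuous (fun s : ℝ => s) := continuous_id
  have hc3 : Continuous (fun s : ℝ => s ^ 3) := continuous_pow 3
  have hck : Continuous (fun s : ℝ => s ^ 3 / 2 - c * s) :=
    ((continuous_pow 3).div_const 2).sub (continuous_const.mul continuous_id)
  -- the key identity from the ODE
  have key : ∀ R : ℝ, 0 < R →
      (∫ s in (0:ℝ)..R, (s ^ 3 / 2 - c * s) * A s) = R ^ 2 * (A R - B R) := by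
    intro R hR
    have hcont : ContinuousOn (fun s : ℝ => s ^ 2 * (A s - B s)) (Icc 0 R) := by
      apply ContinuousOn.mul (by fun_prop)
      exact (hA.sub hB).mono (fun t ht => ht.1)
    have hderiv : ∀ x ∈ Ioo (0:ℝ) R,
        HasDerivWithinAt (fun s : ℝ => s ^ 2 * (A s - B s))
          ((x ^ 3 / 2 - c * x) * A x) (Ioi x) x := by
      intro x hx
      have hx0 : x ≠ 0 := ne_of_gt hx.1
      have h := (hasDerivAt_pow 2 x).mul (hH x hx.1)
      have h2 : HasDerivAt (fun s : ℝ => s ^ 2 * (A s - B s)) ((x ^ 3 / 2 - c * x) * A x) x := by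
        refine h.congr_deriv ?_
        rw [hcdef]
        push_cast
        field_simp
        ring
      exact h2.hasDerivWithinAt
    have hintk : IntervalIntegrable (fun s => (s ^ 3 / 2 - c * s) * A s) volume 0 R :=
      hint _ hck 0 R le_rfl hR.le
    have := intervalIntegral.integral_eq_sub_of_hasDeriv_right_of_le hR.le hcont hderiv hintk
    simpa using this
  -- notation
  set I : ℝ := ∫ s in (0:ℝ)..b, s * A s with hIdef
  have hI0 : 0 ≤ I := hnn _ (fun s hs => hs) 0 b le_rfl hb0
  clear_value I b c
  refine ⟨4 * c + 1, by linarith, ?_⟩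
  intro δ hδ0 hδ2 R hR
  set Hp : ℝ := max (A R - B R) 0 with hHpdef
  have hHp0 : 0 ≤ Hp := le_max_right _ _
  have hHple : R ^ 2 * (A R - B R) ≤ R ^ 2 * Hp :=
    mul_le_mul_of_nonneg_left (le_max_left _ _) (by positivity)
  clear_value Hp
  have hc0 : (0:ℝ) < c := by linarith
  -- Step 1: bound on L = ∫₀ᴿ s A s
  have hLbound : c * (∫ s in (0:ℝ)..R, s * A s) ≤ 2 * c * I + R ^ 2 * Hp := by
    rcases le_or_gt R b with hRb | hbR
    · have h1 : (∫ s in (0:ℝ)..R, s * A s) ≤ I := by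
        rw [hIdef]; exact hext _ hc1 (fun s hs => hs) R b hR.le hRb
      have h2 : c * (∫ s in (0:ℝ)..R, s * A s) ≤ c * I :=
        mul_le_mul_of_nonneg_left h1 hc0.le
      have h3 : 0 ≤ c * I := mul_nonneg hc0.le hI0
      have h4 : 0 ≤ R ^ 2 * Hp := mul_nonneg (sq_nonneg R) hHp0
      linarith
    · -- b < R
      have htail : c * (∫ s in b..R, s * A s) ≤ ∫ s in b..R, (s ^ 3 / 2 - c * s) * A s := by
        rw [← intervalIntegral.integral_const_mul]
        apply intervalIntegral.integral_mono_on hbR.le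
          ((hint _ hc1 b R hb0 hbR.le).const_mul c) (hint _ hck b R hb0 hbR.le)
        intro s hs
        have hA0s : 0 ≤ A s := hA0 s (le_trans hb0 hs.1)
        have hsb : b ≤ s := hs.1
        have hssq : b ^ 2 ≤ s ^ 2 := by nlinarith
        have : c * s ≤ s ^ 3 / 2 - c * s := by nlinarith
        nlinarith
      have hsplit : (∫ s in b..R, (s ^ 3 / 2 - c * s) * A s)
          = R ^ 2 * (A R - B R) - b ^ 2 * (A b - B b) := by
        have hadd := intervalIntegral.integral_add_adjacent_intervals
          (hint _ hck 0 b le_rfl hb0) (hint _ hck b R hb0 hbR.le)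
        rw [key R hR, key b (by linarith)] at *
        linarith [hadd]
      have hHb : -(b ^ 2 * (A b - B b)) ≤ c * I := by
        have h3 : (∫ s in (0:ℝ)..b, (-c) * (s * A s) ) ≤
            ∫ s in (0:ℝ)..b, (s ^ 3 / 2 - c * s) * A s := by
          apply intervalIntegral.integral_mono_on hb0
            ((hint _ hc1 0 b le_rfl hb0).const_mul (-c)) (hint _ hck 0 b le_rfl hb0)
          intro s hs
          have hA0s : 0 ≤ A s := hA0 s hs.1
          have : 0 ≤ s ^ 3 / 2 * A s :=
            mul_nonneg (div_nonneg (pow_nonneg hs.1 3) (by norm_num)) hA0s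
          nlinarith
        rw [intervalIntegral.integral_const_mul, key b (by linarith)] at h3
        rw [hIdef]
        linarith
      have hsplitL : (∫ s in (0:ℝ)..R, s * A s) = I + ∫ s in b..R, s * A s := by
        rw [hIdef]
        exact (intervalIntegral.integral_add_adjacent_intervals
          (hint _ hc1 0 b le_rfl hb0) (hint _ hc1 b R hb0 hbR.le)).symm
      have htail2 : c * (∫ s in b..R, s * A s) ≤ c * I + R ^ 2 * Hp := by
        linarith [htail, hsplit, hHb, hHple]
      calc c * (∫ s in (0:ℝ)..R, s * A s) = c * I + c * ∫ s in b..R, s * A s := by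
            rw [hsplitL]; ring
        _ ≤ c * I + (c * I + R ^ 2 * Hp) := by linarith
        _ = 2 * c * I + R ^ 2 * Hp := by ring
  -- Step 2: bound on ∫₀ᴿ s³ A s
  have hcube : (∫ s in (0:ℝ)..R, s ^ 3 * A s) ≤ 4 * c * I + 4 * R ^ 2 * Hp := by
    have hEq : (∫ s in (0:ℝ)..R, s ^ 3 * A s)
        = 2 * (∫ s in (0:ℝ)..R, (s ^ 3 / 2 - c * s) * A s)
          + 2 * c * (∫ s in (0:ℝ)..R, s * A s) := by
      rw [← intervalIntegral.integral_const_mul, ← intervalIntegral.integral_const_mul,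
        ← intervalIntegral.integral_add (((hint _ hck 0 R le_rfl hR.le)).const_mul 2)
          ((hint _ hc1 0 R le_rfl hR.le).const_mul (2 * c))]
      apply intervalIntegral.integral_congr
      intro s _
      ring
    rw [hEq, key R hR]
    have h6 : 2 * (c * (∫ s in (0:ℝ)..R, s * A s)) ≤ 2 * (2 * c * I + R ^ 2 * Hp) := by
      linarith
    nlinarith [h6, hHple]
  -- Step 3: compare s^(3-δ) with s and s³
  have hδ3 : (1:ℝ) ≤ 3 - δ := by linarith
  have hcr : Continuous (fun s : ℝ => s ^ ((3:ℝ) - δ)) :=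
    Real.continuous_rpow_const (by linarith)
  have hsmall : ∀ s : ℝ, 0 ≤ s → s ≤ 1 → s ^ ((3:ℝ) - δ) ≤ s := by
    intro s hs0 hs1
    rcases eq_or_lt_of_le hs0 with h | h
    · rw [← h, Real.zero_rpow (by linarith)]
    · calc s ^ ((3:ℝ) - δ) ≤ s ^ (1:ℝ) :=
        Real.rpow_le_rpow_of_exponent_ge h hs1 hδ3
      _ = s := Real.rpow_one s
  have hbig : ∀ s : ℝ, 1 ≤ s → s ^ ((3:ℝ) - δ) ≤ s ^ 3 := by
    intro s hs1
    calc s ^ ((3:ℝ) - δ) ≤ s ^ ((3:ℝ)) :=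
      Real.rpow_le_rpow_of_exponent_le hs1 (by linarith)
    _ = s ^ (3:ℕ) := by
      rw [← Real.rpow_natCast s 3]; norm_num
  have h1b : (1:ℝ) ≤ b := by linarith
  rcases le_or_gt R 1 with hR1 | h1R
  · -- R ≤ 1
    have h8 : (∫ s in (0:ℝ)..R, s ^ ((3:ℝ) - δ) * A s) ≤ ∫ s in (0:ℝ)..R, s * A s := by
      apply intervalIntegral.integral_mono_on hR.le (hint _ hcr 0 R le_rfl hR.le)
        (hint _ hc1 0 R le_rfl hR.le)
      intro s hs
      exact mul_le_mul_of_nonneg_right (hsmall s hs.1 (le_trans hs.2 hR1)) (hA0 s hs.1)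
    have h9 : (∫ s in (0:ℝ)..R, s * A s) ≤ I := by
      rw [hIdef]; exact hext _ hc1 (fun s hs => hs) R b hR.le (le_trans hR1 h1b)
    have h10 : I ≤ (4 * c + 1) * I := by nlinarith
    have h11 : (0:ℝ) ≤ 4 * R ^ 2 * Hp := by positivity
    linarith
  · -- 1 < R
    have hsplitδ : (∫ s in (0:ℝ)..R, s ^ ((3:ℝ) - δ) * A s)
        = (∫ s in (0:ℝ)..1, s ^ ((3:ℝ) - δ) * A s)
          + ∫ s in (1:ℝ)..R, s ^ ((3:ℝ) - δ) * A s :=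
      (intervalIntegral.integral_add_adjacent_intervals
        (hint _ hcr 0 1 le_rfl zero_le_one) (hint _ hcr 1 R zero_le_one h1R.le)).symm
    have h8 : (∫ s in (0:ℝ)..1, s ^ ((3:ℝ) - δ) * A s) ≤ ∫ s in (0:ℝ)..1, s * A s := by
      apply intervalIntegral.integral_mono_on zero_le_one (hint _ hcr 0 1 le_rfl zero_le_one)
        (hint _ hc1 0 1 le_rfl zero_le_one)
      intro s hs
      exact mul_le_mul_of_nonneg_right (hsmall s hs.1 hs.2) (hA0 s hs.1)
    have h9 : (∫ s in (0:ℝ)..1, s * A s) ≤ I := by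
      rw [hIdef]; exact hext _ hc1 (fun s hs => hs) 1 b zero_le_one h1b
    have h10 : (∫ s in (1:ℝ)..R, s ^ ((3:ℝ) - δ) * A s) ≤ ∫ s in (1:ℝ)..R, s ^ 3 * A s := by
      apply intervalIntegral.integral_mono_on h1R.le (hint _ hcr 1 R zero_le_one h1R.le)
        (hint _ hc3 1 R zero_le_one h1R.le)
      intro s hs
      exact mul_le_mul_of_nonneg_right (hbig s hs.1) (hA0 s (le_trans zero_le_one hs.1))
    have h11 : (∫ s in (1:ℝ)..R, s ^ 3 * A s) ≤ ∫ s in (0:ℝ)..R, s ^ 3 * A s := by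
      have hadd := intervalIntegral.integral_add_adjacent_intervals
        (hint _ hc3 0 1 le_rfl zero_le_one) (hint _ hc3 1 R zero_le_one h1R.le)
      have hnn1 : 0 ≤ ∫ s in (0:ℝ)..1, s ^ 3 * A s :=
        hnn _ (fun s hs => by positivity) 0 1 le_rfl zero_le_one
      linarith
    have : (∫ s in (0:ℝ)..R, s ^ ((3:ℝ) - δ) * A s) ≤ I + (4 * c * I + 4 * R ^ 2 * Hp) := by
      rw [hsplitδ]; linarith
    linarith
end

section
/- There exists a constant C₂ > 0 depending only on m such that for every δ with 0 < δ < 1 and every R > 0, δ·R^{−δ}·∫₀^R s^{1+δ}·B(s) ds ≤ C₂·∫₀^{2√(m−2)} s·A(s) ds + 4·R²·H(R)⁺. -/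
open MeasureTheory Filter Set intervalIntegral

private lemma rpow_cont' (p : ℝ) (hp : 0 < p) : Continuous (fun s : ℝ => s ^ p) :=
  continuous_iff_continuousAt.2 fun x => Real.continuousAt_rpow_const x p (Or.inr hp.le)

private lemma ftc_key (m : ℕ) (A B : ℝ → ℝ)
    (hA : ContinuousOn A (Set.Ici 0)) (hB : ContinuousOn B (Set.Ici 0))
    (hH : ∀ r > (0:ℝ), HasDerivAt (fun s => A s - B s)
      (2 / r * B r + (r / 2 - (m : ℝ) / r) * A r) r)
    (δ : ℝ) (hδ : 0 ≤ δ) (R : ℝ) (hR : 0 < R) :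
    ∫ s in (0:ℝ)..R, s ^ ((1:ℝ) + δ) * ((2 + δ + s^2/2 - (m:ℝ)) * A s - δ * B s)
      = R ^ ((2:ℝ) + δ) * (A R - B R) := by
  have hsub : Set.Icc (0:ℝ) R ⊆ Set.Ici 0 := fun x hx => hx.1
  have hsub' : Set.uIcc (0:ℝ) R ⊆ Set.Ici 0 := by
    rw [Set.uIcc_of_le hR.le]; exact hsub
  have hcontInt : ContinuousOn
      (fun s : ℝ => s ^ ((1:ℝ) + δ) * ((2 + δ + s^2/2 - (m:ℝ)) * A s - δ * B s))
      (Set.Ici 0) := by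
    apply ((rpow_cont' _ (by linarith)).continuousOn).mul
    exact (((by fun_prop : Continuous (fun s : ℝ => 2 + δ + s^2/2 - (m:ℝ))).continuousOn.mul
      hA).sub (continuousOn_const.mul hB))
  have key := intervalIntegral.integral_eq_sub_of_hasDeriv_right_of_le hR.le
      (f := fun s : ℝ => s ^ ((2:ℝ) + δ) * (A s - B s))
      (((rpow_cont' _ (by linarith)).continuousOn).mul ((hA.mono hsub).sub (hB.mono hsub)))
      ?_ ((hcontInt.mono hsub').intervalIntegrable)
  · rw [key]
    simp only [Real.zero_rpow (by positivity : (2:ℝ) + δ ≠ 0)]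
    ring
  · intro x hx
    have hx0 : 0 < x := hx.1
    have d1 : HasDerivAt (fun s : ℝ => s ^ ((2:ℝ) + δ)) (((2:ℝ) + δ) * x ^ ((1:ℝ) + δ)) x := by
      have h := Real.hasDerivAt_rpow_const (x := x) (p := 2 + δ) (Or.inl hx0.ne')
      rw [show (1:ℝ) + δ = 2 + δ - 1 by ring]
      exact h
    have d2 := d1.mul (hH x hx0)
    have hx2 : x ^ ((2:ℝ) + δ) = x ^ ((1:ℝ) + δ) * x := by
      rw [show (2:ℝ) + δ = (1 + δ) + 1 by ring, Real.rpow_add_one hx0.ne']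
    have heq : ((2:ℝ) + δ) * x ^ ((1:ℝ) + δ) * (A x - B x)
        + x ^ ((2:ℝ) + δ) * (2 / x * B x + (x / 2 - (m:ℝ) / x) * A x)
        = x ^ ((1:ℝ) + δ) * ((2 + δ + x^2/2 - (m:ℝ)) * A x - δ * B x) := by
      rw [hx2]; field_simp; ring
    exact (heq ▸ d2).hasDerivWithinAt

set_option maxHeartbeats 1000000 in
theorem stmt_8 (m : ℕ) (hm : 3 ≤ m) (A B : ℝ → ℝ)
    (hA : ContinuousOn A (Set.Ici 0)) (hB : ContinuousOn B (Set.Ici 0))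
    (hA0 : ∀ r ≥ (0:ℝ), 0 ≤ A r) (hAB : ∀ r ≥ (0:ℝ), A r ≤ 2 * B r)
    (hH : ∀ r > (0:ℝ), HasDerivAt (fun s => A s - B s)
      (2 / r * B r + (r / 2 - (m : ℝ) / r) * A r) r) :
    ∃ C₂ > (0:ℝ), ∀ δ : ℝ, 0 < δ → δ < 1 → ∀ R > (0:ℝ),
      δ * R ^ (-δ) * (∫ s in (0:ℝ)..R, s ^ ((1:ℝ) + δ) * B s) ≤
        C₂ * (∫ s in (0:ℝ)..(2 * Real.sqrt ((m:ℝ) - 2)), s * A s) + 4 * R^2 * max (A R - B R) 0 := by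
  have hm3 : (3:ℝ) ≤ (m:ℝ) := by exact_mod_cast hm
  have hm2 : (1:ℝ) ≤ (m:ℝ) - 2 := by linarith
  set c : ℝ := 2 * Real.sqrt ((m:ℝ) - 2) with hcdef
  have hcsq : c ^ 2 = 4 * ((m:ℝ) - 2) := by
    rw [hcdef, mul_pow, Real.sq_sqrt (by linarith : (0:ℝ) ≤ (m:ℝ) - 2)]; ring
  have hcnn : 0 ≤ c := by positivity
  have hc2 : 2 ≤ c := by nlinarith
  have hc0 : (0:ℝ) < c := by linarith
  have hcle : c ≤ 2 * ((m:ℝ) - 2) := by nlinarith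
  refine ⟨4 * (m:ℝ)^2, by positivity, ?_⟩
  intro δ hδ0 hδ1 R hR
  -- basic continuity facts
  have hInt : ∀ (F : ℝ → ℝ), ContinuousOn F (Set.Ici 0) → ∀ a b : ℝ, 0 ≤ a → 0 ≤ b →
      IntervalIntegrable F volume a b := by
    intro F hF a b ha hb
    exact (hF.mono (fun x hx => Set.mem_Ici.2 (le_trans (le_min ha hb) hx.1))).intervalIntegrable
  have hrp1 : Continuous (fun s : ℝ => s ^ ((1:ℝ) + δ)) := rpow_cont' _ (by linarith)
  have hgC : ContinuousOn (fun s : ℝ => s ^ ((1:ℝ) + δ) * ((2 + δ + s^2/2 - (m:ℝ)) * A s))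
      (Set.Ici 0) := hrp1.continuousOn.mul
      ((by fun_prop : Continuous (fun s : ℝ => 2 + δ + s^2/2 - (m:ℝ))).continuousOn.mul hA)
  have hBC : ContinuousOn (fun s : ℝ => s ^ ((1:ℝ) + δ) * B s) (Set.Ici 0) :=
    hrp1.continuousOn.mul hB
  have hsAC : ContinuousOn (fun s : ℝ => s * A s) (Set.Ici 0) :=
    continuous_id.continuousOn.mul hA
  have hψC : ContinuousOn (fun s : ℝ => s * ((s^2/2 - ((m:ℝ) - 2)) * A s)) (Set.Ici 0) :=
    continuous_id.continuousOn.mul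
      ((by fun_prop : Continuous (fun s : ℝ => s^2/2 - ((m:ℝ) - 2))).continuousOn.mul hA)
  -- identity E1
  have E1 : δ * (∫ s in (0:ℝ)..R, s ^ ((1:ℝ) + δ) * B s)
      = (∫ s in (0:ℝ)..R, s ^ ((1:ℝ) + δ) * ((2 + δ + s^2/2 - (m:ℝ)) * A s))
        - R ^ ((2:ℝ) + δ) * (A R - B R) := by
    have hk := ftc_key m A B hA hB hH δ hδ0.le R hR
    have hfe : (fun s : ℝ => s ^ ((1:ℝ) + δ) * ((2 + δ + s^2/2 - (m:ℝ)) * A s - δ * B s))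
        = fun s : ℝ => (s ^ ((1:ℝ) + δ) * ((2 + δ + s^2/2 - (m:ℝ)) * A s))
          - δ * (s ^ ((1:ℝ) + δ) * B s) := by funext s; ring
    rw [hfe, intervalIntegral.integral_sub (hInt _ hgC 0 R le_rfl hR.le)
      ((hInt _ hBC 0 R le_rfl hR.le).const_mul δ),
      intervalIntegral.integral_const_mul] at hk
    linarith
  -- identity E0
  have E0 : ∀ r : ℝ, 0 < r → r ^ 2 * (A r - B r)
      = ∫ s in (0:ℝ)..r, s * ((s^2/2 - ((m:ℝ) - 2)) * A s) := by
    intro r hr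
    have hk := ftc_key m A B hA hB hH 0 le_rfl r hr
    have hfe : (fun s : ℝ => s ^ ((1:ℝ) + 0) * ((2 + 0 + s^2/2 - (m:ℝ)) * A s - 0 * B s))
        = fun s : ℝ => s * ((s^2/2 - ((m:ℝ) - 2)) * A s) := by
      funext s
      rw [show (1:ℝ) + 0 = 1 by norm_num, Real.rpow_one]; ring
    rw [hfe, show ((2:ℝ) + 0) = ((2:ℕ):ℝ) by norm_num, Real.rpow_natCast] at hk
    exact hk.symm
  -- nonnegativity of ∫ s A
  have hsAnn : ∀ a b : ℝ, 0 ≤ a → a ≤ b → 0 ≤ ∫ s in a..b, s * A s := by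
    intro a b ha hab
    exact intervalIntegral.integral_nonneg hab
      (fun u hu => mul_nonneg (le_trans ha hu.1) (hA0 u (le_trans ha hu.1)))
  have hI0 : 0 ≤ ∫ s in (0:ℝ)..c, s * A s := hsAnn 0 c le_rfl hcnn
  set I : ℝ := ∫ s in (0:ℝ)..c, s * A s with hIdef
  -- lower bound on ∫ ψ over [0,r] for r ≤ c : -(r²H(r)) ≤ (m-2) * ∫₀^r sA
  have Sb : ∀ r : ℝ, 0 < r → r ≤ c →
      -(r ^ 2 * (A r - B r)) ≤ ((m:ℝ) - 2) * ∫ s in (0:ℝ)..r, s * A s := by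
    intro r hr hrc
    rw [E0 r hr]
    have hmono : (∫ s in (0:ℝ)..r, (-((m:ℝ) - 2)) * (s * A s))
        ≤ ∫ s in (0:ℝ)..r, s * ((s^2/2 - ((m:ℝ) - 2)) * A s) := by
      apply intervalIntegral.integral_mono_on hr.le
        ((hInt _ hsAC 0 r le_rfl hr.le).const_mul _) (hInt _ hψC 0 r le_rfl hr.le)
      intro x hx
      have hx0 : 0 ≤ x := hx.1
      have hAx : 0 ≤ A x := hA0 x hx0
      nlinarith [mul_nonneg (mul_nonneg hx0 hx0) (mul_nonneg hx0 hAx)]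
    rw [intervalIntegral.integral_const_mul] at hmono
    linarith
  -- monotonicity: ∫₀^r sA ≤ I for r ≤ c
  have hMono : ∀ r : ℝ, 0 ≤ r → r ≤ c → (∫ s in (0:ℝ)..r, s * A s) ≤ I := by
    intro r hr hrc
    have := intervalIntegral.integral_add_adjacent_intervals
      (hInt _ hsAC 0 r le_rfl hr) (hInt _ hsAC r c hr hcnn)
    have h2 := hsAnn r c hr hrc
    rw [hIdef]; linarith
  have hRd0 : (0:ℝ) < R ^ (-δ) := Real.rpow_pos_of_pos hR _
  have hcancel : R ^ (-δ) * R ^ δ = 1 := by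
    rw [← Real.rpow_add hR]; norm_num
  have hpow2 : R ^ (-δ) * R ^ ((2:ℝ) + δ) = R ^ 2 := by
    rw [← Real.rpow_add hR, show -δ + ((2:ℝ) + δ) = ((2:ℕ):ℝ) by push_cast; ring,
      Real.rpow_natCast]
  have key2 : δ * R ^ (-δ) * (∫ s in (0:ℝ)..R, s ^ ((1:ℝ) + δ) * B s)
      = R ^ (-δ) * (∫ s in (0:ℝ)..R, s ^ ((1:ℝ) + δ) * ((2 + δ + s^2/2 - (m:ℝ)) * A s))
        - R ^ 2 * (A R - B R) := by
    calc δ * R ^ (-δ) * (∫ s in (0:ℝ)..R, s ^ ((1:ℝ) + δ) * B s)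
        = R ^ (-δ) * (δ * ∫ s in (0:ℝ)..R, s ^ ((1:ℝ) + δ) * B s) := by ring
      _ = R ^ (-δ) * ((∫ s in (0:ℝ)..R, s ^ ((1:ℝ) + δ) * ((2 + δ + s^2/2 - (m:ℝ)) * A s))
            - R ^ ((2:ℝ) + δ) * (A R - B R)) := by rw [E1]
      _ = R ^ (-δ) * (∫ s in (0:ℝ)..R, s ^ ((1:ℝ) + δ) * ((2 + δ + s^2/2 - (m:ℝ)) * A s))
            - (R ^ (-δ) * R ^ ((2:ℝ) + δ)) * (A R - B R) := by ring
      _ = _ := by rw [hpow2]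
  have hmaxnn : (0:ℝ) ≤ max (A R - B R) 0 := le_max_right _ _
  -- pointwise bound producer on [0,r] for r ≤ c
  have SA : ∀ r K : ℝ, 0 < r → r ≤ c → 0 ≤ K → (∀ s : ℝ, 0 ≤ s → s ≤ r → s ^ δ ≤ K) →
      (∫ s in (0:ℝ)..r, s ^ ((1:ℝ) + δ) * ((2 + δ + s^2/2 - (m:ℝ)) * A s))
        ≤ (((m:ℝ) - 1) * K) * ∫ s in (0:ℝ)..r, s * A s := by
    intro r K hr hrc hK hsK
    have hmono : (∫ s in (0:ℝ)..r, s ^ ((1:ℝ) + δ) * ((2 + δ + s^2/2 - (m:ℝ)) * A s))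
        ≤ ∫ s in (0:ℝ)..r, (((m:ℝ) - 1) * K) * (s * A s) := by
      apply intervalIntegral.integral_mono_on hr.le (hInt _ hgC 0 r le_rfl hr.le)
        ((hInt _ hsAC 0 r le_rfl hr.le).const_mul _)
      intro x hx
      have hx0 : 0 ≤ x := hx.1
      have hAx : 0 ≤ A x := hA0 x hx0
      have h1 : x ^ ((1:ℝ) + δ) = x * x ^ δ := by
        rw [Real.rpow_add' hx0 (by linarith : (1:ℝ) + δ ≠ 0), Real.rpow_one]
      have h2 : x ^ δ ≤ K := hsK x hx0 hx.2
      have h3 : 2 + δ + x^2/2 - (m:ℝ) ≤ (m:ℝ) - 1 := by nlinarith [hx.2.trans hrc]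
      have h4 : 0 ≤ x ^ δ := Real.rpow_nonneg hx0 _
      rw [h1]
      rcases le_or_gt (2 + δ + x^2/2 - (m:ℝ)) 0 with hf | hf
      · have hL : x * x ^ δ * ((2 + δ + x^2/2 - (m:ℝ)) * A x) ≤ 0 :=
          mul_nonpos_of_nonneg_of_nonpos (mul_nonneg hx0 h4)
            (mul_nonpos_of_nonpos_of_nonneg hf hAx)
        have hRn : 0 ≤ (((m:ℝ) - 1) * K) * (x * A x) :=
          mul_nonneg (mul_nonneg (by linarith) hK) (mul_nonneg hx0 hAx)
        linarith
      · have : x * x ^ δ * ((2 + δ + x^2/2 - (m:ℝ)) * A x)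
            ≤ (x * K) * (((m:ℝ) - 1) * A x) := by
          apply mul_le_mul (mul_le_mul_of_nonneg_left h2 hx0)
            (mul_le_mul_of_nonneg_right h3 hAx)
            (mul_nonneg hf.le hAx) (mul_nonneg hx0 hK)
        calc x * x ^ δ * ((2 + δ + x^2/2 - (m:ℝ)) * A x)
            ≤ (x * K) * (((m:ℝ) - 1) * A x) := this
          _ = (((m:ℝ) - 1) * K) * (x * A x) := by ring
    rw [intervalIntegral.integral_const_mul] at hmono
    exact hmono
  rcases le_or_gt R c with hRc | hcR
  · -- Case R ≤ c
    have hRδ : (0:ℝ) < R ^ δ := Real.rpow_pos_of_pos hR _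
    have Sa := SA R (R ^ δ) hR hRc hRδ.le
      (fun s hs0 hsR => Real.rpow_le_rpow hs0 hsR hδ0.le)
    have SbR := Sb R hR hRc
    have hMR := hMono R hR.le hRc
    have hMR0 := hsAnn 0 R le_rfl hR.le
    have Sa' : R ^ (-δ) * (∫ s in (0:ℝ)..R, s ^ ((1:ℝ) + δ) * ((2 + δ + s^2/2 - (m:ℝ)) * A s))
        ≤ ((m:ℝ) - 1) * ∫ s in (0:ℝ)..R, s * A s := by
      calc R ^ (-δ) * (∫ s in (0:ℝ)..R, s ^ ((1:ℝ) + δ) * ((2 + δ + s^2/2 - (m:ℝ)) * A s))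
          ≤ R ^ (-δ) * ((((m:ℝ) - 1) * R ^ δ) * ∫ s in (0:ℝ)..R, s * A s) :=
            mul_le_mul_of_nonneg_left Sa hRd0.le
        _ = (R ^ (-δ) * R ^ δ) * (((m:ℝ) - 1) * ∫ s in (0:ℝ)..R, s * A s) := by ring
        _ = ((m:ℝ) - 1) * ∫ s in (0:ℝ)..R, s * A s := by rw [hcancel, one_mul]
    rw [key2]
    have hfin : ((m:ℝ) - 1) * (∫ s in (0:ℝ)..R, s * A s)
        + ((m:ℝ) - 2) * (∫ s in (0:ℝ)..R, s * A s) ≤ 4 * (m:ℝ)^2 * I := by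
      nlinarith [mul_le_mul_of_nonneg_left hMR (show (0:ℝ) ≤ 2 * (m:ℝ) - 3 by linarith),
        mul_nonneg (show (0:ℝ) ≤ 4 * (m:ℝ)^2 - (2 * (m:ℝ) - 3) by nlinarith) hI0]
    nlinarith [mul_nonneg (mul_nonneg (by norm_num : (0:ℝ) ≤ 4) (sq_nonneg R)) hmaxnn]
  · -- Case c < R
    have hRδ : (0:ℝ) < R ^ δ := Real.rpow_pos_of_pos hR _
    have hR1 : (1:ℝ) ≤ R := by linarith
    have hRd1 : R ^ (-δ) ≤ 1 := Real.rpow_le_one_of_one_le_of_nonpos hR1 (by linarith)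
    have hcδ : ∀ s : ℝ, 0 ≤ s → s ≤ c → s ^ δ ≤ c := fun s hs0 hsc =>
      le_trans (Real.rpow_le_rpow hs0 hsc hδ0.le)
        (by
          calc c ^ δ ≤ c ^ (1:ℝ) := Real.rpow_le_rpow_of_exponent_le (by linarith) hδ1.le
            _ = c := Real.rpow_one c)
    have Sa2 := SA c c hc0 le_rfl hcnn hcδ
    -- split ∫₀^R g = ∫₀^c g + ∫_c^R g
    have hsplit := intervalIntegral.integral_add_adjacent_intervals
      (hInt _ hgC 0 c le_rfl hcnn) (hInt _ hgC c R hcnn hR.le)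
    -- bound on [c, R]
    have Sb2 : (∫ s in c..R, s ^ ((1:ℝ) + δ) * ((2 + δ + s^2/2 - (m:ℝ)) * A s))
        ≤ (2 * R ^ δ) * ((R ^ 2 * (A R - B R)) - (c ^ 2 * (A c - B c))) := by
      have hmono : (∫ s in c..R, s ^ ((1:ℝ) + δ) * ((2 + δ + s^2/2 - (m:ℝ)) * A s))
          ≤ ∫ s in c..R, (2 * R ^ δ) * (s * ((s^2/2 - ((m:ℝ) - 2)) * A s)) := by
        apply intervalIntegral.integral_mono_on hcR.le (hInt _ hgC c R hcnn hR.le)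
          ((hInt _ hψC c R hcnn hR.le).const_mul _)
        intro x hx
        have hx0 : (0:ℝ) ≤ x := le_trans hcnn hx.1
        have hAx : 0 ≤ A x := hA0 x hx0
        have h1 : x ^ ((1:ℝ) + δ) = x * x ^ δ := by
          rw [Real.rpow_add' hx0 (by linarith : (1:ℝ) + δ ≠ 0), Real.rpow_one]
        have h2 : x ^ δ ≤ R ^ δ := Real.rpow_le_rpow hx0 hx.2 hδ0.le
        have h4 : 0 ≤ x ^ δ := Real.rpow_nonneg hx0 _
        have hcx : c ≤ x := hx.1
        have hu : (m:ℝ) - 2 ≤ x^2/4 := by nlinarith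
        have hu1 : (1:ℝ) ≤ x^2/2 - ((m:ℝ) - 2) := by nlinarith
        have hf2 : 2 + δ + x^2/2 - (m:ℝ) ≤ 2 * (x^2/2 - ((m:ℝ) - 2)) := by nlinarith
        have : x * x ^ δ * ((2 + δ + x^2/2 - (m:ℝ)) * A x)
            ≤ (x * R ^ δ) * ((2 * (x^2/2 - ((m:ℝ) - 2))) * A x) := by
          apply mul_le_mul (mul_le_mul_of_nonneg_left h2 hx0)
            (mul_le_mul_of_nonneg_right hf2 hAx)
            (mul_nonneg (by nlinarith) hAx) (mul_nonneg hx0 hRδ.le)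
        calc x ^ ((1:ℝ) + δ) * ((2 + δ + x^2/2 - (m:ℝ)) * A x)
            = x * x ^ δ * ((2 + δ + x^2/2 - (m:ℝ)) * A x) := by rw [h1]
          _ ≤ (x * R ^ δ) * ((2 * (x^2/2 - ((m:ℝ) - 2))) * A x) := this
          _ = (2 * R ^ δ) * (x * ((x^2/2 - ((m:ℝ) - 2)) * A x)) := by ring
      have hψsplit := intervalIntegral.integral_add_adjacent_intervals
        (hInt _ hψC 0 c le_rfl hcnn) (hInt _ hψC c R hcnn hR.le)
      rw [intervalIntegral.integral_const_mul] at hmono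
      rw [E0 R hR, E0 c hc0]
      calc (∫ s in c..R, s ^ ((1:ℝ) + δ) * ((2 + δ + s^2/2 - (m:ℝ)) * A s))
          ≤ (2 * R ^ δ) * ∫ s in c..R, s * ((s^2/2 - ((m:ℝ) - 2)) * A s) := hmono
        _ = (2 * R ^ δ) * ((∫ s in (0:ℝ)..R, s * ((s^2/2 - ((m:ℝ) - 2)) * A s))
              - ∫ s in (0:ℝ)..c, s * ((s^2/2 - ((m:ℝ) - 2)) * A s)) := by
            rw [← hψsplit]; ring
    have Sc2 := Sb c hc0 le_rfl
    -- assemble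
    rw [key2, ← hsplit]
    have T1 : R ^ (-δ) * (∫ s in (0:ℝ)..c, s ^ ((1:ℝ) + δ) * ((2 + δ + s^2/2 - (m:ℝ)) * A s))
        ≤ ((m:ℝ) - 1) * c * I := by
      have hK : (0:ℝ) ≤ ((m:ℝ) - 1) * c * I :=
        mul_nonneg (mul_nonneg (by linarith) hcnn) hI0
      calc R ^ (-δ) * (∫ s in (0:ℝ)..c, s ^ ((1:ℝ) + δ) * ((2 + δ + s^2/2 - (m:ℝ)) * A s))
          ≤ R ^ (-δ) * (((m:ℝ) - 1) * c * I) := by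
            apply mul_le_mul_of_nonneg_left _ hRd0.le
            calc (∫ s in (0:ℝ)..c, s ^ ((1:ℝ) + δ) * ((2 + δ + s^2/2 - (m:ℝ)) * A s))
                ≤ (((m:ℝ) - 1) * c) * ∫ s in (0:ℝ)..c, s * A s := Sa2
              _ = ((m:ℝ) - 1) * c * I := by rw [hIdef]
        _ ≤ 1 * (((m:ℝ) - 1) * c * I) := mul_le_mul_of_nonneg_right hRd1 hK
        _ = ((m:ℝ) - 1) * c * I := one_mul _
    have T2 : R ^ (-δ) * (∫ s in c..R, s ^ ((1:ℝ) + δ) * ((2 + δ + s^2/2 - (m:ℝ)) * A s))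
        ≤ 2 * ((R ^ 2 * (A R - B R)) - (c ^ 2 * (A c - B c))) := by
      calc R ^ (-δ) * (∫ s in c..R, s ^ ((1:ℝ) + δ) * ((2 + δ + s^2/2 - (m:ℝ)) * A s))
          ≤ R ^ (-δ) * ((2 * R ^ δ) * ((R ^ 2 * (A R - B R)) - (c ^ 2 * (A c - B c)))) :=
            mul_le_mul_of_nonneg_left Sb2 hRd0.le
        _ = (R ^ (-δ) * R ^ δ) * (2 * ((R ^ 2 * (A R - B R)) - (c ^ 2 * (A c - B c)))) := by
            ring
        _ = _ := by rw [hcancel, one_mul]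
    have hmaxb : R ^ 2 * (A R - B R) ≤ R ^ 2 * max (A R - B R) 0 :=
      mul_le_mul_of_nonneg_left (le_max_left _ _) (sq_nonneg R)
    have hCoef : (((m:ℝ) - 1) * c + 2 * ((m:ℝ) - 2)) * I ≤ 4 * (m:ℝ)^2 * I := by
      apply mul_le_mul_of_nonneg_right _ hI0
      nlinarith [mul_le_mul_of_nonneg_left hcle (show (0:ℝ) ≤ (m:ℝ) - 1 by linarith)]
    have hmaxnn4 : (0:ℝ) ≤ 3 * (R ^ 2 * max (A R - B R) 0) :=
      by positivity
    have hdist : R ^ (-δ) * ((∫ s in (0:ℝ)..c, s ^ ((1:ℝ) + δ) * ((2 + δ + s^2/2 - (m:ℝ)) * A s))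
        + ∫ s in c..R, s ^ ((1:ℝ) + δ) * ((2 + δ + s^2/2 - (m:ℝ)) * A s))
        = R ^ (-δ) * (∫ s in (0:ℝ)..c, s ^ ((1:ℝ) + δ) * ((2 + δ + s^2/2 - (m:ℝ)) * A s))
          + R ^ (-δ) * ∫ s in c..R, s ^ ((1:ℝ) + δ) * ((2 + δ + s^2/2 - (m:ℝ)) * A s) := by
      ring
    rw [hdist]
    linarith [T1, T2, Sc2, hmaxb, hCoef, hmaxnn4]
end

section
/- There exists a constant C₂ > 0 depending only on m such that for every R > 0, R^{2−m}·∫₀^R s^{m−1}·B(s) ds ≤ C₂·∫₀^{2√(m−2)} s·A(s) ds + 4·R²·H(R)⁺. -/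
open MeasureTheory Filter Set intervalIntegral

theorem stmt_9 (m : ℕ) (hm : 3 ≤ m) (A B : ℝ → ℝ)
    (hA : ContinuousOn A (Set.Ici 0)) (hB : ContinuousOn B (Set.Ici 0))
    (hA0 : ∀ r ≥ (0:ℝ), 0 ≤ A r) (hAB : ∀ r ≥ (0:ℝ), A r ≤ 2 * B r)
    (hH : ∀ r > (0:ℝ), HasDerivAt (fun s => A s - B s)
      (2 / r * B r + (r / 2 - (m : ℝ) / r) * A r) r) :
    ∃ C₂ > (0:ℝ), ∀ R > (0:ℝ),
      R ^ ((2:ℤ) - m) * (∫ s in (0:ℝ)..R, s ^ (m - 1) * B s) ≤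
        C₂ * (∫ s in (0:ℝ)..(2 * Real.sqrt ((m:ℝ) - 2)), s * A s) + 4 * R^2 * max (A R - B R) 0 := by
  obtain ⟨k, rfl⟩ : ∃ k, m = k + 3 := ⟨m - 3, by omega⟩
  clear hm
  set c : ℝ := (↑(k+3) : ℝ) - 2 with hc_def
  have hc1 : (1:ℝ) ≤ c := by
    rw [hc_def]; push_cast; linarith [Nat.cast_nonneg (α := ℝ) k]
  have hc0 : (0:ℝ) < c := by linarith
  set r₀ : ℝ := 2 * Real.sqrt c with hr0_def
  have hr0pos : 0 < r₀ := by
    have := Real.sqrt_pos.mpr hc0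
    positivity
  have hr0sq : r₀ ^ 2 = 4 * c := by
    rw [hr0_def, mul_pow, Real.sq_sqrt hc0.le]; ring
  clear_value c r₀
  -- generic integrability
  have hci : ∀ (f : ℝ → ℝ), ContinuousOn f (Ici 0) → ∀ a b : ℝ, 0 ≤ a → 0 ≤ b →
      IntervalIntegrable f volume a b := by
    intro f hf a b ha hb
    apply ContinuousOn.intervalIntegrable
    apply hf.mono
    intro x hx
    have h1 : min a b ≤ x := hx.1
    have : (0:ℝ) ≤ min a b := le_min ha hb
    exact le_trans this h1
  -- continuity of the integrand combos
  have cA1 : ContinuousOn (fun s : ℝ => s * A s) (Ici 0) := (continuous_id.continuousOn).mul hA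
  have cA2 : ContinuousOn (fun s : ℝ => s * (s^2/2 - c) * A s) (Ici 0) :=
    (Continuous.continuousOn (by continuity)).mul hA
  have cA3 : ContinuousOn (fun s : ℝ => s ^ (k+4) * A s) (Ici 0) :=
    ((continuous_pow (k+4)).continuousOn).mul hA
  have cB1 : ContinuousOn (fun s : ℝ => s ^ (k+2) * B s) (Ici 0) :=
    ((continuous_pow (k+2)).continuousOn).mul hB
  have cB2 : ContinuousOn (fun s : ℝ => (2 - (↑(k+3):ℝ)) * s ^ (k+2) * B s) (Ici 0) :=
    ((continuous_const.mul (continuous_pow (k+2))).continuousOn).mul hB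
  have cD : ContinuousOn (fun s : ℝ =>
      (2 - (↑(k+3):ℝ)) * s ^ (k+2) * B s + s ^ (k+4) * A s / 2) (Ici 0) :=
    cB2.add (cA3.div_const 2)
  -- L1 : R² H(R) = ∫₀ᴿ s (s²/2 - c) A
  have L1 : ∀ R > (0:ℝ), R^2 * (A R - B R) = ∫ s in (0:ℝ)..R, s * (s^2/2 - c) * A s := by
    intro R hR
    have hcont : ContinuousOn (fun s : ℝ => s^2 * (A s - B s)) (Icc 0 R) := by
      apply ContinuousOn.mono _ (Icc_subset_Ici_self)
      exact ((continuous_pow 2).continuousOn).mul (hA.sub hB)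
    have hderiv : ∀ s ∈ Ioo (0:ℝ) R, HasDerivWithinAt (fun s : ℝ => s^2 * (A s - B s))
        (s * (s^2/2 - c) * A s) (Ioi s) s := by
      intro s hs
      have hs0 : 0 < s := hs.1
      have h1 := (hasDerivAt_pow 2 s).mul (hH s hs0)
      have heq : s * (s^2/2 - c) * A s
          = (↑2 : ℝ) * s ^ (2-1) * (A s - B s) + s^2 * (2 / s * B s + (s/2 - (↑(k+3):ℝ)/s) * A s) := by
        have hs' : s ≠ 0 := ne_of_gt hs0
        field_simp
        push_cast [hc_def]
        ring
      rw [heq]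
      exact h1.hasDerivWithinAt
    have hint := hci _ cA2 0 R le_rfl hR.le
    have := intervalIntegral.integral_eq_sub_of_hasDeriv_right_of_le hR.le hcont hderiv hint
    rw [this]; norm_num
  -- L2 : Rᵐ H(R) = ∫₀ᴿ ((2-m) s^{m-1} B + s^{m+1} A / 2)
  have L2 : ∀ R > (0:ℝ), R^(k+3) * (A R - B R)
      = ∫ s in (0:ℝ)..R, ((2 - (↑(k+3):ℝ)) * s ^ (k+2) * B s + s ^ (k+4) * A s / 2) := by
    intro R hR
    have hcont : ContinuousOn (fun s : ℝ => s^(k+3) * (A s - B s)) (Icc 0 R) := by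
      apply ContinuousOn.mono _ (Icc_subset_Ici_self)
      exact ((continuous_pow (k+3)).continuousOn).mul (hA.sub hB)
    have hderiv : ∀ s ∈ Ioo (0:ℝ) R, HasDerivWithinAt (fun s : ℝ => s^(k+3) * (A s - B s))
        ((2 - (↑(k+3):ℝ)) * s ^ (k+2) * B s + s ^ (k+4) * A s / 2) (Ioi s) s := by
      intro s hs
      have hs0 : 0 < s := hs.1
      have h1 := (hasDerivAt_pow (k+3) s).mul (hH s hs0)
      have heq : (2 - (↑(k+3):ℝ)) * s ^ (k+2) * B s + s ^ (k+4) * A s / 2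
          = (↑(k+3) : ℝ) * s ^ (k+3-1) * (A s - B s)
            + s^(k+3) * (2 / s * B s + (s/2 - (↑(k+3):ℝ)/s) * A s) := by
        have hs' : s ≠ 0 := ne_of_gt hs0
        have h2 : k + 3 - 1 = k + 2 := rfl
        rw [h2]
        field_simp
        push_cast
        ring
      rw [heq]
      exact h1.hasDerivWithinAt
    have hint := hci _ cD 0 R le_rfl hR.le
    have := intervalIntegral.integral_eq_sub_of_hasDeriv_right_of_le hR.le hcont hderiv hint
    rw [this]; norm_num
  refine ⟨5, by norm_num, ?_⟩
  intro R hR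
  have hsub : k + 3 - 1 = k + 2 := rfl
  rw [hsub]
  set K : ℝ := ∫ s in (0:ℝ)..r₀, s * A s with hK_def
  set M : ℝ := max (A R - B R) 0 with hM_def
  have hM0 : 0 ≤ M := le_max_right _ _
  have hHM : A R - B R ≤ M := le_max_left _ _
  have hK0 : 0 ≤ K := by
    rw [hK_def]
    apply intervalIntegral.integral_nonneg hr0pos.le
    intro u hu
    exact mul_nonneg hu.1 (hA0 u hu.1)
  set E : ℝ := ∫ s in (0:ℝ)..R, s ^ (k+2) * B s with hE_def
  set P : ℝ := ∫ s in (0:ℝ)..R, s ^ (k+4) * A s with hP_def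
  clear_value K M E P
  have hcm : (2 - (↑(k+3):ℝ)) = -c := by rw [hc_def]; ring
  -- identity : c * E = P/2 - R^m H(R)
  have hIdent : c * E = P / 2 - R^(k+3) * (A R - B R) := by
    have h1 := L2 R hR
    have h2 : (∫ s in (0:ℝ)..R, ((2 - (↑(k+3):ℝ)) * s ^ (k+2) * B s + s ^ (k+4) * A s / 2))
        = (2 - (↑(k+3):ℝ)) * (∫ s in (0:ℝ)..R, s ^ (k+2) * B s)
          + (∫ s in (0:ℝ)..R, s ^ (k+4) * A s) / 2 := by
      rw [intervalIntegral.integral_add (hci _ cB2 0 R le_rfl hR.le)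
        ((hci _ cA3 0 R le_rfl hR.le).div_const 2)]
      congr 1
      · simp only [mul_assoc]
        rw [intervalIntegral.integral_const_mul]
      · rw [intervalIntegral.integral_div]
    rw [h2, hcm, ← hE_def, ← hP_def] at h1
    linarith
  -- goal reduction: clear the zpow
  have hRm : (0:ℝ) < R^(k+3) := pow_pos hR _
  have hzp : R ^ ((2:ℤ) - (↑(k+3):ℕ)) = R^2 / R^(k+3) := by
    rw [zpow_sub₀ (ne_of_gt hR), zpow_natCast, show (2:ℤ) = ((2:ℕ):ℤ) from rfl, zpow_natCast]
  rw [hzp, div_mul_eq_mul_div, div_le_iff₀ hRm]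
  show R^2 * E ≤ (5 * K + 4 * R^2 * M) * R^(k+3)
  have hL1R := L1 R hR
  have hKR : 0 ≤ K * R^(k+3) := mul_nonneg hK0 hRm.le
  have hMR : 0 ≤ R^2 * M * R^(k+3) := mul_nonneg (mul_nonneg (sq_nonneg R) hM0) hRm.le
  rcases le_or_gt R r₀ with hcase | hcase
  · -- Case R ≤ r₀
    have hR4c : R^2 ≤ 4*c := by
      have h := pow_le_pow_left₀ hR.le hcase 2
      rw [hr0sq] at h; exact h
    have hstep2 : (∫ s in (0:ℝ)..R, s * A s) ≤ K := by
      have hsplit := intervalIntegral.integral_add_adjacent_intervals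
        (hci _ cA1 0 R le_rfl hR.le) (hci _ cA1 R r₀ hR.le hr0pos.le)
      have hpos : 0 ≤ ∫ s in R..r₀, s * A s := by
        apply intervalIntegral.integral_nonneg hcase
        intro u hu
        have hu0 : 0 ≤ u := le_trans hR.le hu.1
        exact mul_nonneg hu0 (hA0 u hu0)
      rw [hK_def, ← hsplit]
      linarith
    -- P ≤ R^(k+3) * K
    have hPa : P ≤ R^(k+3) * K := by
      have step1 : (∫ s in (0:ℝ)..R, s ^ (k+4) * A s)
          ≤ ∫ s in (0:ℝ)..R, R^(k+3) * (s * A s) := by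
        apply intervalIntegral.integral_mono_on hR.le (hci _ cA3 0 R le_rfl hR.le)
          ((hci _ cA1 0 R le_rfl hR.le).const_mul _)
        intro s hs
        have hs0 : 0 ≤ s := hs.1
        calc s^(k+4) * A s = s^(k+3) * (s * A s) := by ring
          _ ≤ R^(k+3) * (s * A s) :=
            mul_le_mul_of_nonneg_right (pow_le_pow_left₀ hs0 hs.2 _)
              (mul_nonneg hs0 (hA0 s hs0))
      rw [intervalIntegral.integral_const_mul] at step1
      rw [hP_def]
      calc (∫ s in (0:ℝ)..R, s ^ (k+4) * A s)
          ≤ R^(k+3) * ∫ s in (0:ℝ)..R, s * A s := step1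
        _ ≤ R^(k+3) * K := mul_le_mul_of_nonneg_left hstep2 hRm.le
    -- R² H(R) ≥ -c K
    have hHb : -(c*K) ≤ R^2 * (A R - B R) := by
      rw [hL1R]
      have step1 : (∫ s in (0:ℝ)..R, -c * (s * A s)) ≤ ∫ s in (0:ℝ)..R, s * (s^2/2 - c) * A s := by
        apply intervalIntegral.integral_mono_on hR.le
          ((hci _ cA1 0 R le_rfl hR.le).const_mul _) (hci _ cA2 0 R le_rfl hR.le)
        intro s hs
        have hs0 : 0 ≤ s := hs.1
        have key : 0 ≤ s^3 * A s := mul_nonneg (pow_nonneg hs0 3) (hA0 s hs0)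
        linarith only [key]
      rw [intervalIntegral.integral_const_mul] at step1
      linarith only [step1, mul_le_mul_of_nonneg_left hstep2 hc0.le]
    have hHb' : -(R^(k+3) * (A R - B R)) ≤ R^(k+1) * (c * K) := by
      rw [show R^(k+3) = R^(k+1) * R^2 from by ring]
      have h := mul_le_mul_of_nonneg_left hHb (pow_nonneg hR.le (k+1))
      linarith only [h]
    have h5 : c * E ≤ R^(k+3) * K / 2 + R^(k+1) * (c * K) := by
      linarith only [hIdent, hPa, hHb']
    have h6 : c * (R^2 * E) ≤ c * ((5 * K + 4 * R^2 * M) * R^(k+3)) := by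
      calc c * (R^2 * E) = R^2 * (c * E) := by ring
        _ ≤ R^2 * (R^(k+3) * K / 2 + R^(k+1) * (c * K)) :=
            mul_le_mul_of_nonneg_left h5 (sq_nonneg R)
        _ = R^2 * (R^(k+3) * K) / 2 + c * (K * R^(k+3)) := by ring
        _ ≤ 4*c * (R^(k+3) * K) / 2 + c * (K * R^(k+3)) := by
            have : R^2 * (R^(k+3) * K) ≤ 4*c * (R^(k+3) * K) :=
              mul_le_mul_of_nonneg_right hR4c (mul_nonneg hRm.le hK0)
            linarith
        _ = 3 * (c * (K * R^(k+3))) := by ring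
        _ ≤ c * ((5 * K + 4 * R^2 * M) * R^(k+3)) := by
            linarith only [mul_nonneg hc0.le hKR, mul_nonneg hc0.le hMR]
    exact le_of_mul_le_mul_left h6 hc0
  · -- Case r₀ < R
    have iA1_0r := hci _ cA1 0 r₀ le_rfl hr0pos.le
    have iA2_0r := hci _ cA2 0 r₀ le_rfl hr0pos.le
    have iA2_rR := hci _ cA2 r₀ R hr0pos.le hR.le
    have iA3_0r := hci _ cA3 0 r₀ le_rfl hr0pos.le
    have iA3_rR := hci _ cA3 r₀ R hr0pos.le hR.le
    set P₁ : ℝ := ∫ s in (0:ℝ)..r₀, s^(k+4) * A s with hP1_def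
    set P₂ : ℝ := ∫ s in r₀..R, s^(k+4) * A s with hP2_def
    set J₀ : ℝ := ∫ s in (0:ℝ)..r₀, s * (s^2/2 - c) * A s with hJ0_def
    set J : ℝ := ∫ s in r₀..R, s * (s^2/2 - c) * A s with hJ_def
    clear_value P₁ P₂ J₀ J
    have hPsplit : P = P₁ + P₂ := by
      rw [hP_def, hP1_def, hP2_def]
      exact (intervalIntegral.integral_add_adjacent_intervals iA3_0r iA3_rR).symm
    have hJsplit : R^2 * (A R - B R) = J₀ + J := by
      rw [hL1R, hJ0_def, hJ_def]
      exact (intervalIntegral.integral_add_adjacent_intervals iA2_0r iA2_rR).symm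
    have hP1 : P₁ ≤ r₀^(k+3) * K := by
      have step1 : (∫ s in (0:ℝ)..r₀, s^(k+4) * A s)
          ≤ ∫ s in (0:ℝ)..r₀, r₀^(k+3) * (s * A s) := by
        apply intervalIntegral.integral_mono_on hr0pos.le iA3_0r (iA1_0r.const_mul _)
        intro s hs
        have hs0 : 0 ≤ s := hs.1
        calc s^(k+4) * A s = s^(k+3) * (s * A s) := by ring
          _ ≤ r₀^(k+3) * (s * A s) :=
            mul_le_mul_of_nonneg_right (pow_le_pow_left₀ hs0 hs.2 _)
              (mul_nonneg hs0 (hA0 s hs0))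
      rw [intervalIntegral.integral_const_mul] at step1
      rw [hP1_def, hK_def]
      exact step1
    have hJ0 : -(c*K) ≤ J₀ := by
      have step1 : (∫ s in (0:ℝ)..r₀, -c * (s * A s))
          ≤ ∫ s in (0:ℝ)..r₀, s * (s^2/2 - c) * A s := by
        apply intervalIntegral.integral_mono_on hr0pos.le (iA1_0r.const_mul _) iA2_0r
        intro s hs
        have hs0 : 0 ≤ s := hs.1
        have key : 0 ≤ s^3 * A s := mul_nonneg (pow_nonneg hs0 3) (hA0 s hs0)
        linarith only [key]
      rw [intervalIntegral.integral_const_mul] at step1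
      rw [hJ0_def, hK_def]
      linarith only [step1]
    have hJpos : 0 ≤ J := by
      rw [hJ_def]
      apply intervalIntegral.integral_nonneg hcase.le
      intro s hs
      have hs0 : 0 ≤ s := le_trans hr0pos.le hs.1
      have hsq : 4*c ≤ s^2 := by
        have := pow_le_pow_left₀ hr0pos.le hs.1 2
        rw [hr0sq] at this; exact this
      have : (0:ℝ) ≤ s^2/2 - c := by linarith
      exact mul_nonneg (mul_nonneg hs0 this) (hA0 s hs0)
    have hP2 : P₂ ≤ 4 * R^(k+1) * J := by
      have step1 : (∫ s in r₀..R, s^(k+4) * A s)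
          ≤ ∫ s in r₀..R, 4 * R^(k+1) * (s * (s^2/2 - c) * A s) := by
        apply intervalIntegral.integral_mono_on hcase.le iA3_rR (iA2_rR.const_mul _)
        intro s hs
        have hs0 : 0 ≤ s := le_trans hr0pos.le hs.1
        have hA0s := hA0 s hs0
        have hsq : 4*c ≤ s^2 := by
          have := pow_le_pow_left₀ hr0pos.le hs.1 2
          rw [hr0sq] at this; exact this
        have h1 : s^(k+1) ≤ R^(k+1) := pow_le_pow_left₀ hs0 hs.2 _
        have h2 : s^3 * A s ≤ 4 * (s * (s^2/2 - c) * A s) := by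
          have key : 0 ≤ (s^2 - 4*c) * s * A s :=
            mul_nonneg (mul_nonneg (by linarith only [hsq] : (0:ℝ) ≤ s^2 - 4*c) hs0) hA0s
          linarith only [key]
        calc s^(k+4) * A s = s^(k+1) * (s^3 * A s) := by ring
          _ ≤ R^(k+1) * (s^3 * A s) :=
            mul_le_mul_of_nonneg_right h1 (mul_nonneg (pow_nonneg hs0 3) hA0s)
          _ ≤ R^(k+1) * (4 * (s * (s^2/2 - c) * A s)) :=
            mul_le_mul_of_nonneg_left h2 (pow_nonneg hR.le _)
          _ = 4 * R^(k+1) * (s * (s^2/2 - c) * A s) := by ring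
      rw [intervalIntegral.integral_const_mul] at step1
      rw [hP2_def, hJ_def]
      exact step1
    have hJle : J ≤ R^2 * M + c * K := by
      have h := mul_le_mul_of_nonneg_left hHM (sq_nonneg R)
      linarith only [h, hJsplit, hJ0]
    have hHb2 : -(R^(k+3) * (A R - B R)) ≤ R^(k+1) * (c * K) := by
      have hR2H : -(c*K) ≤ R^2 * (A R - B R) := by
        linarith only [hJsplit, hJ0, hJpos]
      rw [show R^(k+3) = R^(k+1) * R^2 from by ring]
      have h := mul_le_mul_of_nonneg_left hR2H (pow_nonneg hR.le (k+1))
      linarith only [h]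
    have hr0k : r₀^(k+3) ≤ R^(k+1) * (4*c) := by
      have h1 : r₀^(k+1) ≤ R^(k+1) := pow_le_pow_left₀ hr0pos.le hcase.le _
      calc r₀^(k+3) = r₀^(k+1) * r₀^2 := by ring
        _ = r₀^(k+1) * (4*c) := by rw [hr0sq]
        _ ≤ R^(k+1) * (4*c) := mul_le_mul_of_nonneg_right h1 (by positivity)
    have t1 : P₁ ≤ R^(k+1) * (4*c) * K :=
      le_trans hP1 (mul_le_mul_of_nonneg_right hr0k hK0)
    have t2 : P₂ ≤ 4 * R^(k+1) * (R^2 * M + c * K) :=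
      le_trans hP2 (mul_le_mul_of_nonneg_left hJle (by positivity))
    have h5 : c * E ≤ R^(k+1) * (5 * (c * K) + 2 * (R^2 * M)) := by
      linarith only [hIdent, hPsplit, hHb2, t1, t2]
    have h6 : c * (R^2 * E) ≤ c * ((5 * K + 4 * R^2 * M) * R^(k+3)) := by
      calc c * (R^2 * E) = R^2 * (c * E) := by ring
        _ ≤ R^2 * (R^(k+1) * (5 * (c * K) + 2 * (R^2 * M))) :=
            mul_le_mul_of_nonneg_left h5 (sq_nonneg R)
        _ = 5 * (c * K) * R^(k+3) + 2 * ((R^2 * M) * R^(k+3)) := by ring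
        _ ≤ 5 * (c * K) * R^(k+3) + 4 * c * ((R^2 * M) * R^(k+3)) := by
            have key : 0 ≤ (c - 1) * (R^2 * M * R^(k+3)) :=
              mul_nonneg (by linarith only [hc1]) hMR
            linarith only [key, hMR]
        _ = c * ((5 * K + 4 * R^2 * M) * R^(k+3)) := by ring
    exact le_of_mul_le_mul_left h6 hc0
end

section
/- There exists a constant C₃ > 0 depending only on m such that for every δ with 0 < δ < 1 and every R > 0, δ·∫₀^R s^{1−δ}·B(s) ds ≤ C₃·∫₀^{2√(m−2)} B(s) ds + 4·R²·H(R)⁺. -/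
open MeasureTheory Filter Set intervalIntegral

set_option maxHeartbeats 1000000 in
theorem stmt_10 (m : ℕ) (hm : 3 ≤ m) (A B : ℝ → ℝ)
    (hA : ContinuousOn A (Set.Ici 0)) (hB : ContinuousOn B (Set.Ici 0))
    (hA0 : ∀ r ≥ (0:ℝ), 0 ≤ A r) (hAB : ∀ r ≥ (0:ℝ), A r ≤ 2 * B r)
    (hH : ∀ r > (0:ℝ), HasDerivAt (fun s => A s - B s)
      (2 / r * B r + (r / 2 - (m : ℝ) / r) * A r) r) :
    ∃ C₃ > (0:ℝ), ∀ δ : ℝ, 0 < δ → δ < 1 → ∀ R > (0:ℝ),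
      δ * (∫ s in (0:ℝ)..R, s ^ ((1:ℝ) - δ) * B s) ≤
        C₃ * (∫ s in (0:ℝ)..(2 * Real.sqrt ((m:ℝ) - 2)), B s) + 4 * R^2 * max (A R - B R) 0 := by
  have hm3 : (3:ℝ) ≤ (m:ℝ) := by exact_mod_cast hm
  set c : ℝ := 2 * Real.sqrt ((m:ℝ) - 2) with hcdef
  have hs0 : (0:ℝ) ≤ (m:ℝ) - 2 := by linarith
  have hsq : Real.sqrt ((m:ℝ) - 2) ^ 2 = (m:ℝ) - 2 := Real.sq_sqrt hs0
  have hs1 : 1 ≤ Real.sqrt ((m:ℝ) - 2) := by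
    rw [show (1:ℝ) = Real.sqrt 1 by simp]
    exact Real.sqrt_le_sqrt (by linarith)
  have hc2 : (2:ℝ) ≤ c := by rw [hcdef]; linarith
  have hcsq : c ^ 2 = 4 * ((m:ℝ) - 2) := by rw [hcdef, mul_pow, hsq]; ring
  have hB0 : ∀ r ≥ (0:ℝ), 0 ≤ B r := fun r hr => by linarith [hA0 r hr, hAB r hr]
  refine ⟨2 * c * ((m:ℝ) - 1) + c, by nlinarith, ?_⟩
  intro δ hδ0 hδ1 R hR
  -- continuity of rpow with nonneg exponent
  have hpow_cont : ∀ p : ℝ, 0 ≤ p → Continuous fun s : ℝ => s ^ p := fun p hp =>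
    continuous_iff_continuousAt.2 fun x => Real.continuousAt_rpow_const x p (Or.inr hp)
  have h1δ : (0:ℝ) ≤ 1 - δ := by linarith
  -- basic integrability
  have hBci : ∀ a b : ℝ, 0 ≤ a → a ≤ b → IntervalIntegrable B volume a b := fun a b ha hab =>
    (hB.mono (fun x hx => le_trans ha (by exact hx.1) : Icc a b ⊆ Ici 0)).intervalIntegrable_of_Icc hab
  have hfc : ContinuousOn (fun s : ℝ => s ^ ((1:ℝ) - δ) * B s) (Ici 0) :=
    ((hpow_cont _ h1δ).continuousOn).mul hB
  have hLc : ContinuousOn (fun s : ℝ => s ^ ((1:ℝ) - δ) * ((s ^ 2 / 2 - (m:ℝ) + 2 - δ) * A s)) (Ici 0) :=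
    ((hpow_cont _ h1δ).continuousOn).mul
      ((Continuous.continuousOn (by continuity)).mul hA)
  have hDc : ContinuousOn (fun s : ℝ => δ * (s ^ ((1:ℝ) - δ) * B s)
      + s ^ ((1:ℝ) - δ) * ((s ^ 2 / 2 - (m:ℝ) + 2 - δ) * A s)) (Ici 0) :=
    (hfc.const_smul δ).add hLc
  have hIcc : ∀ b : ℝ, Icc (0:ℝ) b ⊆ Ici 0 := fun b x hx => hx.1
  have hfint : ∀ b : ℝ, 0 ≤ b → IntervalIntegrable (fun s : ℝ => s ^ ((1:ℝ) - δ) * B s) volume 0 b :=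
    fun b hb => (hfc.mono (hIcc b)).intervalIntegrable_of_Icc hb
  have hLint : ∀ a b : ℝ, 0 ≤ a → a ≤ b →
      IntervalIntegrable (fun s : ℝ => s ^ ((1:ℝ) - δ) * ((s ^ 2 / 2 - (m:ℝ) + 2 - δ) * A s)) volume a b :=
    fun a b ha hab => (hLc.mono (fun x hx => le_trans ha hx.1)).intervalIntegrable_of_Icc hab
  have hIntB : 0 ≤ ∫ s in (0:ℝ)..c, B s :=
    intervalIntegral.integral_nonneg (by linarith) (fun x hx => hB0 x hx.1)
  have hmax0 : (0:ℝ) ≤ max (A R - B R) 0 := le_max_right _ _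
  have hR2 : (0:ℝ) ≤ 4 * R ^ 2 * max (A R - B R) 0 := by positivity
  -- pointwise bound on [0,c] used in both cases: s^(1-δ) ≤ c
  have hsc : ∀ s : ℝ, 0 ≤ s → s ≤ c → s ^ ((1:ℝ) - δ) ≤ c := by
    intro s hs hsc
    calc s ^ ((1:ℝ) - δ) ≤ c ^ ((1:ℝ) - δ) := Real.rpow_le_rpow hs hsc h1δ
      _ ≤ c ^ (1:ℝ) := Real.rpow_le_rpow_of_exponent_le (by linarith) (by linarith)
      _ = c := Real.rpow_one c
  rcases le_or_gt R c with hRc | hRc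
  · -- easy case R ≤ c
    have hmono : δ * (∫ s in (0:ℝ)..R, s ^ ((1:ℝ) - δ) * B s) ≤ ∫ s in (0:ℝ)..R, c * B s := by
      rw [← intervalIntegral.integral_const_mul]
      apply intervalIntegral.integral_mono_on hR.le ((hfint R hR.le).const_mul δ)
        ((hBci 0 R le_rfl hR.le).const_mul c)
      intro s hs
      have h1 := hsc s hs.1 (le_trans hs.2 hRc)
      have h2 := hB0 s hs.1
      have h3 : (0:ℝ) ≤ s ^ ((1:ℝ) - δ) := Real.rpow_nonneg hs.1 _
      nlinarith [mul_nonneg h3 h2, mul_le_mul_of_nonneg_right h1 h2]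
    have hsplit : ∫ s in (0:ℝ)..R, c * B s ≤ c * ∫ s in (0:ℝ)..c, B s := by
      rw [intervalIntegral.integral_const_mul]
      have : ∫ s in (0:ℝ)..c, B s = (∫ s in (0:ℝ)..R, B s) + ∫ s in R..c, B s :=
        (intervalIntegral.integral_add_adjacent_intervals (hBci 0 R le_rfl hR.le)
          (hBci R c hR.le hRc)).symm
      have h2 : 0 ≤ ∫ s in R..c, B s :=
        intervalIntegral.integral_nonneg hRc (fun x hx => hB0 x (le_trans hR.le hx.1))
      nlinarith [intervalIntegral.integral_nonneg (μ := volume) (f := B) hR.le (fun x hx => hB0 x hx.1)]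
    nlinarith [mul_nonneg (mul_nonneg (by linarith : (0:ℝ) ≤ 2 * c) (by linarith : (0:ℝ) ≤ (m:ℝ) - 1)) hIntB, hR2]
  · -- main case c < R
    have hR0 : (0:ℝ) ≤ R := hR.le
    -- FTC
    have hgcont : ContinuousOn (fun s : ℝ => s ^ ((2:ℝ) - δ) * (A s - B s)) (Icc 0 R) :=
      (((hpow_cont _ (by linarith)).continuousOn).mul (hA.sub hB)).mono (hIcc R)
    have hderiv : ∀ x ∈ Ioo (0:ℝ) R, HasDerivWithinAt (fun s : ℝ => s ^ ((2:ℝ) - δ) * (A s - B s))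
        (δ * (x ^ ((1:ℝ) - δ) * B x)
          + x ^ ((1:ℝ) - δ) * ((x ^ 2 / 2 - (m:ℝ) + 2 - δ) * A x)) (Ioi x) x := by
      intro x hx
      have hx0 : (0:ℝ) < x := hx.1
      have hxne : x ≠ 0 := hx0.ne'
      have h1 : HasDerivAt (fun s : ℝ => s ^ ((2:ℝ) - δ))
          (((2:ℝ) - δ) * x ^ ((2:ℝ) - δ - 1)) x :=
        Real.hasDerivAt_rpow_const (Or.inl hxne)
      have h2 : HasDerivAt (fun s : ℝ => s ^ ((2:ℝ) - δ) * (A s - B s))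
          (((2:ℝ) - δ) * x ^ ((2:ℝ) - δ - 1) * (A x - B x)
            + x ^ ((2:ℝ) - δ) * (2 / x * B x + (x / 2 - (m:ℝ) / x) * A x)) x :=
        h1.mul (hH x hx0)
      have key : ((2:ℝ) - δ) * x ^ ((2:ℝ) - δ - 1) * (A x - B x)
            + x ^ ((2:ℝ) - δ) * (2 / x * B x + (x / 2 - (m:ℝ) / x) * A x)
          = δ * (x ^ ((1:ℝ) - δ) * B x)
            + x ^ ((1:ℝ) - δ) * ((x ^ 2 / 2 - (m:ℝ) + 2 - δ) * A x) := by
        rw [show (2:ℝ) - δ - 1 = 1 - δ by ring,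
          show (2:ℝ) - δ = (1 - δ) + 1 by ring, Real.rpow_add_one hxne]
        field_simp
        ring
      rw [key] at h2
      exact h2.hasDerivWithinAt
    have hDint : IntervalIntegrable (fun s : ℝ => δ * (s ^ ((1:ℝ) - δ) * B s)
        + s ^ ((1:ℝ) - δ) * ((s ^ 2 / 2 - (m:ℝ) + 2 - δ) * A s)) volume 0 R :=
      (hDc.mono (hIcc R)).intervalIntegrable_of_Icc hR0
    have hFTC : (∫ s in (0:ℝ)..R, (δ * (s ^ ((1:ℝ) - δ) * B s)
        + s ^ ((1:ℝ) - δ) * ((s ^ 2 / 2 - (m:ℝ) + 2 - δ) * A s)))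
        = R ^ ((2:ℝ) - δ) * (A R - B R) := by
      rw [intervalIntegral.integral_eq_sub_of_hasDeriv_right_of_le hR0 hgcont hderiv hDint]
      have : (0:ℝ) ^ ((2:ℝ) - δ) = 0 := Real.zero_rpow (by linarith)
      rw [this]; ring
    have hadd : (∫ s in (0:ℝ)..R, (δ * (s ^ ((1:ℝ) - δ) * B s)
        + s ^ ((1:ℝ) - δ) * ((s ^ 2 / 2 - (m:ℝ) + 2 - δ) * A s)))
        = δ * (∫ s in (0:ℝ)..R, s ^ ((1:ℝ) - δ) * B s)
          + ∫ s in (0:ℝ)..R, s ^ ((1:ℝ) - δ) * ((s ^ 2 / 2 - (m:ℝ) + 2 - δ) * A s) := by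
      rw [intervalIntegral.integral_add ((hfint R hR0).const_mul δ) (hLint 0 R le_rfl hR0),
        intervalIntegral.integral_const_mul]
    -- split the L integral
    have hLsplit : (∫ s in (0:ℝ)..R, s ^ ((1:ℝ) - δ) * ((s ^ 2 / 2 - (m:ℝ) + 2 - δ) * A s))
        = (∫ s in (0:ℝ)..c, s ^ ((1:ℝ) - δ) * ((s ^ 2 / 2 - (m:ℝ) + 2 - δ) * A s))
          + ∫ s in c..R, s ^ ((1:ℝ) - δ) * ((s ^ 2 / 2 - (m:ℝ) + 2 - δ) * A s) :=
      (intervalIntegral.integral_add_adjacent_intervals (hLint 0 c le_rfl (by linarith))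
        (hLint c R (by linarith) hRc.le)).symm
    have hLtail : 0 ≤ ∫ s in c..R, s ^ ((1:ℝ) - δ) * ((s ^ 2 / 2 - (m:ℝ) + 2 - δ) * A s) := by
      apply intervalIntegral.integral_nonneg hRc.le
      intro s hs
      have hs0' : (0:ℝ) ≤ s := le_trans (by linarith) hs.1
      have h3 : (0:ℝ) ≤ s ^ ((1:ℝ) - δ) := Real.rpow_nonneg hs0' _
      have h4 : c ^ 2 ≤ s ^ 2 := by nlinarith [hs.1]
      have h5 : (0:ℝ) ≤ s ^ 2 / 2 - (m:ℝ) + 2 - δ := by nlinarith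
      have h6 := hA0 s hs0'
      positivity
    have hLhead : -(∫ s in (0:ℝ)..c, s ^ ((1:ℝ) - δ) * ((s ^ 2 / 2 - (m:ℝ) + 2 - δ) * A s))
        ≤ 2 * c * ((m:ℝ) - 1) * ∫ s in (0:ℝ)..c, B s := by
      rw [← intervalIntegral.integral_neg, ← intervalIntegral.integral_const_mul]
      apply intervalIntegral.integral_mono_on (by linarith) (hLint 0 c le_rfl (by linarith)).neg
        ((hBci 0 c le_rfl (by linarith)).const_mul _)
      intro s hs
      have h1 := hsc s hs.1 hs.2
      have h3 : (0:ℝ) ≤ s ^ ((1:ℝ) - δ) := Real.rpow_nonneg hs.1 _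
      have h6 := hA0 s hs.1
      have h7 := hAB s hs.1
      have hcoefle : (m:ℝ) - 2 + δ - s ^ 2 / 2 ≤ (m:ℝ) - 1 := by nlinarith [sq_nonneg s]
      have hB0' := hB0 s hs.1
      show -(s ^ ((1:ℝ) - δ) * ((s ^ 2 / 2 - (m:ℝ) + 2 - δ) * A s)) ≤ 2 * c * ((m:ℝ) - 1) * B s
      have hkey : s ^ ((1:ℝ) - δ) * (((m:ℝ) - 2 + δ - s ^ 2 / 2) * A s) ≤ 2 * c * ((m:ℝ) - 1) * B s := by
        rcases le_or_gt ((m:ℝ) - 2 + δ - s ^ 2 / 2) 0 with hco | hco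
        · have : s ^ ((1:ℝ) - δ) * (((m:ℝ) - 2 + δ - s ^ 2 / 2) * A s) ≤ 0 :=
            mul_nonpos_of_nonneg_of_nonpos h3 (mul_nonpos_of_nonpos_of_nonneg hco h6)
          nlinarith [mul_nonneg (mul_nonneg (by linarith : (0:ℝ) ≤ 2 * c) (by linarith : (0:ℝ) ≤ (m:ℝ) - 1)) hB0']
        · have hb1 : s ^ ((1:ℝ) - δ) * ((m:ℝ) - 2 + δ - s ^ 2 / 2) ≤ c * ((m:ℝ) - 1) :=
            mul_le_mul h1 hcoefle hco.le (by linarith)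
          have hb2 : s ^ ((1:ℝ) - δ) * ((m:ℝ) - 2 + δ - s ^ 2 / 2) * A s ≤ c * ((m:ℝ) - 1) * A s :=
            mul_le_mul_of_nonneg_right hb1 h6
          have hb3 : c * ((m:ℝ) - 1) * A s ≤ c * ((m:ℝ) - 1) * (2 * B s) :=
            mul_le_mul_of_nonneg_left h7 (by nlinarith)
          nlinarith
      nlinarith [hkey]
    -- boundary term bound
    have hgR : R ^ ((2:ℝ) - δ) * (A R - B R) ≤ 4 * R ^ 2 * max (A R - B R) 0 := by
      have hR1 : (1:ℝ) ≤ R := by linarith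
      have e1 : R ^ ((2:ℝ) - δ) ≤ R ^ (2:ℝ) :=
        Real.rpow_le_rpow_of_exponent_le hR1 (by linarith)
      have e2 : R ^ ((2:ℝ)) = R ^ (2:ℕ) := by
        rw [show ((2:ℝ)) = ((2:ℕ):ℝ) by norm_num, Real.rpow_natCast]
      have h3 : (0:ℝ) ≤ R ^ ((2:ℝ) - δ) := Real.rpow_nonneg hR0 _
      calc R ^ ((2:ℝ) - δ) * (A R - B R) ≤ R ^ ((2:ℝ) - δ) * max (A R - B R) 0 :=
            mul_le_mul_of_nonneg_left (le_max_left _ _) h3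
        _ ≤ R ^ 2 * max (A R - B R) 0 := by
            apply mul_le_mul_of_nonneg_right _ hmax0
            rw [← e2]; exact e1
        _ ≤ 4 * R ^ 2 * max (A R - B R) 0 := by nlinarith [sq_nonneg R]
    -- combine
    have hmain : δ * (∫ s in (0:ℝ)..R, s ^ ((1:ℝ) - δ) * B s)
        = R ^ ((2:ℝ) - δ) * (A R - B R)
          - ∫ s in (0:ℝ)..R, s ^ ((1:ℝ) - δ) * ((s ^ 2 / 2 - (m:ℝ) + 2 - δ) * A s) := by
      rw [← hFTC, hadd]; ring
    rw [hmain, hLsplit]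
    nlinarith [hLtail, hLhead, hgR, hIntB]
end

section
/- The following three conditions are equivalent: (1) lim_{R→∞} R^{m}·e^{−R²/4}·∫₀^R s^{m−1}·e^{−s²/4}·B(s) ds = 0 (the large energy condition); (2) ∫₀^∞ s³·A(s) ds < ∞; (3) ∫₀^∞ s^{m−1}·e^{−s²/4}·B(s) ds < ∞ (finite total energy). -/
open MeasureTheory Filter Set intervalIntegral Nat

lemma qh_pow_le_exp (n : ℕ) {x : ℝ} (hx : 0 ≤ x) : x ^ n ≤ n ! * Real.exp x := by
  have h := Real.sum_le_exp_of_nonneg hx (n+1)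
  have h2 : x ^ n / n ! ≤ ∑ i ∈ Finset.range (n+1), x ^ i / i ! := by
    apply Finset.single_le_sum (f := fun i => x ^ i / i !)
    · intro i _; positivity
    · simp
  have hn : (0:ℝ) < n ! := by positivity
  rw [div_le_iff₀ hn] at h2
  calc x ^ n ≤ Real.exp x * n ! := h2.trans (by nlinarith [h, hn])
    _ = n ! * Real.exp x := by ring

lemma qh_exp_neg_le (n : ℕ) {x : ℝ} (hx : 1 ≤ x) :
    x ^ n * Real.exp (-x^2/4) ≤ (n ! * 4 ^ n) / x ^ n := by
  have hx0 : (0:ℝ) < x := lt_of_lt_of_le one_pos hx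
  have h := qh_pow_le_exp n (x := x^2/4) (by positivity)
  have hexp : Real.exp (-x^2/4) = 1 / Real.exp (x^2/4) := by
    rw [neg_div, Real.exp_neg, inv_eq_one_div]
  have he : (0:ℝ) < Real.exp (x^2/4) := Real.exp_pos _
  rw [hexp, mul_one_div, div_le_div_iff₀ (by positivity) (by positivity)]
  have hpow : (x^2/4)^n = x^(2*n) / 4^n := by
    rw [div_pow, ← pow_mul]
  have : x ^ (2*n) ≤ n ! * Real.exp (x^2/4) * 4 ^ n := by
    have := h
    rw [hpow] at this
    have h4 : (0:ℝ) < 4^n := by positivity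
    rw [div_le_iff₀ h4] at this
    linarith
  calc x ^ n * x ^ n = x ^ (2*n) := by rw [two_mul, pow_add]
    _ ≤ n ! * Real.exp (x^2/4) * 4 ^ n := this
    _ = ↑n ! * 4 ^ n * Real.exp (x ^ 2 / 4) := by ring

lemma qh_P_tendsto (n : ℕ) (hn : 1 ≤ n) :
    Tendsto (fun R : ℝ => R ^ n * Real.exp (-R^2/4)) atTop (nhds 0) := by
  apply squeeze_zero' (g := fun R : ℝ => (n ! * 4 ^ n) / R ^ n)
  · filter_upwards [eventually_ge_atTop (1:ℝ)] with x hx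
    positivity
  · filter_upwards [eventually_ge_atTop (1:ℝ)] with x hx
    exact qh_exp_neg_le n hx
  · exact tendsto_const_nhds.div_atTop (tendsto_pow_atTop (by omega))

lemma qh_P_bound (n : ℕ) {x : ℝ} (hx : 0 ≤ x) :
    x ^ n * Real.exp (-x^2/4) ≤ n ! * 4 ^ n + 1 := by
  rcases le_or_gt x 1 with h | h
  · have h1 : Real.exp (-x^2/4) ≤ 1 := Real.exp_le_one_iff.mpr (by nlinarith)
    have h2 : x ^ n ≤ 1 := pow_le_one₀ hx h
    have h3 : x ^ n * Real.exp (-x^2/4) ≤ 1 := by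
      nlinarith [Real.exp_pos (-x^2/4), pow_nonneg hx n]
    have h4 : (0:ℝ) ≤ (n ! : ℝ) * 4 ^ n := by positivity
    linarith
  · have := qh_exp_neg_le n h.le
    have hxn : (1:ℝ) ≤ x ^ n := by exact one_le_pow₀ h.le
    have : x ^ n * Real.exp (-x^2/4) ≤ n ! * 4 ^ n := by
      refine this.trans ?_
      rw [div_le_iff₀ (by positivity)]
      nlinarith [hxn, (show (0:ℝ) ≤ (n ! : ℝ) * 4 ^ n by positivity)]
    linarith

lemma qh_derivI (k : ℕ) (A B : ℝ → ℝ) {x : ℝ} (hx : 0 < x)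
    (hHx : HasDerivAt (fun s => A s - B s)
      (2 / x * B x + (x / 2 - ((k:ℝ)+3) / x) * A x) x) :
    HasDerivAt (fun r => r^(k+3) * Real.exp (-r^2/4) * (A r - B r))
      (x^(k+2) * Real.exp (-x^2/4) * (x^2/2 - ((k:ℝ)+1)) * B x) x := by
  have h1 : HasDerivAt (fun r : ℝ => r ^ (k+3)) (((k:ℝ)+3) * x^(k+2)) x := by
    have := hasDerivAt_pow (k+3) x
    norm_num at this
    convert this using 2
  have h2 : HasDerivAt (fun r : ℝ => Real.exp (-r^2/4))
      (Real.exp (-x^2/4) * (-(2*x^1)/4)) x := by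
    exact (((hasDerivAt_pow 2 x).neg.div_const 4)).exp.congr_deriv (by norm_num)
  have h12 := h1.mul h2
  have h := h12.mul hHx
  refine h.congr_deriv ?_
  have hexp := Real.exp_ne_zero (-x^2/4)
  simp only [Pi.mul_apply]
  field_simp
  ring

lemma qh_derivII (k : ℕ) (A B : ℝ → ℝ) {x : ℝ} (hx : 0 < x)
    (hHx : HasDerivAt (fun s => A s - B s)
      (2 / x * B x + (x / 2 - ((k:ℝ)+3) / x) * A x) x) :
    HasDerivAt (fun r => r^2 * (A r - B r))
      (x * (x^2/2 - ((k:ℝ)+1)) * A x) x := by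
  have h1 : HasDerivAt (fun r : ℝ => r ^ 2) (2 * x) x := by
    simpa using hasDerivAt_pow 2 x
  have h := h1.mul hHx
  refine h.congr_deriv ?_
  field_simp
  ring

lemma qh_derivU (k : ℕ) (A B : ℝ → ℝ) {x : ℝ} (hx : 0 < x)
    (hHx : HasDerivAt (fun s => A s - B s)
      (2 / x * B x + (x / 2 - ((k:ℝ)+3) / x) * A x) x) :
    HasDerivAt (fun r => r^(2*k+4) * Real.exp (-r^2/2) * (A r - B r))
      (x^(2*k+3) * Real.exp (-x^2/2) * ((x^2 - (2*(k:ℝ)+2)) * (B x - A x / 2))) x := by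
  have h1 : HasDerivAt (fun r : ℝ => r ^ (2*k+4)) ((2*(k:ℝ)+4) * x^(2*k+3)) x := by
    have := hasDerivAt_pow (2*k+4) x
    norm_num at this
    convert this using 2
  have h2 : HasDerivAt (fun r : ℝ => Real.exp (-r^2/2))
      (Real.exp (-x^2/2) * (-(2*x^1)/2)) x := by
    exact (((hasDerivAt_pow 2 x).neg.div_const 2)).exp.congr_deriv (by norm_num)
  have h12 := h1.mul h2
  have h := h12.mul hHx
  refine h.congr_deriv ?_
  have hexp := Real.exp_ne_zero (-x^2/2)
  simp only [Pi.mul_apply]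
  field_simp
  ring

-- interval integrability of functions continuous on Ici 0
lemma qh_ii {f : ℝ → ℝ} (hf : ContinuousOn f (Ici 0)) {a b : ℝ} (ha : 0 ≤ a) (hab : a ≤ b) :
    IntervalIntegrable f volume a b := by
  apply ContinuousOn.intervalIntegrable
  apply hf.mono
  rw [uIcc_of_le hab]
  exact (Icc_subset_Ici_self).trans (Ici_subset_Ici.mpr ha)

lemma qh_cont_w (k : ℕ) (B : ℝ → ℝ) (hB : ContinuousOn B (Ici 0)) (c : ℝ) :
    ContinuousOn (fun s : ℝ => s^(k+2) * Real.exp (-s^2/4) * (s^2/2 - c) * B s) (Ici 0) := by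
  apply ContinuousOn.mul _ hB
  apply Continuous.continuousOn
  continuity

lemma qh_cont_w' (k : ℕ) (B : ℝ → ℝ) (hB : ContinuousOn B (Ici 0)) :
    ContinuousOn (fun s : ℝ => s^(k+2) * Real.exp (-s^2/4) * B s) (Ici 0) := by
  apply ContinuousOn.mul _ hB
  apply Continuous.continuousOn
  continuity

lemma qh_cont_gA (A : ℝ → ℝ) (hA : ContinuousOn A (Ici 0)) (c : ℝ) :
    ContinuousOn (fun s : ℝ => s * (s^2/2 - c) * A s) (Ici 0) := by
  apply ContinuousOn.mul _ hA
  apply Continuous.continuousOn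
  continuity

lemma qh_cont_cube (A : ℝ → ℝ) (hA : ContinuousOn A (Ici 0)) :
    ContinuousOn (fun s : ℝ => s^3 * A s) (Ici 0) :=
  ContinuousOn.mul (Continuous.continuousOn (by continuity)) hA

lemma qh_idI (k : ℕ) (A B : ℝ → ℝ)
    (hA : ContinuousOn A (Ici 0)) (hB : ContinuousOn B (Ici 0))
    (hH : ∀ r > (0:ℝ), HasDerivAt (fun s => A s - B s)
      (2 / r * B r + (r / 2 - ((k:ℝ)+3) / r) * A r) r)
    {R : ℝ} (hR : 0 ≤ R) :
    R^(k+3) * Real.exp (-R^2/4) * (A R - B R)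
      = ∫ s in (0:ℝ)..R, s^(k+2) * Real.exp (-s^2/4) * (s^2/2 - ((k:ℝ)+1)) * B s := by
  have key := intervalIntegral.integral_eq_sub_of_hasDeriv_right_of_le hR
    (f := fun r => r^(k+3) * Real.exp (-r^2/4) * (A r - B r))
    (f' := fun s => s^(k+2) * Real.exp (-s^2/4) * (s^2/2 - ((k:ℝ)+1)) * B s)
    ?_ ?_ ?_
  · rw [key]
    norm_num
  · apply ContinuousOn.mul _ ((hA.sub hB).mono (Icc_subset_Ici_self))
    apply Continuous.continuousOn
    continuity
  · intro x hx
    exact ((qh_derivI k A B hx.1 (hH x hx.1)).hasDerivWithinAt)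
  · exact qh_ii (qh_cont_w k B hB _) le_rfl hR

lemma qh_idII (k : ℕ) (A B : ℝ → ℝ)
    (hA : ContinuousOn A (Ici 0)) (hB : ContinuousOn B (Ici 0))
    (hH : ∀ r > (0:ℝ), HasDerivAt (fun s => A s - B s)
      (2 / r * B r + (r / 2 - ((k:ℝ)+3) / r) * A r) r)
    {R : ℝ} (hR : 0 ≤ R) :
    R^2 * (A R - B R) = ∫ s in (0:ℝ)..R, s * (s^2/2 - ((k:ℝ)+1)) * A s := by
  have key := intervalIntegral.integral_eq_sub_of_hasDeriv_right_of_le hR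
    (f := fun r => r^2 * (A r - B r))
    (f' := fun s => s * (s^2/2 - ((k:ℝ)+1)) * A s)
    ?_ ?_ ?_
  · rw [key]
    norm_num
  · apply ContinuousOn.mul _ ((hA.sub hB).mono (Icc_subset_Ici_self))
    apply Continuous.continuousOn
    continuity
  · intro x hx
    exact ((qh_derivII k A B hx.1 (hH x hx.1)).hasDerivWithinAt)
  · exact qh_ii (qh_cont_gA A hA _) le_rfl hR

-- boundedness of interval integrals implies integrability, for nonneg g continuous on Ici 0
lemma qh_int_of_bounded {g : ℝ → ℝ} (hg : ContinuousOn g (Ici 0))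
    (hg0 : ∀ s ≥ (0:ℝ), 0 ≤ g s) {M : ℝ}
    (hM : ∀ R ≥ (0:ℝ), (∫ s in (0:ℝ)..R, g s) ≤ M) :
    IntegrableOn g (Ioi 0) := by
  apply MeasureTheory.integrableOn_Ioi_of_intervalIntegral_norm_bounded M 0
    (b := fun i : ℝ => max i 0) (l := atTop)
  · intro i
    have : IntegrableOn g (Icc 0 (max i 0)) := by
      apply ContinuousOn.integrableOn_Icc
      exact hg.mono ((Icc_subset_Ici_self).trans (Ici_subset_Ici.mpr le_rfl))
    exact this.mono_set Ioc_subset_Icc_self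
  · exact tendsto_atTop_mono (fun i => le_max_left _ _) tendsto_id
  · filter_upwards [eventually_ge_atTop (0:ℝ)] with i _
    have h0 : (0:ℝ) ≤ max i 0 := le_max_right _ _
    have : (∫ s in (0:ℝ)..(max i 0), ‖g s‖) = ∫ s in (0:ℝ)..(max i 0), g s := by
      apply intervalIntegral.integral_congr
      intro x hx
      rw [uIcc_of_le h0] at hx
      exact Real.norm_of_nonneg (hg0 x hx.1)
    rw [this]
    exact hM _ h0

-- monotonicity of F
lemma qh_F_mono {g : ℝ → ℝ} (hg : ContinuousOn g (Ici 0))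
    (hg0 : ∀ s ≥ (0:ℝ), 0 ≤ g s) {T R : ℝ} (hT : 0 ≤ T) (hTR : T ≤ R) :
    (∫ s in (0:ℝ)..T, g s) ≤ ∫ s in (0:ℝ)..R, g s := by
  have h1 : IntervalIntegrable g volume 0 T := qh_ii hg le_rfl hT
  have h2 : IntervalIntegrable g volume T R := qh_ii hg hT hTR
  rw [← intervalIntegral.integral_add_adjacent_intervals h1 h2]
  have : 0 ≤ ∫ s in T..R, g s := by
    apply intervalIntegral.integral_nonneg hTR
    intro x hx
    exact hg0 x (hT.trans hx.1)
  linarith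

lemma qh_F_nonneg {g : ℝ → ℝ} (hg0 : ∀ s ≥ (0:ℝ), 0 ≤ g s) {R : ℝ} (hR : 0 ≤ R) :
    0 ≤ ∫ s in (0:ℝ)..R, g s := by
  apply intervalIntegral.integral_nonneg hR
  intro x hx
  exact hg0 x hx.1

lemma qh_claimA (k : ℕ) (A B : ℝ → ℝ)
    (hA : ContinuousOn A (Ici 0)) (hB : ContinuousOn B (Ici 0))
    (hB0 : ∀ r ≥ (0:ℝ), 0 ≤ B r)
    (hH : ∀ r > (0:ℝ), HasDerivAt (fun s => A s - B s)
      (2 / r * B r + (r / 2 - ((k:ℝ)+3) / r) * A r) r)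
    {R : ℝ} (hR : Real.sqrt (2*(k:ℝ)+4) ≤ R) :
    (∫ s in (0:ℝ)..R, s^(k+2) * Real.exp (-s^2/4) * B s)
      - ((k:ℝ)+2) * (∫ s in (0:ℝ)..Real.sqrt (2*(k:ℝ)+4), s^(k+2) * Real.exp (-s^2/4) * B s)
      ≤ R^(k+3) * Real.exp (-R^2/4) * (A R - B R) := by
  set s₁ := Real.sqrt (2*(k:ℝ)+4) with hs₁def
  have hs₁0 : 0 ≤ s₁ := Real.sqrt_nonneg _
  have hs₁sq : s₁^2 = 2*(k:ℝ)+4 := Real.sq_sqrt (by positivity)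
  have hR0 : 0 ≤ R := hs₁0.trans hR
  rw [qh_idI k A B hA hB hH hR0]
  have hii1 : IntervalIntegrable (fun s => s^(k+2) * Real.exp (-s^2/4) * (s^2/2 - ((k:ℝ)+1)) * B s)
      volume 0 s₁ := qh_ii (qh_cont_w k B hB _) le_rfl hs₁0
  have hii2 : IntervalIntegrable (fun s => s^(k+2) * Real.exp (-s^2/4) * (s^2/2 - ((k:ℝ)+1)) * B s)
      volume s₁ R := qh_ii (qh_cont_w k B hB _) hs₁0 hR
  have hwii1 : IntervalIntegrable (fun s => s^(k+2) * Real.exp (-s^2/4) * B s)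
      volume 0 s₁ := qh_ii (qh_cont_w' k B hB) le_rfl hs₁0
  have hwii2 : IntervalIntegrable (fun s => s^(k+2) * Real.exp (-s^2/4) * B s)
      volume s₁ R := qh_ii (qh_cont_w' k B hB) hs₁0 hR
  rw [← intervalIntegral.integral_add_adjacent_intervals hii1 hii2,
    ← intervalIntegral.integral_add_adjacent_intervals hwii1 hwii2]
  have h1 : (-((k:ℝ)+1)) * (∫ s in (0:ℝ)..s₁, s^(k+2) * Real.exp (-s^2/4) * B s)
      ≤ ∫ s in (0:ℝ)..s₁, s^(k+2) * Real.exp (-s^2/4) * (s^2/2 - ((k:ℝ)+1)) * B s := by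
    rw [← intervalIntegral.integral_const_mul]
    apply intervalIntegral.integral_mono_on hs₁0 (hwii1.const_mul _) hii1
    intro x hx
    have hx0 : 0 ≤ x := hx.1
    have hBx := hB0 x hx0
    have h2 : (0:ℝ) ≤ x^(k+2) * Real.exp (-x^2/4) * B x := by positivity
    nlinarith [mul_nonneg (mul_nonneg (mul_nonneg (pow_nonneg hx0 (k+2)) (Real.exp_pos (-x^2/4)).le) hBx) (sq_nonneg x)]
  have h2 : (∫ s in s₁..R, s^(k+2) * Real.exp (-s^2/4) * B s)
      ≤ ∫ s in s₁..R, s^(k+2) * Real.exp (-s^2/4) * (s^2/2 - ((k:ℝ)+1)) * B s := by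
    apply intervalIntegral.integral_mono_on hR hwii2 hii2
    intro x hx
    have hx0 : 0 ≤ x := hs₁0.trans hx.1
    have hxsq : 2*(k:ℝ)+4 ≤ x^2 := by
      rw [← hs₁sq]
      exact pow_le_pow_left₀ hs₁0 hx.1 2
    have hBx := hB0 x hx0
    have h3 : (0:ℝ) ≤ x^(k+2) * Real.exp (-x^2/4) * B x := by positivity
    nlinarith [h3]
  nlinarith [qh_F_nonneg (g := fun s => s^(k+2) * Real.exp (-s^2/4) * B s)
    (fun s hs => mul_nonneg (by positivity) (hB0 s hs)) hs₁0]

set_option maxHeartbeats 1000000 in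
lemma qh_key (k : ℕ) (A B : ℝ → ℝ)
    (hA : ContinuousOn A (Ici 0)) (hB : ContinuousOn B (Ici 0))
    (hA0 : ∀ r ≥ (0:ℝ), 0 ≤ A r) (hAB : ∀ r ≥ (0:ℝ), A r ≤ 2 * B r)
    (hH : ∀ r > (0:ℝ), HasDerivAt (fun s => A s - B s)
      (2 / r * B r + (r / 2 - ((k:ℝ)+3) / r) * A r) r)
    {R₀ : ℝ} (hR₀pos : 0 < R₀) (hR₀sq : 2*(k:ℝ)+2 ≤ R₀^2) (hH₀ : B R₀ < A R₀) :
    ¬ Tendsto (fun R => R^(k+3) * Real.exp (-R^2/4) *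
        ∫ s in (0:ℝ)..R, s^(k+2) * Real.exp (-s^2/4) * B s) atTop (nhds 0) := by
  set δ := R₀^(2*k+4) * Real.exp (-R₀^2/2) * (A R₀ - B R₀) with hδdef
  have hδ : 0 < δ := by
    apply mul_pos (by positivity)
    linarith
  -- Step 1 : Gronwall-type monotonicity
  have step1 : ∀ R, R₀ ≤ R → δ ≤ R^(2*k+4) * Real.exp (-R^2/2) * (A R - B R) := by
    intro R hR
    have key := intervalIntegral.integral_eq_sub_of_hasDerivAt
      (f := fun r => r^(2*k+4) * Real.exp (-r^2/2) * (A r - B r))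
      (f' := fun x => x^(2*k+3) * Real.exp (-x^2/2) * ((x^2 - (2*(k:ℝ)+2)) * (B x - A x / 2)))
      (a := R₀) (b := R) ?_ ?_
    · have hnn : 0 ≤ ∫ x in R₀..R, x^(2*k+3) * Real.exp (-x^2/2) *
          ((x^2 - (2*(k:ℝ)+2)) * (B x - A x / 2)) := by
        apply intervalIntegral.integral_nonneg hR
        intro x hx
        have hx0 : 0 < x := lt_of_lt_of_le hR₀pos hx.1
        have hxsq : 2*(k:ℝ)+2 ≤ x^2 := hR₀sq.trans (pow_le_pow_left₀ hR₀pos.le hx.1 2)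
        have hBA : 0 ≤ B x - A x / 2 := by
          have := hAB x hx0.le; linarith
        have : (0:ℝ) ≤ (x^2 - (2*(k:ℝ)+2)) * (B x - A x / 2) :=
          mul_nonneg (by linarith) hBA
        positivity
      rw [key] at hnn
      linarith
    · intro x hx
      rw [uIcc_of_le hR] at hx
      have hx0 : 0 < x := lt_of_lt_of_le hR₀pos hx.1
      exact qh_derivU k A B hx0 (hH x hx0)
    · apply ContinuousOn.intervalIntegrable
      rw [uIcc_of_le hR]
      apply ContinuousOn.mono _ ((Icc_subset_Ici_self).trans (Ici_subset_Ici.mpr hR₀pos.le))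
      have hc1 : Continuous fun x : ℝ => x^(2*k+3) * Real.exp (-x^2/2) :=
        (continuous_pow _).mul (Real.continuous_exp.comp (by fun_prop))
      have hc2 : Continuous fun x : ℝ => x^2 - (2*(k:ℝ)+2) := by fun_prop
      exact (hc1.continuousOn).mul (hc2.continuousOn.mul (hB.sub (hA.div_const 2)))
  -- Step 2 : pointwise lower bound on the energy density
  have step2 : ∀ R, R₀ ≤ R → δ * Real.exp (R^2/4) / R^(k+2)
      ≤ R^(k+2) * Real.exp (-R^2/4) * B R := by
    intro R hR
    have hRpos : 0 < R := lt_of_lt_of_le hR₀pos hR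
    have h1 := step1 R hR
    have hBineq : A R - B R ≤ B R := by have := hAB R hRpos.le; linarith
    have h2 : δ ≤ R^(2*k+4) * Real.exp (-R^2/2) * B R := by
      calc δ ≤ R^(2*k+4) * Real.exp (-R^2/2) * (A R - B R) := h1
        _ ≤ R^(2*k+4) * Real.exp (-R^2/2) * B R := by
          apply mul_le_mul_of_nonneg_left hBineq (by positivity)
    rw [div_le_iff₀ (by positivity)]
    have e2 : Real.exp (-R^2/2) * Real.exp (R^2/4) = Real.exp (-R^2/4) := by
      rw [← Real.exp_add]; ring_nf
    calc δ * Real.exp (R^2/4) ≤ (R^(2*k+4) * Real.exp (-R^2/2) * B R) * Real.exp (R^2/4) :=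
          mul_le_mul_of_nonneg_right h2 (Real.exp_pos _).le
      _ = R^(k+2) * Real.exp (-R^2/4) * B R * R^(k+2) := by
          rw [← e2]; ring
  -- Step 3 : integrated lower bound
  have step3 : ∀ R, R₀ ≤ R →
      2*δ*Real.exp (R^2/4)/R^(k+3) - 2*δ*Real.exp (R₀^2/4)/R₀^(k+3)
      ≤ (∫ s in (0:ℝ)..R, s^(k+2) * Real.exp (-s^2/4) * B s)
        - (∫ s in (0:ℝ)..R₀, s^(k+2) * Real.exp (-s^2/4) * B s) := by
    intro R hR
    have hA0' : ∀ r ≥ (0:ℝ), 0 ≤ B r := fun r hr => by have := hA0 r hr; have := hAB r hr; linarith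
    have hwii1 : IntervalIntegrable (fun s => s^(k+2) * Real.exp (-s^2/4) * B s)
        volume 0 R₀ := qh_ii (qh_cont_w' k B hB) le_rfl hR₀pos.le
    have hwii2 : IntervalIntegrable (fun s => s^(k+2) * Real.exp (-s^2/4) * B s)
        volume R₀ R := qh_ii (qh_cont_w' k B hB) hR₀pos.le hR
    rw [← intervalIntegral.integral_add_adjacent_intervals hwii1 hwii2]
    have hvint : IntervalIntegrable (fun x => 2*δ*Real.exp (x^2/4) * (x^2/2 - ((k:ℝ)+3))
        / x^(k+4)) volume R₀ R := by
      apply ContinuousOn.intervalIntegrable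
      have hcexp : Continuous fun x : ℝ => Real.exp (x^2/4) :=
        Real.continuous_exp.comp (by fun_prop)
      apply ContinuousOn.div
        (((continuous_const.mul hcexp).mul (by fun_prop)).continuousOn)
        ((continuous_pow _).continuousOn)
      intro x hx
      rw [uIcc_of_le hR] at hx
      have hx0 : 0 < x := lt_of_lt_of_le hR₀pos hx.1
      positivity
    have keyv := intervalIntegral.integral_eq_sub_of_hasDerivAt
      (f := fun s => 2*δ*Real.exp (s^2/4)/s^(k+3))
      (f' := fun x => 2*δ*Real.exp (x^2/4) * (x^2/2 - ((k:ℝ)+3)) / x^(k+4))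
      (a := R₀) (b := R) ?_ hvint
    · have hmono : (∫ x in R₀..R, 2*δ*Real.exp (x^2/4) * (x^2/2 - ((k:ℝ)+3)) / x^(k+4))
          ≤ ∫ s in R₀..R, s^(k+2) * Real.exp (-s^2/4) * B s := by
        apply intervalIntegral.integral_mono_on hR hvint hwii2
        intro x hx
        have hx0 : 0 < x := lt_of_lt_of_le hR₀pos hx.1
        refine le_trans ?_ (step2 x hx.1)
        rw [div_le_div_iff₀ (by positivity) (by positivity)]
        have he : (0:ℝ) < Real.exp (x^2/4) := Real.exp_pos _
        have h9 : (0:ℝ) ≤ 2*δ*((k:ℝ)+3)*Real.exp (x^2/4)*x^(k+2) := by positivity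
        have hxx : x^(k+4) = x^2 * x^(k+2) := by ring
        rw [hxx]
        nlinarith [h9]
      rw [keyv] at hmono
      linarith
    · intro x hx
      rw [uIcc_of_le hR] at hx
      have hx0 : 0 < x := lt_of_lt_of_le hR₀pos hx.1
      have hc : HasDerivAt (fun s : ℝ => 2*δ*Real.exp (s^2/4))
          (2*δ*(Real.exp (x^2/4)*(2*x^1/4))) x := by
        exact (((hasDerivAt_pow 2 x).div_const 4).exp).const_mul (2*δ)
      have hd : HasDerivAt (fun s : ℝ => s^(k+3)) (((k:ℝ)+3)*x^(k+2)) x := by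
        have := hasDerivAt_pow (k+3) x
        norm_num at this
        convert this using 2
      have h := hc.div hd (by positivity : (x:ℝ)^(k+3) ≠ 0)
      refine h.congr_deriv ?_
      have hx0' : x ≠ 0 := hx0.ne'
      field_simp
      ring
  -- Step 4 : conclusion
  intro hT
  set c₁ := (∫ s in (0:ℝ)..R₀, s^(k+2) * Real.exp (-s^2/4) * B s)
    - 2*δ*Real.exp (R₀^2/4)/R₀^(k+3) with hc₁def
  have h5 : ∀ R, R₀ ≤ R → 2*δ + R^(k+3)*Real.exp (-R^2/4) * c₁
      ≤ R^(k+3)*Real.exp (-R^2/4) * (∫ s in (0:ℝ)..R, s^(k+2) * Real.exp (-s^2/4) * B s) := by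
    intro R hR
    have hRpos : 0 < R := lt_of_lt_of_le hR₀pos hR
    have h3 := step3 R hR
    have hPv : R^(k+3)*Real.exp (-R^2/4) * (2*δ*Real.exp (R^2/4)/R^(k+3)) = 2*δ := by
      have h1 : R^(k+3) ≠ 0 := by positivity
      have hinv : Real.exp (-R^2/4) * Real.exp (R^2/4) = 1 := by
        rw [← Real.exp_add, show -R^2/4 + R^2/4 = 0 by ring, Real.exp_zero]
      calc R^(k+3)*Real.exp (-R^2/4) * (2*δ*Real.exp (R^2/4)/R^(k+3))
          = 2*δ*(Real.exp (-R^2/4) * Real.exp (R^2/4)) * (R^(k+3)/R^(k+3)) := by ring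
        _ = 2*δ := by rw [hinv, div_self h1]; ring
    have hFR : 2*δ*Real.exp (R^2/4)/R^(k+3) + c₁
        ≤ ∫ s in (0:ℝ)..R, s^(k+2) * Real.exp (-s^2/4) * B s := by
      rw [hc₁def]; linarith
    calc 2*δ + R^(k+3)*Real.exp (-R^2/4) * c₁
        = R^(k+3)*Real.exp (-R^2/4) * (2*δ*Real.exp (R^2/4)/R^(k+3) + c₁) := by
          rw [mul_add, hPv]
      _ ≤ R^(k+3)*Real.exp (-R^2/4) * (∫ s in (0:ℝ)..R, s^(k+2) * Real.exp (-s^2/4) * B s) :=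
          mul_le_mul_of_nonneg_left hFR (by positivity)
  have h6 : Tendsto (fun R : ℝ => R^(k+3)*Real.exp (-R^2/4) * c₁) atTop (nhds 0) := by
    have := (qh_P_tendsto (k+3) (by omega)).mul_const c₁
    simpa using this
  have h7 : ∀ᶠ R : ℝ in atTop, -δ < R^(k+3)*Real.exp (-R^2/4) * c₁ :=
    h6.eventually (eventually_gt_nhds (by linarith))
  have h8 : ∀ᶠ R : ℝ in atTop, R^(k+3) * Real.exp (-R^2/4) *
      (∫ s in (0:ℝ)..R, s^(k+2) * Real.exp (-s^2/4) * B s) < δ :=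
    hT.eventually (eventually_lt_nhds hδ)
  have h9 : ∀ᶠ R : ℝ in atTop, R₀ ≤ R := eventually_ge_atTop R₀
  obtain ⟨R, hR7, hR8, hR9⟩ := (h7.and (h8.and h9)).exists
  have := h5 R hR9
  linarith

lemma qh_31 (k : ℕ) (B : ℝ → ℝ)
    (h3 : IntegrableOn (fun s => s^(k+2) * Real.exp (-s^2/4) * B s) (Ioi 0)) :
    Tendsto (fun R => R^(k+3) * Real.exp (-R^2/4) *
        ∫ s in (0:ℝ)..R, s^(k+2) * Real.exp (-s^2/4) * B s) atTop (nhds 0) := by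
  have h := MeasureTheory.intervalIntegral_tendsto_integral_Ioi 0 h3 tendsto_id
  have h2 := (qh_P_tendsto (k+3) (by omega)).mul h
  simpa using h2

lemma qh_13 (k : ℕ) (A B : ℝ → ℝ)
    (hA : ContinuousOn A (Ici 0)) (hB : ContinuousOn B (Ici 0))
    (hA0 : ∀ r ≥ (0:ℝ), 0 ≤ A r) (hAB : ∀ r ≥ (0:ℝ), A r ≤ 2 * B r)
    (hH : ∀ r > (0:ℝ), HasDerivAt (fun s => A s - B s)
      (2 / r * B r + (r / 2 - ((k:ℝ)+3) / r) * A r) r)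
    (h1 : Tendsto (fun R => R^(k+3) * Real.exp (-R^2/4) *
        ∫ s in (0:ℝ)..R, s^(k+2) * Real.exp (-s^2/4) * B s) atTop (nhds 0)) :
    IntegrableOn (fun s => s^(k+2) * Real.exp (-s^2/4) * B s) (Ioi 0) := by
  have hB0 : ∀ r ≥ (0:ℝ), 0 ≤ B r := fun r hr => by
    have := hA0 r hr; have := hAB r hr; linarith
  have hw0 : ∀ s ≥ (0:ℝ), 0 ≤ s^(k+2) * Real.exp (-s^2/4) * B s :=
    fun s hs => mul_nonneg (by positivity) (hB0 s hs)
  by_contra h3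
  have hub : ∀ M : ℝ, ∃ R, 0 ≤ R ∧ M < ∫ s in (0:ℝ)..R, s^(k+2) * Real.exp (-s^2/4) * B s := by
    by_contra hc
    push_neg at hc
    obtain ⟨M, hM⟩ := hc
    exact h3 (qh_int_of_bounded (qh_cont_w' k B hB) hw0 (fun R hR => hM R hR))
  set s₁ := Real.sqrt (2*(k:ℝ)+4) with hs₁def
  have hs₁0 : 0 ≤ s₁ := Real.sqrt_nonneg _
  have hs₁sq : s₁^2 = 2*(k:ℝ)+4 := Real.sq_sqrt (by positivity)
  obtain ⟨R', hR'0, hR'⟩ := hub (((k:ℝ)+2) *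
    ∫ s in (0:ℝ)..s₁, s^(k+2) * Real.exp (-s^2/4) * B s)
  set R₀ := max R' (max s₁ 1) with hR₀def
  have hR₀1 : (1:ℝ) ≤ R₀ := le_max_of_le_right (le_max_right _ _)
  have hR₀s₁ : s₁ ≤ R₀ := le_max_of_le_right (le_max_left _ _)
  have hR₀R' : R' ≤ R₀ := le_max_left _ _
  have hR₀pos : (0:ℝ) < R₀ := lt_of_lt_of_le one_pos hR₀1
  have hmono := qh_F_mono (qh_cont_w' k B hB) hw0 hR'0 hR₀R'
  have hclaim := qh_claimA k A B hA hB hB0 hH hR₀s₁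
  have hPH : 0 < R₀^(k+3) * Real.exp (-R₀^2/4) * (A R₀ - B R₀) := by
    rw [← hs₁def] at hclaim
    linarith
  have hH₀ : B R₀ < A R₀ := by
    by_contra hc
    push_neg at hc
    have : R₀^(k+3) * Real.exp (-R₀^2/4) * (A R₀ - B R₀) ≤ 0 :=
      mul_nonpos_of_nonneg_of_nonpos (by positivity) (by linarith)
    linarith
  have hR₀sq : 2*(k:ℝ)+2 ≤ R₀^2 := by
    have : s₁^2 ≤ R₀^2 := pow_le_pow_left₀ hs₁0 hR₀s₁ 2
    rw [hs₁sq] at this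
    linarith
  exact qh_key k A B hA hB hA0 hAB hH hR₀pos hR₀sq hH₀ h1

lemma qh_32 (k : ℕ) (A B : ℝ → ℝ)
    (hA : ContinuousOn A (Ici 0)) (hB : ContinuousOn B (Ici 0))
    (hA0 : ∀ r ≥ (0:ℝ), 0 ≤ A r) (hAB : ∀ r ≥ (0:ℝ), A r ≤ 2 * B r)
    (hH : ∀ r > (0:ℝ), HasDerivAt (fun s => A s - B s)
      (2 / r * B r + (r / 2 - ((k:ℝ)+3) / r) * A r) r)
    (h3 : IntegrableOn (fun s => s^(k+2) * Real.exp (-s^2/4) * B s) (Ioi 0)) :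
    IntegrableOn (fun s => s^3 * A s) (Ioi 0) := by
  have hC1 := qh_31 k B h3
  have hHneg : ∀ R : ℝ, 0 < R → 2*(k:ℝ)+2 ≤ R^2 → A R ≤ B R := by
    intro R h1 h2
    by_contra hc
    push_neg at hc
    exact qh_key k A B hA hB hA0 hAB hH h1 h2 hc hC1
  set s₂ := max (Real.sqrt (4*(k:ℝ)+4)) 1 with hs₂def
  have hs₂1 : (1:ℝ) ≤ s₂ := le_max_right _ _
  have hs₂0 : (0:ℝ) ≤ s₂ := le_trans zero_le_one hs₂1
  have hs₂sq : 4*(k:ℝ)+4 ≤ s₂^2 := by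
    have h1 : Real.sqrt (4*(k:ℝ)+4) ≤ s₂ := le_max_left _ _
    have h2 : (Real.sqrt (4*(k:ℝ)+4))^2 ≤ s₂^2 := pow_le_pow_left₀ (Real.sqrt_nonneg _) h1 2
    rwa [Real.sq_sqrt (by positivity)] at h2
  -- Φ R ≤ 0 for R ≥ s₂
  have hΦ : ∀ R : ℝ, s₂ ≤ R → (∫ s in (0:ℝ)..R, s * (s^2/2 - ((k:ℝ)+1)) * A s) ≤ 0 := by
    intro R hR
    have hRpos : 0 < R := lt_of_lt_of_le one_pos (hs₂1.trans hR)
    have hRsq : 2*(k:ℝ)+2 ≤ R^2 := by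
      have : s₂^2 ≤ R^2 := pow_le_pow_left₀ hs₂0 hR 2
      nlinarith [(Nat.cast_nonneg k : (0:ℝ) ≤ (k:ℝ))]
    have hid := qh_idII k A B hA hB hH hRpos.le
    rw [← hid]
    have := hHneg R hRpos hRsq
    nlinarith [sq_nonneg R]
  -- boundedness of ∫ s³ A
  have hcube0 : ∀ s ≥ (0:ℝ), 0 ≤ s^3 * A s := fun s hs => mul_nonneg (by positivity) (hA0 s hs)
  apply qh_int_of_bounded (qh_cont_cube A hA) hcube0
    (M := (∫ s in (0:ℝ)..s₂, s^3 * A s)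
      + 4*(-(∫ s in (0:ℝ)..s₂, s * (s^2/2 - ((k:ℝ)+1)) * A s)))
  intro R hR
  rcases le_or_gt R s₂ with h | h
  · have h1 := qh_F_mono (qh_cont_cube A hA) hcube0 hR h
    have h2 := hΦ s₂ le_rfl
    linarith
  · have hii1 : IntervalIntegrable (fun s => s^3 * A s) volume 0 s₂ :=
      qh_ii (qh_cont_cube A hA) le_rfl hs₂0
    have hii2 : IntervalIntegrable (fun s => s^3 * A s) volume s₂ R :=
      qh_ii (qh_cont_cube A hA) hs₂0 h.le
    have hgii1 : IntervalIntegrable (fun s => s * (s^2/2 - ((k:ℝ)+1)) * A s) volume 0 s₂ :=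
      qh_ii (qh_cont_gA A hA _) le_rfl hs₂0
    have hgii2 : IntervalIntegrable (fun s => s * (s^2/2 - ((k:ℝ)+1)) * A s) volume s₂ R :=
      qh_ii (qh_cont_gA A hA _) hs₂0 h.le
    rw [← intervalIntegral.integral_add_adjacent_intervals hii1 hii2]
    have hcmp : (∫ s in s₂..R, s^3 * A s) ≤ ∫ s in s₂..R, 4 * (s * (s^2/2 - ((k:ℝ)+1)) * A s) := by
      apply intervalIntegral.integral_mono_on h.le hii2 (hgii2.const_mul 4)
      intro x hx
      have hx0 : (0:ℝ) ≤ x := hs₂0.trans hx.1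
      have hxsq : 4*(k:ℝ)+4 ≤ x^2 := hs₂sq.trans (pow_le_pow_left₀ hs₂0 hx.1 2)
      have hAx := hA0 x hx0
      nlinarith [mul_nonneg hx0 hAx]
    rw [intervalIntegral.integral_const_mul] at hcmp
    have hsplit : (∫ s in s₂..R, s * (s^2/2 - ((k:ℝ)+1)) * A s)
        = (∫ s in (0:ℝ)..R, s * (s^2/2 - ((k:ℝ)+1)) * A s)
          - ∫ s in (0:ℝ)..s₂, s * (s^2/2 - ((k:ℝ)+1)) * A s := by
      rw [← intervalIntegral.integral_add_adjacent_intervals hgii1 hgii2]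
      ring
    have hΦR := hΦ R h.le
    rw [hsplit] at hcmp
    linarith

lemma qh_23 (k : ℕ) (A B : ℝ → ℝ)
    (hA : ContinuousOn A (Ici 0)) (hB : ContinuousOn B (Ici 0))
    (hA0 : ∀ r ≥ (0:ℝ), 0 ≤ A r) (hAB : ∀ r ≥ (0:ℝ), A r ≤ 2 * B r)
    (hH : ∀ r > (0:ℝ), HasDerivAt (fun s => A s - B s)
      (2 / r * B r + (r / 2 - ((k:ℝ)+3) / r) * A r) r)
    (h2 : IntegrableOn (fun s => s^3 * A s) (Ioi 0)) :
    IntegrableOn (fun s => s^(k+2) * Real.exp (-s^2/4) * B s) (Ioi 0) := by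
  have hB0 : ∀ r ≥ (0:ℝ), 0 ≤ B r := fun r hr => by
    have := hA0 r hr; have := hAB r hr; linarith
  have hg2cont := qh_cont_gA A hA ((k:ℝ)+1)
  have hg2int : IntegrableOn (fun s => s * (s^2/2 - ((k:ℝ)+1)) * A s) (Ioi 0) := by
    rw [show (Ioi (0:ℝ)) = Ioc 0 1 ∪ Ioi 1 by rw [Ioc_union_Ioi_eq_Ioi zero_le_one]]
    apply IntegrableOn.union
    · exact ((hg2cont.mono (Icc_subset_Ici_self : Icc (0:ℝ) 1 ⊆ Ici 0)).integrableOn_Icc).mono_set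
        Ioc_subset_Icc_self
    · apply Integrable.mono (g := fun s : ℝ => ((k:ℝ)+2) * (s^3 * A s))
        ((h2.mono_set (Ioi_subset_Ioi zero_le_one)).const_mul _)
      · exact (hg2cont.mono (fun x (hx : x ∈ Ioi (1:ℝ)) => Set.mem_Ici.mpr (le_trans zero_le_one (le_of_lt hx)))).aestronglyMeasurable
          measurableSet_Ioi
      · rw [ae_restrict_iff' measurableSet_Ioi]
        apply ae_of_all
        intro x hx
        have hx1 : (1:ℝ) < x := hx
        have hx0 : (0:ℝ) ≤ x := by linarith
        have hAx := hA0 x hx0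
        have hxsq : (1:ℝ) ≤ x^2 := by nlinarith
        have hRHS : (0:ℝ) ≤ ((k:ℝ)+2) * (x^3 * A x) := by positivity
        rw [Real.norm_eq_abs, Real.norm_eq_abs, abs_of_nonneg hRHS]
        have e1 : |x * (x^2/2 - ((k:ℝ)+1)) * A x| = x * |x^2/2 - ((k:ℝ)+1)| * A x := by
          rw [abs_mul, abs_mul, abs_of_nonneg hx0, abs_of_nonneg hAx]
        rw [e1]
        have e2 : |x^2/2 - ((k:ℝ)+1)| ≤ ((k:ℝ)+2) * x^2 := by
          rw [abs_le]
          constructor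
          · nlinarith [(Nat.cast_nonneg k : (0:ℝ) ≤ (k:ℝ))]
          · nlinarith [(Nat.cast_nonneg k : (0:ℝ) ≤ (k:ℝ))]
        calc x * |x^2/2 - ((k:ℝ)+1)| * A x ≤ x * (((k:ℝ)+2) * x^2) * A x := by
              apply mul_le_mul_of_nonneg_right _ hAx
              exact mul_le_mul_of_nonneg_left e2 hx0
          _ = ((k:ℝ)+2) * (x^3 * A x) := by ring
  set M := ∫ x in Ioi (0:ℝ), ‖x * (x^2/2 - ((k:ℝ)+1)) * A x‖ with hMdef
  have hM0 : 0 ≤ M := by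
    apply MeasureTheory.integral_nonneg
    intro x; exact norm_nonneg _
  have hΦbd : ∀ R, 0 ≤ R → |∫ s in (0:ℝ)..R, s * (s^2/2 - ((k:ℝ)+1)) * A s| ≤ M := by
    intro R hR
    rw [intervalIntegral.integral_of_le hR]
    calc |∫ s in Ioc (0:ℝ) R, s * (s^2/2 - ((k:ℝ)+1)) * A s|
        ≤ ∫ s in Ioc (0:ℝ) R, ‖s * (s^2/2 - ((k:ℝ)+1)) * A s‖ :=
          by rw [← Real.norm_eq_abs]; exact MeasureTheory.norm_integral_le_integral_norm _
      _ ≤ M := by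
          rw [hMdef]
          apply MeasureTheory.setIntegral_mono_set hg2int.norm
            (ae_of_all _ fun x => norm_nonneg _)
          exact HasSubset.Subset.eventuallyLE Ioc_subset_Ioi_self
  have hPH : ∀ R, 0 ≤ R → R^(k+3) * Real.exp (-R^2/4) * (A R - B R)
      ≤ (((k+1)! : ℝ) * 4^(k+1) + 1) * M := by
    intro R hR
    rcases eq_or_lt_of_le hR with h | h
    · rw [← h]
      simp [zero_pow]
      positivity
    · have hid := qh_idII k A B hA hB hH hR
      have h1 : R^(k+3) * Real.exp (-R^2/4) * (A R - B R)
          = (R^(k+1) * Real.exp (-R^2/4)) * (R^2 * (A R - B R)) := by ring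
      rw [h1, hid]
      calc (R^(k+1) * Real.exp (-R^2/4)) * (∫ s in (0:ℝ)..R, s * (s^2/2 - ((k:ℝ)+1)) * A s)
          ≤ (R^(k+1) * Real.exp (-R^2/4)) * M := by
            apply mul_le_mul_of_nonneg_left _ (by positivity)
            exact (le_abs_self _).trans (hΦbd R hR)
        _ ≤ (((k+1)! : ℝ) * 4^(k+1) + 1) * M :=
            mul_le_mul_of_nonneg_right (qh_P_bound (k+1) hR) hM0
  set s₁ := Real.sqrt (2*(k:ℝ)+4) with hs₁def
  have hs₁0 : 0 ≤ s₁ := Real.sqrt_nonneg _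
  have hw0 : ∀ s ≥ (0:ℝ), 0 ≤ s^(k+2) * Real.exp (-s^2/4) * B s :=
    fun s hs => mul_nonneg (by positivity) (hB0 s hs)
  have hFs₁ : 0 ≤ ∫ s in (0:ℝ)..s₁, s^(k+2) * Real.exp (-s^2/4) * B s :=
    qh_F_nonneg hw0 hs₁0
  apply qh_int_of_bounded (qh_cont_w' k B hB) hw0
    (M := (((k+1)! : ℝ) * 4^(k+1) + 1) * M
      + ((k:ℝ)+2) * ∫ s in (0:ℝ)..s₁, s^(k+2) * Real.exp (-s^2/4) * B s)
  intro R hR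
  rcases le_or_gt R s₁ with h | h
  · have h1 := qh_F_mono (qh_cont_w' k B hB) hw0 hR h
    have hCkM : 0 ≤ (((k+1)! : ℝ) * 4^(k+1) + 1) * M := by positivity
    nlinarith [(Nat.cast_nonneg k : (0:ℝ) ≤ (k:ℝ))]
  · have hclaim := qh_claimA k A B hA hB hB0 hH (le_of_lt h)
    rw [← hs₁def] at hclaim
    have := hPH R hR
    linarith

theorem stmt_11 (m : ℕ) (hm : 3 ≤ m) (A B : ℝ → ℝ)
    (hA : ContinuousOn A (Set.Ici 0)) (hB : ContinuousOn B (Set.Ici 0))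
    (hA0 : ∀ r ≥ (0:ℝ), 0 ≤ A r) (hAB : ∀ r ≥ (0:ℝ), A r ≤ 2 * B r)
    (hH : ∀ r > (0:ℝ), HasDerivAt (fun s => A s - B s)
      (2 / r * B r + (r / 2 - (m : ℝ) / r) * A r) r) :
    ((Filter.Tendsto
        (fun R => R ^ m * Real.exp (-R^2 / 4) *
          ∫ s in (0:ℝ)..R, s ^ (m - 1) * Real.exp (-s^2 / 4) * B s)
        Filter.atTop (nhds 0)) ↔
      MeasureTheory.IntegrableOn (fun s => s ^ 3 * A s) (Set.Ioi 0)) ∧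
    (MeasureTheory.IntegrableOn (fun s => s ^ 3 * A s) (Set.Ioi 0) ↔
      MeasureTheory.IntegrableOn (fun s => s ^ (m - 1) * Real.exp (-s^2 / 4) * B s) (Set.Ioi 0)) := by
  obtain ⟨k, rfl⟩ : ∃ k, m = k + 3 := ⟨m - 3, by omega⟩
  have hH' : ∀ r > (0:ℝ), HasDerivAt (fun s => A s - B s)
      (2 / r * B r + (r / 2 - ((k:ℝ)+3) / r) * A r) r := by
    intro r hr
    have := hH r hr
    push_cast at this
    exact this
  have hm1 : k + 3 - 1 = k + 2 := rfl
  simp only [hm1]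
  refine ⟨⟨fun h1 => qh_32 k A B hA hB hA0 hAB hH' (qh_13 k A B hA hB hA0 hAB hH' h1),
    fun h2 => qh_31 k B (qh_23 k A B hA hB hA0 hAB hH' h2)⟩,
    ⟨fun h2 => qh_23 k A B hA hB hA0 hAB hH' h2,
     fun h3 => qh_32 k A B hA hB hA0 hAB hH' h3⟩⟩
end

section
/- If ∫₀^∞ s^{m−1}·e^{−s²/4}·B(s) ds < ∞ (finite total energy), then H(r) ≤ 0 for every r > 0. -/
open MeasureTheory Filter Set intervalIntegral

theorem stmt_13 (m : ℕ) (hm : 3 ≤ m) (A B : ℝ → ℝ)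
    (hA : ContinuousOn A (Set.Ici 0)) (hB : ContinuousOn B (Set.Ici 0))
    (hA0 : ∀ r ≥ (0:ℝ), 0 ≤ A r) (hAB : ∀ r ≥ (0:ℝ), A r ≤ 2 * B r)
    (hH : ∀ r > (0:ℝ), HasDerivAt (fun s => A s - B s)
      (2 / r * B r + (r / 2 - (m : ℝ) / r) * A r) r)
    (hfin : MeasureTheory.IntegrableOn (fun s => s ^ (m - 1) * Real.exp (-s^2 / 4) * B s) (Set.Ioi 0)) :
    ∀ r > (0:ℝ), A r - B r ≤ 0 := by
  obtain ⟨k, rfl⟩ : ∃ k, m = k + 3 := ⟨m - 3, by omega⟩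
  intro r hr
  by_contra hpos
  push_neg at hpos
  have hmcast : ((k + 3 : ℕ) : ℝ) = (k : ℝ) + 3 := by push_cast; ring
  rcases le_or_gt (r ^ 2) (2 * ((k:ℝ) + 1)) with hcase | hcase
  · -- small r : use g(s) = s^2 * (A s - B s), antitone on [0, r]
    set g : ℝ → ℝ := fun s => s ^ 2 * (A s - B s) with hg
    have hgant : AntitoneOn g (Icc 0 r) := by
      have hder : ∀ x ∈ interior (Icc (0:ℝ) r), HasDerivAt g
          ((2 * x) * (A x - B x) + x ^ 2 * (2 / x * B x + (x / 2 - ((k+3:ℕ) : ℝ) / x) * A x)) x := by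
        intro x hx
        rw [interior_Icc] at hx
        have hx0 : 0 < x := hx.1
        have h1 : HasDerivAt (fun s : ℝ => s ^ 2) (2 * x) x := by
          simpa using hasDerivAt_pow 2 x
        exact h1.mul (hH x hx0)
      apply antitoneOn_of_deriv_nonpos (convex_Icc 0 r)
      · apply ContinuousOn.mul (by fun_prop)
        have hsub : Icc (0:ℝ) r ⊆ Ici 0 := Icc_subset_Ici_self
        exact (hA.mono hsub).sub (hB.mono hsub)
      · intro x hx
        exact (hder x hx).differentiableAt.differentiableWithinAt
      · intro x hx
        rw [(hder x hx).deriv]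
        rw [interior_Icc] at hx
        have hx0 : 0 < x := hx.1
        have hx2 : x ^ 2 < r ^ 2 := by nlinarith [hx.2, hr]
        have hAx : 0 ≤ A x := hA0 x hx0.le
        have hBx : 0 ≤ B x := by nlinarith [hAB x hx0.le]
        have key : (2 * x) * (A x - B x) + x ^ 2 * (2 / x * B x + (x / 2 - ((k+3:ℕ) : ℝ) / x) * A x)
            = x * (x ^ 2 / 2 - ((k:ℝ) + 1)) * A x := by
          rw [hmcast]; field_simp; ring
        rw [key]
        have h5 : x ^ 2 / 2 - ((k:ℝ) + 1) ≤ 0 := by nlinarith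
        have h4 : x * (x ^ 2 / 2 - ((k:ℝ) + 1)) ≤ 0 :=
          mul_nonpos_of_nonneg_of_nonpos hx0.le h5
        exact mul_nonpos_of_nonpos_of_nonneg h4 hAx
    have h1 : g r ≤ g 0 := hgant ⟨le_refl 0, hr.le⟩ ⟨hr.le, le_refl r⟩ hr.le
    have h2 : g 0 = 0 := by simp [hg]
    have h1' : r ^ 2 * (A r - B r) ≤ 0 := by rw [h2] at h1; exact h1
    have h3 : 0 < r ^ 2 := by positivity
    nlinarith [mul_pos h3 hpos]
  · -- large r : use φ(s) = (A s - B s) * s^(2k+4) * exp(-s^2/2), monotone on [r, ∞)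
    set φ : ℝ → ℝ := fun s => (A s - B s) * (s ^ (2*k+4) * Real.exp (-s^2/2)) with hφ
    have hder : ∀ x : ℝ, 0 < x → HasDerivAt φ
        ((2 / x * B x + (x / 2 - ((k+3:ℕ) : ℝ) / x) * A x) * (x ^ (2*k+4) * Real.exp (-x^2/2))
          + (A x - B x) * (((2*k+4 : ℕ) : ℝ) * x ^ (2*k+3) * Real.exp (-x^2/2)
              + x ^ (2*k+4) * (Real.exp (-x^2/2) * (-x)))) x := by
      intro x hx0
      have he : HasDerivAt (fun s : ℝ => Real.exp (-s^2/2)) (Real.exp (-x^2/2) * (-x)) x := by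
        have h2 : HasDerivAt (fun s : ℝ => -s^2/2) (-x) x := by
          have := ((hasDerivAt_pow 2 x).neg).div_const 2
          simpa using this.congr_deriv (by ring)
        simpa using h2.exp
      have hw : HasDerivAt (fun s : ℝ => s ^ (2*k+4) * Real.exp (-s^2/2))
          (((2*k+4 : ℕ) : ℝ) * x ^ (2*k+3) * Real.exp (-x^2/2)
            + x ^ (2*k+4) * (Real.exp (-x^2/2) * (-x))) x := by
        have hp : HasDerivAt (fun s : ℝ => s ^ (2*k+4)) (((2*k+4 : ℕ) : ℝ) * x ^ (2*k+3)) x := by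
          simpa using hasDerivAt_pow (2*k+4) x
        exact hp.mul he
      exact (hH x hx0).mul hw
    have hmono : MonotoneOn φ (Ici r) := by
      apply monotoneOn_of_deriv_nonneg (convex_Ici r)
      · apply ContinuousOn.mul
        · have hsub : Ici r ⊆ Ici 0 := Ici_subset_Ici.2 hr.le
          exact (hA.mono hsub).sub (hB.mono hsub)
        · fun_prop
      · intro x hx
        rw [interior_Ici] at hx
        exact (hder x (hr.trans hx)).differentiableAt.differentiableWithinAt
      · intro x hx
        rw [interior_Ici] at hx
        have hx0 : 0 < x := hr.trans hx
        rw [(hder x hx0).deriv]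
        have hx' : r < x := hx
        have hx2 : 2 * ((k:ℝ) + 1) < x ^ 2 := by nlinarith [hcase, hx', hr]
        have hAx : 0 ≤ A x := hA0 x hx0.le
        have hABx : A x ≤ 2 * B x := hAB x hx0.le
        have hepos : 0 < Real.exp (-x^2/2) := Real.exp_pos _
        have hxp : 0 < x ^ (2*k+3) := by positivity
        have hpe : x ^ (2*k+4) = x ^ (2*k+3) * x := by ring
        have key : (2 / x * B x + (x / 2 - ((k+3:ℕ) : ℝ) / x) * A x) * (x ^ (2*k+4) * Real.exp (-x^2/2))
              + (A x - B x) * (((2*k+4 : ℕ) : ℝ) * x ^ (2*k+3) * Real.exp (-x^2/2)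
                  + x ^ (2*k+4) * (Real.exp (-x^2/2) * (-x)))
            = x ^ (2*k+3) * Real.exp (-x^2/2) * ((x ^ 2 - (2*(k:ℝ)+2)) * (B x - A x / 2)) := by
          rw [hmcast, hpe]
          have hx0' : x ≠ 0 := ne_of_gt hx0
          field_simp
          push_cast
          ring
        rw [key]
        have h1 : 0 ≤ x ^ 2 - (2*(k:ℝ)+2) := by nlinarith
        have h2 : 0 ≤ B x - A x / 2 := by linarith
        positivity
    set δ : ℝ := (A r - B r) * (r ^ (2*k+4) * Real.exp (-r^2/2)) with hδ
    have hδpos : 0 < δ := by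
      apply mul_pos hpos
      positivity
    -- lower bound on B s for s ≥ r
    have hBlow : ∀ s, r ≤ s →
        δ * Real.exp (s^2/4) ≤ s ^ (k+2) * Real.exp (-s^2/4) * B s * s ^ (k+2) := by
      intro s hs
      have hs0 : 0 < s := hr.trans_le hs
      have hφs : δ ≤ φ s := hmono (self_mem_Ici) hs hs
      have hBs : A s - B s ≤ B s := by linarith [hAB s hs0.le]
      have e1 : Real.exp (-s^2/2) * Real.exp (s^2/2) = 1 := by
        have h0 : (-s^2/2 + s^2/2 : ℝ) = 0 := by ring
        rw [← Real.exp_add, h0, Real.exp_zero]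
      have e2 : Real.exp (s^2/2) * Real.exp (-s^2/4) = Real.exp (s^2/4) := by
        have h0 : (s^2/2 + -s^2/4 : ℝ) = s^2/4 := by ring
        rw [← Real.exp_add, h0]
      calc δ * Real.exp (s^2/4) = δ * (Real.exp (s^2/2) * Real.exp (-s^2/4)) := by rw [e2]
        _ ≤ φ s * (Real.exp (s^2/2) * Real.exp (-s^2/4)) :=
            mul_le_mul_of_nonneg_right hφs (by positivity)
        _ = (A s - B s) * s ^ (2*k+4) * ((Real.exp (-s^2/2) * Real.exp (s^2/2)) * Real.exp (-s^2/4)) := by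
            rw [hφ]; ring
        _ = (A s - B s) * (s ^ (2*k+4) * Real.exp (-s^2/4)) := by rw [e1]; ring
        _ ≤ B s * (s ^ (2*k+4) * Real.exp (-s^2/4)) :=
            mul_le_mul_of_nonneg_right hBs (by positivity)
        _ = s ^ (k+2) * Real.exp (-s^2/4) * B s * s ^ (k+2) := by ring
    -- the lower bound tends to infinity
    have htend : Tendsto (fun s : ℝ => δ * Real.exp (s^2/4) / s ^ (k+2)) atTop atTop := by
      have hbase : Tendsto (fun s : ℝ => Real.exp s / s ^ (k+2)) atTop atTop :=
        Real.tendsto_exp_div_pow_atTop (k+2)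
      have h1 : Tendsto (fun s : ℝ => Real.exp (s^2/4) / s ^ (k+2)) atTop atTop := by
        apply tendsto_atTop_mono' atTop _ hbase
        filter_upwards [eventually_ge_atTop (4:ℝ)] with s hs
        have hs0 : (0:ℝ) < s := by linarith
        have hle : s ≤ s^2/4 := by nlinarith
        have := Real.exp_le_exp.2 hle
        gcongr
      have h2 := Tendsto.const_mul_atTop hδpos h1
      simpa [mul_div_assoc] using h2
    obtain ⟨R, hR⟩ := eventually_atTop.1 (htend.eventually_ge_atTop 1)
    set R' : ℝ := max R r with hR'
    have hint : IntegrableOn (fun s => s ^ (k + 3 - 1) * Real.exp (-s^2 / 4) * B s) (Ioi R') := by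
      apply hfin.mono_set
      intro x hx
      simp only [mem_Ioi] at hx ⊢
      exact lt_of_lt_of_le hr (le_trans (le_max_right R r) hx.le)
    have hone : IntegrableOn (fun _ : ℝ => (1:ℝ)) (Ioi R') := by
      apply MeasureTheory.Integrable.mono hint aestronglyMeasurable_const
      rw [ae_restrict_iff' measurableSet_Ioi]
      filter_upwards with s hs
      simp only [mem_Ioi] at hs
      have hsr : r ≤ s := le_trans (le_max_right R r) hs.le
      have hsR : R ≤ s := le_trans (le_max_left R r) hs.le
      have hs0 : 0 < s := hr.trans_le hsr
      have h1 : (1:ℝ) ≤ δ * Real.exp (s^2/4) / s ^ (k+2) := hR s hsR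
      have h2 := hBlow s hsr
      have hsp : 0 < s ^ (k+2) := by positivity
      have h1' : 1 * s ^ (k+2) ≤ δ * Real.exp (s^2/4) := (le_div_iff₀ hsp).mp h1
      have h3 : (1:ℝ) ≤ s ^ (k+2) * Real.exp (-s^2/4) * B s :=
        le_of_mul_le_mul_right (by linarith) hsp
      have hk3 : k + 3 - 1 = k + 2 := by omega
      rw [hk3]
      rw [norm_one, Real.norm_eq_abs, abs_of_nonneg (by linarith)]
      exact h3
    rw [integrableOn_const_iff] at hone
    rcases hone with h | h
    · norm_num at h
    · rw [Real.volume_Ioi] at h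
      exact (lt_irrefl _ h)
end
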